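/- arXiv:2109.14387 — 12 statements merged into one kernel-verified Lean document; each statement's English description precedes it below -/
import Mathlib

section
/- Let X_1, ..., X_n be independent standard two-sided exponential (Laplace) random variables, each with density (1/2)e^{-|x|} on ℝ, and let S = Σ_{i=1}^n a_i X_i with positive weights a_1, ..., a_n. Set α = sqrt(2 Σ_{i=1}^n a_i^2) / max_{i≤n} a_i and h(u) = sqrt(1+u^2) - 1 - log((1 + sqrt(1+u^2))/2) for u > 0. Then for every t > 1, P(S > t·sqrt(Var S)) ≤ exp(-(α^2/2)·h(2t/α)). -/
open MeasureTheory ProbabilityTheory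

/-- The standard two-sided exponential (Laplace) distribution on `ℝ`,
with density `(1/2) * exp (-|x|)`. -/
noncomputable def laplaceMeasure : Measure ℝ :=
  MeasureTheory.volume.withDensity fun x => ENNReal.ofReal ((1 / 2) * Real.exp (-|x|))

section LaplaceAux

open Real Set

lemma my_integrableOn_exp_neg_mul_Ioi {c : ℝ} (hc : 0 < c) :
    IntegrableOn (fun x => Real.exp (-(c * x))) (Set.Ioi 0) := by
  simpa [neg_mul] using exp_neg_integrableOn_Ioi 0 hc

lemma my_integral_exp_neg_mul_Ioi {c : ℝ} (hc : 0 < c) :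
    ∫ x in Set.Ioi (0:ℝ), Real.exp (-(c * x)) = 1 / c := by
  have := MeasureTheory.integral_comp_mul_left_Ioi (fun y => Real.exp (-y)) 0 hc
  simp only [mul_zero] at this
  rw [this, integral_exp_neg_Ioi_zero]
  simp [one_div]

lemma my_integral_exp_mul_Iic {c : ℝ} (hc : 0 < c) :
    ∫ x in Set.Iic (0:ℝ), Real.exp (c * x) = 1 / c := by
  have h := integral_comp_neg_Iic (0:ℝ) (fun y => Real.exp (-(c * y)))
  simp only [neg_neg, mul_neg] at h
  rw [h, neg_zero]
  exact my_integral_exp_neg_mul_Ioi hc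

lemma my_integrableOn_exp_mul_Iic {c : ℝ} (hc : 0 < c) :
    IntegrableOn (fun x => Real.exp (c * x)) (Set.Iic 0) := by
  have hcont : Continuous fun x : ℝ => Real.exp (c * x) :=
    Real.continuous_exp.comp (continuous_const.mul continuous_id)
  refine integrableOn_Iic_of_intervalIntegral_norm_bounded (a := fun y : ℝ => y)
    (l := Filter.atBot) (1/c) 0 (fun y => hcont.integrableOn_Ioc) Filter.tendsto_id ?_
  filter_upwards [Filter.Iic_mem_atBot (0:ℝ)] with y (hy : y ≤ 0)
  have hnn : ∀ x : ℝ, ‖Real.exp (c * x)‖ = Real.exp (c * x) := fun x =>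
    norm_of_nonneg (Real.exp_pos _).le
  simp only [hnn]
  have h1 : ∫ x in y..0, Real.exp (c * x) = c⁻¹ * (1 - Real.exp (c*y)) := by
    simpa using intervalIntegral.integral_comp_mul_left (a := y) (b := 0)
      (fun x => Real.exp x) (c := c) (ne_of_gt hc)
  rw [h1]
  have h2 : Real.exp (c * y) ≤ 1 := by
    rw [← Real.exp_zero]; exact Real.exp_le_exp.mpr (by nlinarith)
  rw [one_div]
  nlinarith [inv_pos.mpr hc, Real.exp_pos (c*y), mul_le_mul_of_nonneg_left
    (sub_le_self 1 (Real.exp_pos (c*y)).le) (inv_pos.mpr hc).le]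

/-- density as NNReal -/
noncomputable def lapDen : ℝ → NNReal := fun x => Real.toNNReal ((1 / 2) * Real.exp (-|x|))

lemma lapDen_meas : Measurable lapDen :=
  (measurable_const.mul ((_root_.continuous_abs.measurable).neg.exp)).real_toNNReal

lemma laplaceMeasure_eq :
    laplaceMeasure = MeasureTheory.volume.withDensity fun x => (lapDen x : ENNReal) := by
  unfold laplaceMeasure lapDen
  congr 1

lemma lapDen_coe (x : ℝ) : (lapDen x : ℝ) = (1/2) * Real.exp (-|x|) := by
  unfold lapDen
  exact Real.coe_toNNReal _ (by positivity)

lemma lap_integrand_Ioi {s : ℝ} :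
    Set.EqOn (fun x => (lapDen x : ℝ) • Real.exp (s * x))
      (fun x => (1/2) * Real.exp (-((1-s) * x))) (Set.Ioi 0) := by
  intro x hx
  simp only [smul_eq_mul, lapDen_coe]
  rw [abs_of_pos hx, mul_assoc, ← Real.exp_add]
  ring_nf

lemma lap_integrand_Iic {s : ℝ} :
    Set.EqOn (fun x => (lapDen x : ℝ) • Real.exp (s * x))
      (fun x => (1/2) * Real.exp ((1+s) * x)) (Set.Iic 0) := by
  intro x hx
  simp only [smul_eq_mul, lapDen_coe]
  rw [abs_of_nonpos hx, neg_neg, mul_assoc, ← Real.exp_add]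
  ring_nf

lemma lap_weighted_integrable {s : ℝ} (hs : |s| < 1) :
    Integrable (fun x => (lapDen x : ℝ) • Real.exp (s * x)) := by
  rw [← integrableOn_univ, ← Set.Iic_union_Ioi (a := (0:ℝ)), integrableOn_union]
  obtain ⟨hs1, hs2⟩ := abs_lt.mp hs
  constructor
  · exact (IntegrableOn.congr_fun
      ((my_integrableOn_exp_mul_Iic (by linarith : (0:ℝ) < 1 + s)).const_mul (1/2))
      lap_integrand_Iic.symm measurableSet_Iic)
  · exact (IntegrableOn.congr_fun
      ((my_integrableOn_exp_neg_mul_Ioi (by linarith : (0:ℝ) < 1 - s)).const_mul (1/2))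
      lap_integrand_Ioi.symm measurableSet_Ioi)

lemma laplace_exp_integrable {s : ℝ} (hs : |s| < 1) :
    Integrable (fun x => Real.exp (s * x)) laplaceMeasure := by
  rw [laplaceMeasure_eq, integrable_withDensity_iff_integrable_smul lapDen_meas]
  exact lap_weighted_integrable hs

lemma laplace_exp_integral {s : ℝ} (hs : |s| < 1) :
    ∫ x, Real.exp (s * x) ∂laplaceMeasure = 1 / (1 - s^2) := by
  rw [laplaceMeasure_eq, integral_withDensity_eq_integral_smul lapDen_meas]
  simp_rw [NNReal.smul_def]
  obtain ⟨hs1, hs2⟩ := abs_lt.mp hs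
  have hint := lap_weighted_integrable hs
  rw [← intervalIntegral.integral_Iic_add_Ioi (b := 0) (hint.integrableOn) (hint.integrableOn)]
  rw [setIntegral_congr_fun measurableSet_Iic lap_integrand_Iic,
      setIntegral_congr_fun measurableSet_Ioi lap_integrand_Ioi]
  rw [integral_const_mul, integral_const_mul,
      my_integral_exp_mul_Iic (by linarith : (0:ℝ) < 1 + s),
      my_integral_exp_neg_mul_Ioi (by linarith : (0:ℝ) < 1 - s)]
  have h1 : (1:ℝ) + s ≠ 0 := by linarith
  have h2 : (1:ℝ) - s ≠ 0 := by linarith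
  have h3 : (1:ℝ) - s^2 ≠ 0 := by nlinarith [sq_abs s, abs_nonneg s, sq_nonneg (|s|+1)]
  field_simp
  ring

lemma neg_log_one_sub_mono {x y : ℝ} (hx : 0 ≤ x) (hxy : x ≤ y) (hy : y < 1) :
    y * (-Real.log (1 - x)) ≤ x * (-Real.log (1 - y)) := by
  have hy0 : 0 ≤ y := hx.trans hxy
  have hX : |x| < 1 := by rw [abs_of_nonneg hx]; linarith
  have hY : |y| < 1 := by rw [abs_of_nonneg hy0]; linarith
  have hsx := (Real.hasSum_pow_div_log_of_abs_lt_one hX).mul_left y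
  have hsy := (Real.hasSum_pow_div_log_of_abs_lt_one hY).mul_left x
  refine hasSum_le (fun n => ?_) hsx hsy
  have hpow : x ^ (n+1) * y ≤ x * y ^ (n+1) := by
    have : x ^ n ≤ y ^ n := pow_le_pow_left₀ hx hxy n
    calc x ^ (n+1) * y = (x * y) * x ^ n := by ring
      _ ≤ (x * y) * y ^ n := mul_le_mul_of_nonneg_left this (by positivity)
      _ = x * y ^ (n+1) := by ring
  have hn : (0:ℝ) < n + 1 := by positivity
  rw [mul_div_assoc', mul_div_assoc', div_le_div_iff₀ hn hn]
  nlinarith [hpow]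

end LaplaceAux

set_option maxHeartbeats 1600000 in
/-- Upper bound in Theorem 1.2: for independent standard Laplace variables `X i` and
positive weights `a i`, with `σ = sqrt(Var S) = sqrt(2 ∑ aᵢ²)` and `α = σ / max aᵢ`,
for all `t > 1`, `P(S > t σ) ≤ exp(-(α²/2) h(2t/α))`. -/
theorem laplace_sum_tail_upper
    {Ω : Type*} [MeasurableSpace Ω] (μ : Measure Ω) [IsProbabilityMeasure μ]
    (n : ℕ) [NeZero n] (X : Fin n → Ω → ℝ) (a : Fin n → ℝ)
    (hXmeas : ∀ i, Measurable (X i))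
    (hindep : iIndepFun X μ)
    (hlaw : ∀ i, μ.map (X i) = laplaceMeasure)
    (ha : ∀ i, 0 < a i)
    (σ α : ℝ)
    (hσ : σ = Real.sqrt (2 * ∑ i, a i ^ 2))
    (hα : α = σ / Finset.univ.sup' Finset.univ_nonempty a)
    (h : ℝ → ℝ)
    (hh : ∀ u, 0 < u →
      h u = Real.sqrt (1 + u ^ 2) - 1 - Real.log ((1 + Real.sqrt (1 + u ^ 2)) / 2))
    (t : ℝ) (ht : 1 < t) :
    μ {ω | t * σ < ∑ i, a i * X i ω} ≤
      ENNReal.ofReal (Real.exp (-(α ^ 2 / 2) * h (2 * t / α))) := by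
  classical
  obtain ⟨M, hMdef⟩ : ∃ M : ℝ, M = Finset.univ.sup' Finset.univ_nonempty a := ⟨_, rfl⟩
  rw [← hMdef] at hα
  have hM : 0 < M := by
    rw [hMdef]
    exact lt_of_lt_of_le (ha ⟨0, Nat.pos_of_ne_zero (NeZero.ne n)⟩)
      (Finset.le_sup' a (Finset.mem_univ _))
  have haM : ∀ i, a i ≤ M := fun i => hMdef ▸ Finset.le_sup' a (Finset.mem_univ i)
  have hsum : 0 < ∑ i, a i ^ 2 :=
    Finset.sum_pos (fun i _ => pow_pos (ha i) 2) Finset.univ_nonempty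
  have hσ0 : 0 < σ := by rw [hσ]; exact Real.sqrt_pos.mpr (by linarith)
  have hσsq : σ ^ 2 = 2 * ∑ i, a i ^ 2 := by
    rw [hσ]; exact Real.sq_sqrt (by linarith)
  have hα0 : 0 < α := by rw [hα]; positivity
  have hσM : σ = α * M := by rw [hα]; field_simp
  have ht0 : 0 < t := lt_trans one_pos ht
  obtain ⟨u, hudef⟩ : ∃ u : ℝ, u = 2 * t / α := ⟨_, rfl⟩
  have hu : 0 < u := by rw [hudef]; positivity
  obtain ⟨s1, hs1def⟩ : ∃ s1 : ℝ, s1 = Real.sqrt (1 + u ^ 2) := ⟨_, rfl⟩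
  have hs1sq : s1 ^ 2 = 1 + u ^ 2 := by rw [hs1def]; exact Real.sq_sqrt (by positivity)
  have hs1nn : 0 ≤ s1 := hs1def ▸ Real.sqrt_nonneg _
  have hs1 : 1 < s1 := by nlinarith [hs1sq, sq_nonneg (s1 - 1), hu]
  obtain ⟨v, hvdef⟩ : ∃ v : ℝ, v = (s1 - 1) / u := ⟨_, rfl⟩
  have hv0 : 0 < v := by rw [hvdef]; exact div_pos (by linarith) hu
  have hs1u : s1 < 1 + u := by nlinarith [hs1sq]
  have hv1 : v < 1 := by rw [hvdef, div_lt_one hu]; linarith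
  have huv : u * v = s1 - 1 := by rw [hvdef]; field_simp
  have hvsq : 1 - v ^ 2 = 2 / (1 + s1) := by
    have hu2 : u ^ 2 = s1 ^ 2 - 1 := by linarith [hs1sq]
    have h2 : (1:ℝ) + s1 ≠ 0 := by linarith
    rw [hvdef, div_pow, hu2]
    have h1 : s1 ^ 2 - 1 ≠ 0 := by nlinarith
    field_simp
    ring
  have hvsq_pos : 0 < 1 - v ^ 2 := by nlinarith
  obtain ⟨lam, hlamdef⟩ : ∃ lam : ℝ, lam = v / M := ⟨_, rfl⟩
  have hlam0 : 0 < lam := by rw [hlamdef]; positivity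
  have hlamA : ∀ i, 0 < lam * a i := fun i => mul_pos hlam0 (ha i)
  have hlamB : ∀ i, lam * a i ≤ v := by
    intro i
    rw [hlamdef, div_mul_eq_mul_div, div_le_iff₀ hM]
    nlinarith [haM i, hv0]
  have hlamabs : ∀ i, |lam * a i| < 1 := by
    intro i
    rw [abs_of_pos (hlamA i)]
    exact lt_of_le_of_lt (hlamB i) hv1
  have hlamsq : ∀ i, (lam * a i) ^ 2 ≤ v ^ 2 := by
    intro i; nlinarith [hlamB i, hlamA i, hv0]
  have hlamsq1 : ∀ i, 0 < 1 - (lam * a i) ^ 2 := by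
    intro i; nlinarith [hlamsq i, hvsq_pos]
  -- the weighted variables
  obtain ⟨Y, hYdef⟩ : ∃ Y : Fin n → Ω → ℝ, Y = fun i ω => a i * X i ω := ⟨_, rfl⟩
  have hYmeas : ∀ i, Measurable (Y i) := by
    rw [hYdef]; exact fun i => (hXmeas i).const_mul (a i)
  have hYindep : iIndepFun Y μ := by
    rw [hYdef]
    exact hindep.comp (fun i (x : ℝ) => a i * x)
      (fun i => measurable_const.mul measurable_id)
  -- integrability of exp(lam * Y i)
  have hint : ∀ i, Integrable (fun ω => Real.exp (lam * Y i ω)) μ := by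
    intro i
    have hcomp : Integrable ((fun x => Real.exp ((lam * a i) * x)) ∘ (X i)) μ := by
      refine (integrable_map_measure ?_ (hXmeas i).aemeasurable).mp ?_
      · exact (show Measurable fun x : ℝ => Real.exp ((lam * a i) * x) by
          fun_prop).aestronglyMeasurable
      · rw [hlaw i]; exact laplace_exp_integrable (hlamabs i)
    simpa [Function.comp_def, hYdef, mul_assoc] using hcomp
  -- mgf values
  have hmgf : ∀ i, mgf (Y i) μ lam = 1 / (1 - (lam * a i) ^ 2) := by
    intro i
    unfold mgf
    have hptw : ∀ ω, Real.exp (lam * Y i ω) = (fun x => Real.exp ((lam * a i) * x)) (X i ω) := by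
      intro ω; rw [hYdef]; simp only []; rw [mul_assoc]
    simp_rw [hptw]
    rw [← integral_map (hXmeas i).aemeasurable
      (show Measurable fun x : ℝ => Real.exp ((lam * a i) * x) by fun_prop).aestronglyMeasurable]
    rw [hlaw i]
    exact laplace_exp_integral (hlamabs i)
  -- Chernoff
  have hSint : Integrable (fun ω => Real.exp (lam * (∑ i, Y i) ω)) μ :=
    hYindep.integrable_exp_mul_sum hYmeas (fun i _ => hint i)
  have chern := measure_ge_le_exp_mul_mgf (μ := μ) (X := ∑ i, Y i) (t := lam) (t * σ)
    hlam0.le hSint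
  have hmgfsum : mgf (∑ i, Y i) μ lam = ∏ i, mgf (Y i) μ lam :=
    hYindep.mgf_sum hYmeas Finset.univ
  -- bound the product
  have hprod : ∏ i, mgf (Y i) μ lam ≤ Real.exp ((α ^ 2 / 2) * (-Real.log (1 - v ^ 2))) := by
    have hterm : ∀ i, mgf (Y i) μ lam = Real.exp (-Real.log (1 - (lam * a i) ^ 2)) := by
      intro i
      rw [hmgf i, ← Real.log_inv, Real.exp_log (inv_pos.mpr (hlamsq1 i)), one_div]
    have hv2 : (0:ℝ) < v ^ 2 := by positivity
    calc ∏ i, mgf (Y i) μ lam = Real.exp (∑ i, -Real.log (1 - (lam * a i) ^ 2)) := by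
          rw [Real.exp_sum]; exact Finset.prod_congr rfl (fun i _ => hterm i)
      _ ≤ Real.exp ((α ^ 2 / 2) * (-Real.log (1 - v ^ 2))) := by
          apply Real.exp_le_exp.mpr
          have hstep : ∀ i, -Real.log (1 - (lam * a i) ^ 2) ≤
              ((lam * a i) ^ 2 / v ^ 2) * (-Real.log (1 - v ^ 2)) := by
            intro i
            have hkey := neg_log_one_sub_mono (x := (lam * a i) ^ 2) (y := v ^ 2)
              (by positivity) (hlamsq i) (by nlinarith)
            have h1 : -Real.log (1 - (lam * a i) ^ 2) ≤
                ((lam * a i) ^ 2 * (-Real.log (1 - v ^ 2))) / v ^ 2 :=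
              (le_div_iff₀ hv2).mpr (by nlinarith [hkey])
            exact h1.trans_eq (div_mul_eq_mul_div _ _ _).symm
          calc ∑ i, -Real.log (1 - (lam * a i) ^ 2)
              ≤ ∑ i, ((lam * a i) ^ 2 / v ^ 2) * (-Real.log (1 - v ^ 2)) :=
                Finset.sum_le_sum (fun i _ => hstep i)
            _ = (α ^ 2 / 2) * (-Real.log (1 - v ^ 2)) := by
                rw [← Finset.sum_mul]
                congr 1
                have hsum2 : ∑ i, (lam * a i) ^ 2 / v ^ 2
                    = (lam ^ 2 * ∑ i, a i ^ 2) / v ^ 2 := by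
                  rw [Finset.mul_sum, Finset.sum_div]
                  exact Finset.sum_congr rfl (fun i _ => by ring)
                have hSig : ∑ i, a i ^ 2 = σ ^ 2 / 2 := by linarith [hσsq]
                rw [hsum2, hSig, hlamdef, hα]
                have hM' : M ≠ 0 := ne_of_gt hM
                have hv' : v ≠ 0 := ne_of_gt hv0
                field_simp
  -- final exponent computation
  have hlog : -Real.log (1 - v ^ 2) = Real.log ((1 + s1) / 2) := by
    rw [hvsq, ← Real.log_inv]
    congr 1
    rw [inv_div]
  have hltσ : lam * (t * σ) = (α ^ 2 / 2) * (u * v) := by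
    rw [hlamdef, hσM, hudef]
    have hM' : M ≠ 0 := ne_of_gt hM
    have hα' : α ≠ 0 := ne_of_gt hα0
    field_simp
  have hfinal : Real.exp (-lam * (t * σ)) * Real.exp ((α ^ 2 / 2) * (-Real.log (1 - v ^ 2)))
      = Real.exp (-(α ^ 2 / 2) * h (2 * t / α)) := by
    rw [← Real.exp_add]
    congr 1
    rw [← hudef, hh u hu, ← hs1def, hlog]
    have : -lam * (t * σ) = -((α ^ 2 / 2) * (s1 - 1)) := by rw [← huv, ← hltσ]; ring
    rw [this]
    ring
  -- put it together
  have hset : {ω | t * σ < ∑ i, a i * X i ω} ⊆ {ω | t * σ ≤ (∑ i, Y i) ω} := by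
    intro ω hω
    simp only [Set.mem_setOf_eq, hYdef, Finset.sum_apply] at *
    exact le_of_lt hω
  calc μ {ω | t * σ < ∑ i, a i * X i ω} ≤ μ {ω | t * σ ≤ (∑ i, Y i) ω} := measure_mono hset
    _ ≤ ENNReal.ofReal (Real.exp (-(α ^ 2 / 2) * h (2 * t / α))) := by
        rw [← ENNReal.ofReal_toReal (measure_ne_top μ _)]
        apply ENNReal.ofReal_le_ofReal
        refine chern.trans ?_
        rw [hmgfsum, ← hfinal]
        exact mul_le_mul_of_nonneg_left hprod (Real.exp_pos _).le
end

section
/- Let X_1, ..., X_n be independent standard two-sided exponential (Laplace) random variables, each with density (1/2)e^{-|x|} on ℝ, and let S = Σ_{i=1}^n a_i X_i with positive weights a_1, ..., a_n. Set α = sqrt(2 Σ_{i=1}^n a_i^2) / max_{i≤n} a_i. Then for every t > 1, P(S > t·sqrt(Var S)) ≥ (1/57)·(1/sqrt(α t))·exp(-α t). -/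
open MeasureTheory ProbabilityTheory

lemma laplaceMeasure_neg : laplaceMeasure.map Neg.neg = laplaceMeasure := by
  ext s hs
  rw [Measure.map_apply measurable_neg hs, laplaceMeasure,
    withDensity_apply _ (hs.preimage measurable_neg), withDensity_apply _ hs]
  have := (Measure.measurePreserving_neg (volume : Measure ℝ)).setLIntegral_comp_preimage_emb
    (MeasurableEquiv.neg ℝ).measurableEmbedding
    (fun x => ENNReal.ofReal ((1 / 2) * Real.exp (-|x|))) s
  simpa [abs_neg] using this

lemma laplace_tail {s : ℝ} (hs : 0 ≤ s) :
    laplaceMeasure {x | s < x} = ENNReal.ofReal ((1 / 2) * Real.exp (-s)) := by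
  have hset : {x : ℝ | s < x} = Set.Ioi s := rfl
  rw [laplaceMeasure, hset, withDensity_apply _ measurableSet_Ioi]
  have h1 : ∀ x ∈ Set.Ioi s, ENNReal.ofReal ((1 / 2) * Real.exp (-|x|))
      = ENNReal.ofReal ((1 / 2) * Real.exp (-x)) := by
    intro x hx
    rw [abs_of_pos (lt_of_le_of_lt hs hx)]
  rw [setLIntegral_congr_fun measurableSet_Ioi h1]
  rw [← ofReal_integral_eq_lintegral_ofReal]
  · rw [MeasureTheory.integral_const_mul, integral_exp_neg_Ioi]
  · have : IntegrableOn (fun x : ℝ => Real.exp (-x)) (Set.Ioi s) := by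
      simpa using exp_neg_integrableOn_Ioi s one_pos
    exact this.const_mul _
  · filter_upwards with x
    positivity

lemma map_neg_sum {Ω : Type*} [MeasurableSpace Ω] {μ : Measure Ω} [IsProbabilityMeasure μ]
    {ι : Type*} (f : ι → Ω → ℝ) (hmeas : ∀ i, Measurable (f i))
    (hindep : iIndepFun f μ)
    (hsymm : ∀ i, μ.map (f i) = μ.map (fun ω => -(f i ω)))
    (s : Finset ι) :
    μ.map (∑ i ∈ s, f i) = μ.map (fun ω => -((∑ i ∈ s, f i) ω)) := by
  classical
  induction s using Finset.induction_on with
  | empty =>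
    simp only [Finset.sum_empty]
    congr 1
    funext ω
    simp
  | @insert i s hi ih =>
    set T : Ω → ℝ := ∑ j ∈ s, f j with hT
    have hTm : Measurable T := by
      have : T = fun ω => ∑ j ∈ s, f j ω := by
        funext ω; rw [hT]; simp
      rw [this]
      exact Finset.measurable_sum s (fun j _ => hmeas j)
    have hInd : IndepFun (f i) T μ :=
      (hindep.indepFun_finsetSum_of_notMem hmeas hi).symm
    have hIndNeg : IndepFun (fun ω => -(f i ω)) (fun ω => -(T ω)) μ :=
      hInd.comp measurable_neg measurable_neg
    have hmap1 : μ.map (fun ω => (f i ω, T ω))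
        = (μ.map (f i)).prod (μ.map T) :=
      (indepFun_iff_map_prod_eq_prod_map_map (hmeas i).aemeasurable hTm.aemeasurable).1 hInd
    have hmap2 : μ.map (fun ω => (-(f i ω), -(T ω)))
        = (μ.map fun ω => -(f i ω)).prod (μ.map fun ω => -(T ω)) :=
      (indepFun_iff_map_prod_eq_prod_map_map (hmeas i).neg.aemeasurable
        hTm.neg.aemeasurable).1 hIndNeg
    have key : μ.map (fun ω => f i ω + T ω) = μ.map (fun ω => -(f i ω) + -(T ω)) := by
      have e1 : (fun ω => f i ω + T ω)
          = (fun p : ℝ × ℝ => p.1 + p.2) ∘ (fun ω => (f i ω, T ω)) := rfl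
      have e2 : (fun ω => -(f i ω) + -(T ω))
          = (fun p : ℝ × ℝ => p.1 + p.2) ∘ (fun ω => (-(f i ω), -(T ω))) := rfl
      rw [e1, e2, ← Measure.map_map measurable_add ((hmeas i).prodMk hTm),
        ← Measure.map_map measurable_add (by exact ((hmeas i).neg.prodMk hTm.neg) : Measurable (fun ω => (-(f i ω), -(T ω)))),
        hmap1, hmap2, ← hsymm i, ← ih]
    have hsum : (∑ j ∈ insert i s, f j) = fun ω => f i ω + T ω := by
      rw [Finset.sum_insert hi]; rfl
    rw [hsum]
    rw [key]
    congr 1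
    funext ω
    simp [neg_add, add_comm]

lemma half_le_prob_nonneg {Ω : Type*} [MeasurableSpace Ω] {μ : Measure Ω}
    [IsProbabilityMeasure μ] (T : Ω → ℝ) (hT : Measurable T)
    (hsymm : μ.map T = μ.map (fun ω => -(T ω))) :
    (2 : ENNReal)⁻¹ ≤ μ {ω | 0 ≤ T ω} := by
  have hs : MeasurableSet {x : ℝ | 0 ≤ x} := measurableSet_Ici
  have h1 : μ {ω | 0 ≤ T ω} = μ {ω | T ω ≤ 0} := by
    have e1 : μ {ω | 0 ≤ T ω} = μ.map T {x | 0 ≤ x} := by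
      rw [Measure.map_apply hT hs]; rfl
    rw [e1, hsymm, Measure.map_apply (by exact hT.neg : Measurable (fun ω => -(T ω))) hs]
    congr 1
    ext ω
    simp [neg_nonneg]
  have h2 : (1 : ENNReal) ≤ μ {ω | 0 ≤ T ω} + μ {ω | T ω ≤ 0} := by
    calc (1 : ENNReal) = μ Set.univ := (measure_univ).symm
      _ ≤ μ ({ω | 0 ≤ T ω} ∪ {ω | T ω ≤ 0}) := measure_mono (fun ω _ => le_total 0 (T ω))
      _ ≤ μ {ω | 0 ≤ T ω} + μ {ω | T ω ≤ 0} := measure_union_le _ _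
  rw [← h1, ← two_mul] at h2
  calc (2 : ENNReal)⁻¹ = 2⁻¹ * 1 := (mul_one _).symm
    _ ≤ 2⁻¹ * (2 * μ {ω | 0 ≤ T ω}) := mul_le_mul_right h2 _
    _ = μ {ω | 0 ≤ T ω} := by
        rw [← mul_assoc, ENNReal.inv_mul_cancel (by norm_num) (by norm_num), one_mul]

/-- Lower bound in Theorem 1.2: for independent standard Laplace variables `X i` and
positive weights `a i`, with `σ = sqrt(Var S) = sqrt(2 ∑ aᵢ²)` and `α = σ / max aᵢ`,
for all `t > 1`, `P(S > t σ) ≥ (1/57) (1/sqrt(α t)) exp(-α t)`. -/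
theorem laplace_sum_tail_lower
    {Ω : Type*} [MeasurableSpace Ω] (μ : Measure Ω) [IsProbabilityMeasure μ]
    (n : ℕ) [NeZero n] (X : Fin n → Ω → ℝ) (a : Fin n → ℝ)
    (hXmeas : ∀ i, Measurable (X i))
    (hindep : iIndepFun X μ)
    (hlaw : ∀ i, μ.map (X i) = laplaceMeasure)
    (ha : ∀ i, 0 < a i)
    (σ α : ℝ)
    (hσ : σ = Real.sqrt (2 * ∑ i, a i ^ 2))
    (hα : α = σ / Finset.univ.sup' Finset.univ_nonempty a)
    (t : ℝ) (ht : 1 < t) :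
    ENNReal.ofReal ((1 / 57) * (1 / Real.sqrt (α * t)) * Real.exp (-(α * t))) ≤
      μ {ω | t * σ < ∑ i, a i * X i ω} := by
  classical
  obtain ⟨j, -, hj⟩ := Finset.exists_mem_eq_sup' (Finset.univ_nonempty (α := Fin n)) a
  set M : ℝ := Finset.univ.sup' Finset.univ_nonempty a with hM
  have hMj : M = a j := hj
  have hM0 : 0 < M := hMj ▸ ha j
  -- basic bounds on σ and α
  have hsum_sq : a j ^ 2 ≤ ∑ i, a i ^ 2 :=
    Finset.single_le_sum (fun i _ => sq_nonneg (a i)) (Finset.mem_univ j)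
  have hσM : M ≤ σ := by
    rw [hσ, hMj]
    calc a j = Real.sqrt ((a j) ^ 2) := by
          rw [Real.sqrt_sq (ha j).le]
      _ ≤ Real.sqrt (2 * ∑ i, a i ^ 2) := by
          apply Real.sqrt_le_sqrt
          nlinarith [sq_nonneg (a j)]
  have hα1 : 1 ≤ α := by
    rw [hα, le_div_iff₀ hM0, one_mul]
    exact hσM
  have hαt1 : 1 ≤ α * t := by nlinarith
  have hαt0 : 0 ≤ α * t := by linarith
  have hσ0 : 0 < σ := lt_of_lt_of_le hM0 hσM
  -- the weighted family
  set f : Fin n → Ω → ℝ := fun i ω => a i * X i ω with hf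
  have hfmeas : ∀ i, Measurable (f i) := fun i => (hXmeas i).const_mul (a i)
  have hfind : iIndepFun f μ :=
    hindep.comp (fun i x => a i * x) (fun i => measurable_const_mul _)
  have hfsymm : ∀ i, μ.map (f i) = μ.map (fun ω => -(f i ω)) := by
    intro i
    have hn : μ.map (fun ω => -(X i ω)) = laplaceMeasure := by
      have e : (fun ω => -(X i ω)) = Neg.neg ∘ X i := rfl
      rw [e, ← Measure.map_map measurable_neg (hXmeas i), hlaw i, laplaceMeasure_neg]
    have h1 : μ.map (f i) = laplaceMeasure.map (fun x => a i * x) := by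
      rw [← hlaw i, Measure.map_map (measurable_const_mul _) (hXmeas i)]
      rfl
    have h2 : μ.map (fun ω => -(f i ω)) = laplaceMeasure.map (fun x => a i * x) := by
      have e : (fun ω => -(f i ω)) = (fun x => a i * x) ∘ (fun ω => -(X i ω)) := by
        funext ω
        simp [hf, mul_neg]
      rw [e, ← Measure.map_map (measurable_const_mul _) (by exact (hXmeas i).neg : Measurable (fun ω => -(X i ω))), hn]
    rw [h1, h2]
  -- the partial sum without j
  set T : Ω → ℝ := ∑ i ∈ Finset.univ.erase j, f i with hT
  have hTapp : ∀ ω, T ω = ∑ i ∈ Finset.univ.erase j, f i ω := by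
    intro ω; rw [hT]; simp
  have hTm : Measurable T := by
    have : T = fun ω => ∑ i ∈ Finset.univ.erase j, f i ω := funext hTapp
    rw [this]
    exact Finset.measurable_sum _ (fun i _ => hfmeas i)
  have hTsymm : μ.map T = μ.map (fun ω => -(T ω)) :=
    map_neg_sum f hfmeas hfind hfsymm _
  have hhalf : (2 : ENNReal)⁻¹ ≤ μ {ω | 0 ≤ T ω} := half_le_prob_nonneg T hTm hTsymm
  -- independence of f j and T
  have hInd : IndepFun (f j) T μ :=
    (hfind.indepFun_finsetSum_of_notMem hfmeas (Finset.notMem_erase j _)).symm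
  -- tail probability of f j
  have hαtσ : α * t * M = t * σ := by
    rw [hα]
    field_simp
  have hAeq : (f j ⁻¹' Set.Ioi (t * σ)) = X j ⁻¹' {x | α * t < x} := by
    ext ω
    simp only [Set.mem_preimage, Set.mem_Ioi, Set.mem_setOf_eq, hf]
    rw [← hαtσ, ← hMj]
    constructor
    · intro h
      nlinarith
    · intro h
      nlinarith
  have hμA : μ (f j ⁻¹' Set.Ioi (t * σ))
      = ENNReal.ofReal ((1 / 2) * Real.exp (-(α * t))) := by
    rw [hAeq, ← Measure.map_apply (hXmeas j) (by exact measurableSet_Ioi), hlaw j,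
      laplace_tail hαt0]
  -- product bound
  have hprod : μ (f j ⁻¹' Set.Ioi (t * σ) ∩ T ⁻¹' Set.Ici 0)
      = μ (f j ⁻¹' Set.Ioi (t * σ)) * μ (T ⁻¹' Set.Ici 0) :=
    hInd.measure_inter_preimage_eq_mul _ _ measurableSet_Ioi measurableSet_Ici
  have hBset : (T ⁻¹' Set.Ici 0) = {ω | 0 ≤ T ω} := rfl
  -- inclusion of events
  have hsub : f j ⁻¹' Set.Ioi (t * σ) ∩ T ⁻¹' Set.Ici 0 ⊆ {ω | t * σ < ∑ i, a i * X i ω} := by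
    rintro ω ⟨h1, h2⟩
    simp only [Set.mem_preimage, Set.mem_Ioi, Set.mem_Ici] at h1 h2
    have hsplit : ∑ i, a i * X i ω = f j ω + T ω := by
      rw [hTapp]
      rw [Finset.add_sum_erase _ (fun i => f i ω) (Finset.mem_univ j)]
    simp only [Set.mem_setOf_eq]
    rw [hsplit]
    linarith
  -- numeric comparison
  have hsqrt1 : 1 ≤ Real.sqrt (α * t) := by
    rw [show (1 : ℝ) = Real.sqrt 1 from (Real.sqrt_one).symm]
    exact Real.sqrt_le_sqrt hαt1
  have hreal : (1 / 57) * (1 / Real.sqrt (α * t)) * Real.exp (-(α * t))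
      ≤ ((1 / 2) * Real.exp (-(α * t))) * (1 / 2) := by
    have hd : 1 / Real.sqrt (α * t) ≤ 1 := by
      rw [div_le_one (lt_of_lt_of_le one_pos hsqrt1)]
      exact hsqrt1
    have he : (0 : ℝ) < Real.exp (-(α * t)) := Real.exp_pos _
    nlinarith [he.le, mul_pos (by positivity : (0:ℝ) < (1:ℝ)/57) he]
  calc ENNReal.ofReal ((1 / 57) * (1 / Real.sqrt (α * t)) * Real.exp (-(α * t)))
      ≤ ENNReal.ofReal (((1 / 2) * Real.exp (-(α * t))) * (1 / 2)) :=
        ENNReal.ofReal_le_ofReal hreal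
    _ = ENNReal.ofReal ((1 / 2) * Real.exp (-(α * t))) * ENNReal.ofReal (1 / 2) :=
        ENNReal.ofReal_mul (by positivity)
    _ ≤ μ (f j ⁻¹' Set.Ioi (t * σ)) * μ (T ⁻¹' Set.Ici 0) := by
        apply mul_le_mul'
        · rw [hμA]
        · rw [hBset]
          calc ENNReal.ofReal (1 / 2) ≤ (2 : ENNReal)⁻¹ := by
                rw [show (1 : ℝ) / 2 = (2 : ℝ)⁻¹ by norm_num,
                  ENNReal.ofReal_inv_of_pos (by norm_num)]
                simp
            _ ≤ μ {ω | 0 ≤ T ω} := hhalf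
    _ = μ (f j ⁻¹' Set.Ioi (t * σ) ∩ T ⁻¹' Set.Ici 0) := hprod.symm
    _ ≤ μ {ω | t * σ < ∑ i, a i * X i ω} := measure_mono hsub
end

section
/- Let Z_1, ..., Z_n be independent mean-zero random variables such that E Z_i^4 ≤ C (E Z_i^2)^2 for all 1 ≤ i ≤ n, for some constant C ≥ 1. Then for Z = Z_1 + ... + Z_n, P(Z ≥ 0) ≥ 1/(16^{1/3} · max{C, 3}). -/
open MeasureTheory ProbabilityTheory
open scoped ENNReal

section PZaux
variable {Ω : Type*} [MeasurableSpace Ω] {μ : Measure Ω} [IsProbabilityMeasure μ]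

lemma integrable_pow_of_memL4' {S : Ω → ℝ} (hS : MemLp S 4 μ) {k : ℕ} (hk : k ≤ 4) (hk0 : 0 < k) :
    Integrable (fun ω => S ω ^ k) μ := by
  have h1 : MemLp S (k : ℝ≥0∞) μ :=
    hS.mono_exponent (by exact_mod_cast Nat.cast_le.mpr hk)
  have h2 := h1.integrable_norm_rpow (by exact_mod_cast hk0.ne') (by simp)
  refine h2.mono (hS.aestronglyMeasurable.aemeasurable.pow_const k).aestronglyMeasurable ?_
  filter_upwards with ω
  simp only [Real.norm_eq_abs]
  rw [show ((k : ℝ≥0∞)).toReal = (k:ℝ) by simp, abs_pow,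
    ← Real.rpow_natCast |S ω| k]
  exact le_abs_self _


lemma pz_step {X Y : Ω → ℝ}
    (hXY : IndepFun X Y μ) (hX4 : MemLp X 4 μ) (hY4 : MemLp Y 4 μ)
    (hX0 : ∫ ω, X ω ∂μ = 0) (hY0 : ∫ ω, Y ω ∂μ = 0) :
    (∫ ω, (X ω + Y ω) ^ 4 ∂μ
      = ∫ ω, X ω ^ 4 ∂μ + 6 * ((∫ ω, X ω ^ 2 ∂μ) * (∫ ω, Y ω ^ 2 ∂μ)) + ∫ ω, Y ω ^ 4 ∂μ)
    ∧ (∫ ω, (X ω + Y ω) ^ 2 ∂μ = ∫ ω, X ω ^ 2 ∂μ + ∫ ω, Y ω ^ 2 ∂μ) := by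
  have iX : ∀ k : ℕ, k ≤ 4 → 0 < k → Integrable (fun ω => X ω ^ k) μ :=
    fun k hk hk0 => integrable_pow_of_memL4' hX4 hk hk0
  have iY : ∀ k : ℕ, k ≤ 4 → 0 < k → Integrable (fun ω => Y ω ^ k) μ :=
    fun k hk hk0 => integrable_pow_of_memL4' hY4 hk hk0
  have hind : ∀ a b : ℕ, IndepFun (fun ω => X ω ^ a) (fun ω => Y ω ^ b) μ :=
    fun a b => hXY.comp (measurable_id.pow_const a) (measurable_id.pow_const b)
  have hmul : ∀ a b : ℕ, a ≤ 4 → b ≤ 4 → 0 < a → 0 < b →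
      Integrable (fun ω => X ω ^ a * Y ω ^ b) μ :=
    fun a b ha hb ha0 hb0 => (hind a b).integrable_mul (iX a ha ha0) (iY b hb hb0)
  have hcross : ∀ a b : ℕ, a ≤ 4 → b ≤ 4 → 0 < a → 0 < b →
      ∫ ω, X ω ^ a * Y ω ^ b ∂μ = (∫ ω, X ω ^ a ∂μ) * ∫ ω, Y ω ^ b ∂μ :=
    fun a b ha hb ha0 hb0 => (hind a b).integral_fun_mul_eq_mul_integral (iX a ha ha0).aestronglyMeasurable
      (iY b hb hb0).aestronglyMeasurable
  constructor
  · have e : ∀ ω, (X ω + Y ω) ^ 4 = X ω ^ 4 + (4 * (X ω ^ 3 * Y ω ^ 1)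
        + (6 * (X ω ^ 2 * Y ω ^ 2) + (4 * (X ω ^ 1 * Y ω ^ 3) + Y ω ^ 4))) := by
      intro ω; ring
    have m31 := hmul 3 1 (by norm_num) (by norm_num) (by norm_num) (by norm_num)
    have m22 := hmul 2 2 (by norm_num) (by norm_num) (by norm_num) (by norm_num)
    have m13 := hmul 1 3 (by norm_num) (by norm_num) (by norm_num) (by norm_num)
    have i4X := iX 4 le_rfl (by norm_num)
    have i4Y := iY 4 le_rfl (by norm_num)
    have I3 : Integrable (fun ω => 4 * (X ω ^ 1 * Y ω ^ 3) + Y ω ^ 4) μ := by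
      exact (m13.const_mul 4).add i4Y
    have I2 : Integrable (fun ω => 6 * (X ω ^ 2 * Y ω ^ 2)
        + (4 * (X ω ^ 1 * Y ω ^ 3) + Y ω ^ 4)) μ := by
      exact (m22.const_mul 6).add I3
    have I1 : Integrable (fun ω => 4 * (X ω ^ 3 * Y ω ^ 1)
        + (6 * (X ω ^ 2 * Y ω ^ 2) + (4 * (X ω ^ 1 * Y ω ^ 3) + Y ω ^ 4))) μ := by
      exact (m31.const_mul 4).add I2
    simp_rw [e]
    rw [integral_add i4X I1, integral_add (m31.const_mul 4) I2,
      integral_add (m22.const_mul 6) I3, integral_add (m13.const_mul 4) i4Y,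
      integral_const_mul _ _, integral_const_mul _ _, integral_const_mul _ _,
      hcross 3 1 (by norm_num) (by norm_num) (by norm_num) (by norm_num),
      hcross 2 2 (by norm_num) (by norm_num) (by norm_num) (by norm_num),
      hcross 1 3 (by norm_num) (by norm_num) (by norm_num) (by norm_num)]
    simp only [pow_one]
    rw [hX0, hY0]
    ring
  · have e : ∀ ω, (X ω + Y ω) ^ 2 = X ω ^ 2 + (2 * (X ω ^ 1 * Y ω ^ 1) + Y ω ^ 2) := by
      intro ω; ring
    have m11 := hmul 1 1 (by norm_num) (by norm_num) (by norm_num) (by norm_num)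
    have i2Y := iY 2 (by norm_num) (by norm_num)
    have J1 : Integrable (fun ω => 2 * (X ω ^ 1 * Y ω ^ 1) + Y ω ^ 2) μ := by
      exact (m11.const_mul 2).add i2Y
    simp_rw [e]
    rw [integral_add (iX 2 (by norm_num) (by norm_num)) J1,
      integral_add (m11.const_mul 2) i2Y, integral_const_mul _ _,
      hcross 1 1 (by norm_num) (by norm_num) (by norm_num) (by norm_num)]
    simp only [pow_one]
    rw [hX0]
    ring

lemma sum_moments {ι : Type*} {Z : ι → Ω → ℝ}
    (hZmeas : ∀ i, Measurable (Z i))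
    (hindep : iIndepFun Z μ)
    (hL4 : ∀ i, MemLp (Z i) 4 μ)
    (hmean : ∀ i, ∫ ω, Z i ω ∂μ = 0)
    (D : ℝ) (hD : 3 ≤ D)
    (hmom : ∀ i, ∫ ω, Z i ω ^ 4 ∂μ ≤ D * (∫ ω, Z i ω ^ 2 ∂μ) ^ 2)
    (s : Finset ι) :
    (∫ ω, (∑ i ∈ s, Z i ω) ∂μ = 0) ∧
    (∫ ω, (∑ i ∈ s, Z i ω) ^ 2 ∂μ = ∑ i ∈ s, ∫ ω, Z i ω ^ 2 ∂μ) ∧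
    (∫ ω, (∑ i ∈ s, Z i ω) ^ 4 ∂μ ≤ D * (∑ i ∈ s, ∫ ω, Z i ω ^ 2 ∂μ) ^ 2) := by
  classical
  induction s using Finset.induction_on with
  | empty => simp
  | @insert i s hi ih =>
    obtain ⟨ih0, ih2, ih4⟩ := ih
    have hSL4 : MemLp (fun ω => ∑ j ∈ s, Z j ω) 4 μ :=
      memLp_finset_sum s (fun j _ => hL4 j)
    have hII : IndepFun (Z i) (fun ω => ∑ j ∈ s, Z j ω) μ := by
      have := (hindep.indepFun_finsetSum_of_notMem hZmeas hi).symm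
      convert this using 1
      ext ω; simp
    have hst := pz_step hII (hL4 i) hSL4 (hmean i) ih0
    have ha : 0 ≤ ∫ ω, Z i ω ^ 2 ∂μ := integral_nonneg fun ω => sq_nonneg _
    have hb : 0 ≤ ∑ j ∈ s, ∫ ω, Z j ω ^ 2 ∂μ :=
      Finset.sum_nonneg fun j _ => integral_nonneg fun ω => sq_nonneg _
    have h4S : ∫ ω, (∑ j ∈ s, Z j ω) ^ 4 ∂μ ≤ D * (∑ j ∈ s, ∫ ω, Z j ω ^ 2 ∂μ) ^ 2 := ih4
    refine ⟨?_, ?_, ?_⟩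
    · simp_rw [Finset.sum_insert hi]
      rw [integral_add ((hL4 i).integrable (by norm_num))
        (hSL4.integrable (by norm_num)), hmean i, ih0, add_zero]
    · simp_rw [Finset.sum_insert hi]
      rw [hst.2, ih2]
    · simp_rw [Finset.sum_insert hi]
      rw [hst.1, ih2]
      nlinarith [hmom i, sq_nonneg (∫ ω, Z i ω ^ 2 ∂μ),
        sq_nonneg (∑ j ∈ s, ∫ ω, Z j ω ^ 2 ∂μ),
        mul_nonneg ha hb]

lemma core {S : Ω → ℝ} (hmeas : Measurable S) (hS : MemLp S 4 μ)
    (hmean : ∫ ω, S ω ∂μ = 0) {D : ℝ} (hD : 1 ≤ D)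
    (hmom : ∫ ω, S ω ^ 4 ∂μ ≤ D * (∫ ω, S ω ^ 2 ∂μ) ^ 2) :
    ENNReal.ofReal (1 / (16 ^ ((1 : ℝ) / 3) * D)) ≤ μ {ω | 0 ≤ S ω} := by
  have hD0 : (0:ℝ) < D := lt_of_lt_of_le one_pos hD
  have h16 : (1:ℝ) ≤ 16 ^ ((1:ℝ)/3) :=
    Real.one_le_rpow (by norm_num) (by norm_num)
  have h16pos : (0:ℝ) < 16 ^ ((1:ℝ)/3) := lt_of_lt_of_le one_pos h16
  set A : Set Ω := {ω | 0 ≤ S ω} with hAdef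
  have hA : MeasurableSet A := measurableSet_le measurable_const hmeas
  set m2 : ℝ := ∫ ω, S ω ^ 2 ∂μ with hm2def
  set m4 : ℝ := ∫ ω, S ω ^ 4 ∂μ with hm4def
  have hm2nn : 0 ≤ m2 := integral_nonneg fun ω => sq_nonneg _
  have hi2 : Integrable (fun ω => S ω ^ 2) μ :=
    integrable_pow_of_memL4' hS (by norm_num) (by norm_num)
  have hi4 : Integrable (fun ω => S ω ^ 4) μ :=
    integrable_pow_of_memL4' hS le_rfl (by norm_num)
  have hm4nn : 0 ≤ m4 := integral_nonneg fun ω => by positivity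
  by_cases hm2 : m2 = 0
  · -- S = 0 a.e., so μ A = 1
    have hzero : (fun ω => S ω ^ 2) =ᵐ[μ] 0 :=
      (integral_eq_zero_iff_of_nonneg (fun ω => sq_nonneg _) hi2).mp hm2
    have hae : ∀ᵐ ω ∂μ, 0 ≤ S ω := by
      filter_upwards [hzero] with ω h
      have : S ω ^ 2 = 0 := h
      nlinarith [sq_nonneg (S ω)]
    have hcompl : μ Aᶜ = 0 := by
      have := ae_iff.mp hae
      simpa [hAdef, Set.compl_setOf] using this
    have hA1 : μ A = 1 := by
      have := measure_add_measure_compl hA (μ := μ)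
      rw [hcompl, add_zero] at this
      simpa using this
    rw [hA1]
    refine ENNReal.ofReal_le_one.mpr ?_
    rw [div_le_one (by positivity)]
    nlinarith
  have hm2pos : 0 < m2 := lt_of_le_of_ne hm2nn (Ne.symm hm2)
  -- Hölder 1 : m2 ≤ (∫|S|)^{2/3} * m4^{1/3}
  have habs : Integrable (fun ω => |S ω|) μ := (hS.integrable (by norm_num)).abs
  set L : ℝ := ∫ ω, |S ω| ∂μ with hLdef
  have hLnn : 0 ≤ L := integral_nonneg fun ω => abs_nonneg _
  have hH1 : m2 ≤ L ^ ((2:ℝ)/3) * m4 ^ ((1:ℝ)/3) := by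
    have hconj : ((3:ℝ)/2).HolderConjugate 3 := Real.holderConjugate_iff.mpr ⟨by norm_num, by norm_num⟩
    have hf : MemLp (fun ω => |S ω| ^ ((2:ℝ)/3)) (ENNReal.ofReal ((3:ℝ)/2)) μ := by
      have h1 : MemLp S 1 μ := hS.mono_exponent (by norm_num)
      have := h1.norm_rpow_div (ENNReal.ofReal ((2:ℝ)/3))
      have he : (1 : ℝ≥0∞) / ENNReal.ofReal ((2:ℝ)/3) = ENNReal.ofReal ((3:ℝ)/2) := by
        rw [one_div, ← ENNReal.ofReal_inv_of_pos (by norm_num)]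
        norm_num
      rw [he] at this
      simp only [Real.norm_eq_abs,
        ENNReal.toReal_ofReal (show (0:ℝ) ≤ 2/3 by norm_num)] at this
      exact this
    have hg : MemLp (fun ω => |S ω| ^ ((4:ℝ)/3)) (ENNReal.ofReal (3:ℝ)) μ := by
      have := hS.norm_rpow_div (ENNReal.ofReal ((4:ℝ)/3))
      have he : (4 : ℝ≥0∞) / ENNReal.ofReal ((4:ℝ)/3) = ENNReal.ofReal (3:ℝ) := by
        rw [show (4:ℝ≥0∞) = ENNReal.ofReal (4:ℝ) by norm_num,
          ← ENNReal.ofReal_div_of_pos (by norm_num)]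
        norm_num
      rw [he, show ENNReal.ofReal (3:ℝ) = 3 by norm_num] at this
      simp only [Real.norm_eq_abs,
        ENNReal.toReal_ofReal (show (0:ℝ) ≤ 4/3 by norm_num)] at this
      rw [show ENNReal.ofReal (3:ℝ) = 3 by norm_num]
      exact this
    have key := integral_mul_le_Lp_mul_Lq_of_nonneg hconj
      (ae_of_all μ fun ω => Real.rpow_nonneg (abs_nonneg _) _)
      (ae_of_all μ fun ω => Real.rpow_nonneg (abs_nonneg _) _) hf hg
    have e1 : ∀ ω, |S ω| ^ ((2:ℝ)/3) * |S ω| ^ ((4:ℝ)/3) = S ω ^ 2 := by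
      intro ω
      rw [← Real.rpow_add' (abs_nonneg _) (by norm_num),
        show (2:ℝ)/3 + 4/3 = ((2:ℕ):ℝ) by norm_num, Real.rpow_natCast, ← abs_pow,
        abs_of_nonneg (by positivity)]
    have e2 : ∀ ω, (|S ω| ^ ((2:ℝ)/3)) ^ ((3:ℝ)/2) = |S ω| := by
      intro ω
      rw [← Real.rpow_mul (abs_nonneg _)]
      norm_num
    have e3 : ∀ ω, (|S ω| ^ ((4:ℝ)/3)) ^ ((3:ℝ)) = S ω ^ 4 := by
      intro ω
      rw [← Real.rpow_mul (abs_nonneg _),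
        show (4:ℝ)/3 * 3 = ((4:ℕ):ℝ) by norm_num, Real.rpow_natCast, ← abs_pow,
        abs_of_nonneg (by positivity)]
    simp_rw [e1, e2, e3] at key
    calc m2 ≤ (∫ ω, |S ω| ∂μ) ^ (1 / ((3:ℝ)/2)) * (∫ ω, S ω ^ 4 ∂μ) ^ (1/(3:ℝ)) := key
    _ = L ^ ((2:ℝ)/3) * m4 ^ ((1:ℝ)/3) := by norm_num; rfl
  -- positive part
  set T : Ω → ℝ := fun ω => max (S ω) 0 with hTdef
  have hT4 : MemLp T 4 μ := hS.pos_part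
  have hTnn : ∀ ω, 0 ≤ T ω := fun ω => le_max_right _ _
  have hiT : Integrable T μ := hT4.integrable (by norm_num)
  have hL2T : L = 2 * ∫ ω, T ω ∂μ := by
    have e : ∀ ω, |S ω| = 2 * T ω - S ω := by
      intro ω
      rcases le_or_gt 0 (S ω) with h | h
      · rw [abs_of_nonneg h, hTdef]; simp [max_eq_left h]; ring
      · rw [abs_of_neg h, hTdef]; simp [max_eq_right h.le]
    rw [hLdef]
    simp_rw [e]
    rw [integral_sub (hiT.const_mul 2) (hS.integrable (by norm_num)),
      integral_const_mul, hmean, sub_zero]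
  have hiT4 : Integrable (fun ω => T ω ^ 4) μ :=
    integrable_pow_of_memL4' hT4 le_rfl (by norm_num)
  have hT4le : ∫ ω, T ω ^ 4 ∂μ ≤ m4 := by
    refine integral_mono hiT4 hi4 fun ω => ?_
    rcases le_or_gt 0 (S ω) with h | h
    · simp [hTdef, max_eq_left h]
    · simp only [hTdef, max_eq_right h.le]
      have : (0:ℝ) ≤ S ω ^ 4 := by positivity
      simpa using this
  have hT4nn : 0 ≤ ∫ ω, T ω ^ 4 ∂μ := integral_nonneg fun ω => by positivity
  set a : ℝ := (μ A).toReal with hadef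
  have hann : 0 ≤ a := ENNReal.toReal_nonneg
  -- Hölder 2
  have hH2 : ∫ ω, T ω ∂μ ≤ m4 ^ ((1:ℝ)/4) * a ^ ((3:ℝ)/4) := by
    have hconj : ((4:ℝ)).HolderConjugate (4/3) := Real.holderConjugate_iff.mpr ⟨by norm_num, by norm_num⟩
    have hg2 : MemLp (A.indicator fun _ => (1:ℝ)) (ENNReal.ofReal ((4:ℝ)/3)) μ :=
      memLp_indicator_const _ hA 1 (Or.inr (measure_ne_top μ A))
    have hT4' : MemLp T (ENNReal.ofReal (4:ℝ)) μ := by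
      rw [show ENNReal.ofReal (4:ℝ) = 4 by norm_num]; exact hT4
    have key2 := integral_mul_le_Lp_mul_Lq_of_nonneg hconj (ae_of_all μ hTnn)
      (ae_of_all μ fun ω => Set.indicator_nonneg (fun _ _ => zero_le_one) ω) hT4' hg2
    have e1 : ∀ ω, T ω * (A.indicator (fun _ => (1:ℝ)) ω) = T ω := by
      intro ω
      by_cases hω : ω ∈ A
      · rw [Set.indicator_of_mem hω, mul_one]
      · rw [Set.indicator_of_notMem hω, mul_zero]
        have : S ω < 0 := not_le.mp hω
        rw [hTdef]; simp [max_eq_right this.le]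
    have e2 : ∀ ω, T ω ^ (4:ℝ) = T ω ^ (4:ℕ) := by
      intro ω
      rw [show (4:ℝ) = ((4:ℕ):ℝ) by norm_num, Real.rpow_natCast]
    have e3 : ∀ ω, (A.indicator (fun _ => (1:ℝ)) ω) ^ ((4:ℝ)/3)
        = A.indicator (fun _ => (1:ℝ)) ω := by
      intro ω
      by_cases hω : ω ∈ A
      · rw [Set.indicator_of_mem hω, Real.one_rpow]
      · rw [Set.indicator_of_notMem hω, Real.zero_rpow (by norm_num)]
    simp_rw [e1, e2, e3] at key2
    rw [integral_indicator_const (1:ℝ) hA, smul_eq_mul, mul_one] at key2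
    calc ∫ ω, T ω ∂μ
        ≤ (∫ ω, T ω ^ (4:ℕ) ∂μ) ^ (1/(4:ℝ)) * a ^ (1/((4:ℝ)/3)) := key2
      _ ≤ m4 ^ ((1:ℝ)/4) * a ^ ((3:ℝ)/4) := by
          rw [show 1/((4:ℝ)/3) = (3:ℝ)/4 by norm_num]
          exact mul_le_mul_of_nonneg_right
            (Real.rpow_le_rpow hT4nn hT4le (by norm_num))
            (Real.rpow_nonneg hann _)
  -- endgame arithmetic
  have hm4pos : 0 < m4 := by
    by_contra h
    push_neg at h
    have hm4z : m4 = 0 := le_antisymm h hm4nn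
    rw [hm4z, Real.zero_rpow (by norm_num : (1:ℝ)/3 ≠ 0), mul_zero] at hH1
    linarith
  have hB : L ≤ 2 * (m4 ^ ((1:ℝ)/4) * a ^ ((3:ℝ)/4)) := by
    rw [hL2T]; linarith
  have hB4 : L ^ 4 ≤ 16 * (m4 * a ^ 3) := by
    have h1 := pow_le_pow_left₀ hLnn hB 4
    have e : (2 * (m4 ^ ((1:ℝ)/4) * a ^ ((3:ℝ)/4))) ^ 4
        = 16 * ((m4 ^ ((1:ℝ)/4)) ^ (4:ℕ) * (a ^ ((3:ℝ)/4)) ^ (4:ℕ)) := by ring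
    rw [e, ← Real.rpow_natCast (m4 ^ ((1:ℝ)/4)) 4, ← Real.rpow_natCast (a ^ ((3:ℝ)/4)) 4,
      ← Real.rpow_mul hm4nn, ← Real.rpow_mul hann] at h1
    norm_num at h1
    linarith
  have hA3 : m2 ^ 3 ≤ L ^ 2 * m4 := by
    have h1 := pow_le_pow_left₀ hm2nn hH1 3
    have e : (L ^ ((2:ℝ)/3) * m4 ^ ((1:ℝ)/3)) ^ 3
        = (L ^ ((2:ℝ)/3)) ^ (3:ℕ) * (m4 ^ ((1:ℝ)/3)) ^ (3:ℕ) := by ring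
    rw [e, ← Real.rpow_natCast (L ^ ((2:ℝ)/3)) 3, ← Real.rpow_natCast (m4 ^ ((1:ℝ)/3)) 3,
      ← Real.rpow_mul hLnn, ← Real.rpow_mul hm4nn] at h1
    norm_num at h1
    linarith
  have c1 : m2 ^ 6 ≤ (L ^ 2 * m4) ^ 2 := by
    have := pow_le_pow_left₀ (by positivity : (0:ℝ) ≤ m2 ^ 3) hA3 2
    calc m2 ^ 6 = (m2 ^ 3) ^ 2 := by ring
      _ ≤ (L ^ 2 * m4) ^ 2 := this
  have c3 : (L ^ 2 * m4) ^ 2 ≤ 16 * (m4 * a ^ 3) * m4 ^ 2 := by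
    have : (L ^ 2 * m4) ^ 2 = L ^ 4 * m4 ^ 2 := by ring
    rw [this]
    exact mul_le_mul_of_nonneg_right hB4 (by positivity)
  have c6 : m4 ^ 3 ≤ (D * m2 ^ 2) ^ 3 := pow_le_pow_left₀ hm4nn hmom 3
  have hfin1 : (1:ℝ) ≤ 16 * D ^ 3 * a ^ 3 := by
    have key : m2 ^ 6 ≤ 16 * D ^ 3 * a ^ 3 * m2 ^ 6 := by
      calc m2 ^ 6 ≤ 16 * (m4 * a ^ 3) * m4 ^ 2 := le_trans c1 c3
        _ = 16 * m4 ^ 3 * a ^ 3 := by ring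
        _ ≤ 16 * (D * m2 ^ 2) ^ 3 * a ^ 3 := by
            exact mul_le_mul_of_nonneg_right
              (mul_le_mul_of_nonneg_left c6 (by norm_num)) (by positivity)
        _ = 16 * D ^ 3 * a ^ 3 * m2 ^ 6 := by ring
    nlinarith [pow_pos hm2pos 6]
  have hfin : 1 / (16 ^ ((1:ℝ)/3) * D) ≤ a := by
    refine le_of_pow_le_pow_left₀ (n := 3) (by norm_num) hann ?_
    have e : (1 / (16 ^ ((1:ℝ)/3) * D)) ^ 3
        = 1 / ((16 ^ ((1:ℝ)/3)) ^ (3:ℕ) * D ^ 3) := by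
      rw [div_pow, one_pow, mul_pow]
    rw [e, ← Real.rpow_natCast ((16:ℝ) ^ ((1:ℝ)/3)) 3,
      ← Real.rpow_mul (by norm_num : (0:ℝ) ≤ 16)]
    norm_num
    have hc : (D ^ 3)⁻¹ * D ^ 3 = 1 := inv_mul_cancel₀ (ne_of_gt (pow_pos hD0 3))
    have h2 : (D ^ 3)⁻¹ ≤ 16 * a ^ 3 := by
      calc (D ^ 3)⁻¹ = (D ^ 3)⁻¹ * 1 := (mul_one _).symm
        _ ≤ (D ^ 3)⁻¹ * (16 * D ^ 3 * a ^ 3) :=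
            mul_le_mul_of_nonneg_left hfin1 (by positivity)
        _ = 16 * a ^ 3 * ((D ^ 3)⁻¹ * D ^ 3) := by ring
        _ = 16 * a ^ 3 := by rw [hc, mul_one]
    linarith
  calc ENNReal.ofReal (1 / (16 ^ ((1:ℝ)/3) * D)) ≤ ENNReal.ofReal a :=
        ENNReal.ofReal_le_ofReal hfin
    _ = μ A := ENNReal.ofReal_toReal (measure_ne_top μ A)

end PZaux

/-- Lemma 2.2 (Paley–Zygmund type): if `Z₁, ..., Zₙ` are independent mean-zero random variables
with `E Zᵢ⁴ ≤ C (E Zᵢ²)²` for some `C ≥ 1`, then `P(Z₁ + ⋯ + Zₙ ≥ 0) ≥ 1/(16^{1/3} max{C,3})`. -/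
theorem prob_sum_nonneg_ge
    {Ω : Type*} [MeasurableSpace Ω] (μ : Measure Ω) [IsProbabilityMeasure μ]
    (n : ℕ) (Z : Fin n → Ω → ℝ)
    (hZmeas : ∀ i, Measurable (Z i))
    (hindep : iIndepFun Z μ)
    (hL4 : ∀ i, MemLp (Z i) 4 μ)
    (hmean : ∀ i, ∫ ω, Z i ω ∂μ = 0)
    (C : ℝ) (hC : 1 ≤ C)
    (hmom : ∀ i, ∫ ω, Z i ω ^ 4 ∂μ ≤ C * (∫ ω, Z i ω ^ 2 ∂μ) ^ 2) :
    ENNReal.ofReal (1 / (16 ^ ((1 : ℝ) / 3) * max C 3)) ≤ μ {ω | 0 ≤ ∑ i, Z i ω} := by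
  set D : ℝ := max C 3 with hDdef
  have hD3 : (3:ℝ) ≤ D := le_max_right _ _
  have hCD : C ≤ D := le_max_left _ _
  have hmom' : ∀ i, ∫ ω, Z i ω ^ 4 ∂μ ≤ D * (∫ ω, Z i ω ^ 2 ∂μ) ^ 2 := fun i =>
    (hmom i).trans (mul_le_mul_of_nonneg_right hCD (sq_nonneg _))
  obtain ⟨h0, h2, h4⟩ := sum_moments hZmeas hindep hL4 hmean D hD3 hmom' Finset.univ
  have hSL4 : MemLp (fun ω => ∑ i, Z i ω) 4 μ :=
    memLp_finset_sum _ (fun i _ => hL4 i)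
  have hSmeas : Measurable (fun ω => ∑ i, Z i ω) :=
    Finset.measurable_sum _ (fun i _ => hZmeas i)
  have h4' : ∫ ω, (∑ i, Z i ω) ^ 4 ∂μ ≤ D * (∫ ω, (∑ i, Z i ω) ^ 2 ∂μ) ^ 2 := by
    rw [h2]; exact h4
  exact core hSmeas hSL4 h0 (le_trans (by norm_num) hD3) h4'
end

section
/- Let Y_1, ..., Y_n be independent exponential random variables with mean 1 and let a_1, ..., a_n be positive reals. Then P(Σ_{i=1}^n a_i^2 Y_i ≥ Σ_{i=1}^n a_i^2) ≥ 1/(9 · 16^{1/3}). -/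
open MeasureTheory ProbabilityTheory

section Aux

open Real Set Finset
open scoped ENNReal NNReal


lemma exp_dens : expMeasure 1 =
    volume.withDensity (fun x => ENNReal.ofReal ((Ici (0:ℝ)).indicator (fun t => exp (-t)) x)) := by
  show volume.withDensity (gammaPDF 1 1) = _
  congr 1
  funext x
  rw [gammaPDF_eq]
  by_cases hx : (0:ℝ) ≤ x
  · simp [indicator, hx, Real.Gamma_one]
  · simp [indicator, hx]

lemma exp_moment_aux (k : ℕ) :
    Integrable (fun x : ℝ => x ^ k) (expMeasure 1) ∧
      ∫ x, x ^ k ∂(expMeasure 1) = Nat.factorial k := by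
  have hconv : IntegrableOn (fun x : ℝ => exp (-x) * x ^ k) (Ioi 0) := by
    have := Real.GammaIntegral_convergent (s := k + 1) (by positivity)
    simpa [Real.rpow_natCast] using this
  have hind : Integrable ((Ici (0:ℝ)).indicator (fun x => exp (-x) * x ^ k)) volume := by
    rw [integrable_indicator_iff measurableSet_Ici]
    rwa [integrableOn_Ici_iff_integrableOn_Ioi]
  have hmeas : Measurable (fun x : ℝ => ((Ici (0:ℝ)).indicator (fun t => exp (-t)) x).toNNReal) := by
    apply Measurable.real_toNNReal
    exact (measurable_exp.comp measurable_neg).indicator measurableSet_Ici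
  have heqfun : (fun x : ℝ => (((Ici (0:ℝ)).indicator (fun t => exp (-t)) x).toNNReal) • x ^ k)
      = (fun x => (Ici (0:ℝ)).indicator (fun t => exp (-t)) x * x ^ k) := by
    funext x
    rw [NNReal.smul_def, smul_eq_mul, Real.coe_toNNReal]
    exact indicator_nonneg (fun t _ => (exp_pos _).le) x
  have hindic : ∀ x : ℝ, (Ici (0:ℝ)).indicator (fun t => exp (-t)) x * x ^ k
      = (Ici (0:ℝ)).indicator (fun t => exp (-t) * t ^ k) x := by
    intro x; by_cases hx : x ∈ Ici (0:ℝ) <;> simp [indicator, hx, Set.mem_Ici] at * <;> simp [indicator, hx]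
  constructor
  · rw [exp_dens]
    rw [show (fun x => ENNReal.ofReal ((Ici (0:ℝ)).indicator (fun t => exp (-t)) x))
        = (fun x => (((Ici (0:ℝ)).indicator (fun t => exp (-t)) x).toNNReal : ℝ≥0∞)) from rfl]
    rw [integrable_withDensity_iff_integrable_smul hmeas]
    rw [heqfun]
    simp_rw [hindic]
    exact hind
  · rw [exp_dens]
    rw [show (fun x => ENNReal.ofReal ((Ici (0:ℝ)).indicator (fun t => exp (-t)) x))
        = (fun x => (((Ici (0:ℝ)).indicator (fun t => exp (-t)) x).toNNReal : ℝ≥0∞)) from rfl]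
    rw [integral_withDensity_eq_integral_smul hmeas]
    rw [heqfun]
    simp_rw [hindic]
    rw [integral_indicator measurableSet_Ici, integral_Ici_eq_integral_Ioi]
    have hg := Real.Gamma_eq_integral (s := k + 1) (by positivity)
    rw [show ((k:ℝ) + 1 - 1) = (k:ℝ) by ring] at hg
    simp_rw [Real.rpow_natCast] at hg
    rw [← hg]
    exact_mod_cast Real.Gamma_nat_eq_factorial k

section Centered

local notation "ν" => expMeasure 1

lemma exp_centered_int : ∀ k, 1 ≤ k → k ≤ 4 →
    Integrable (fun x : ℝ => (x - 1) ^ k) ν := by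
  have i1 := (exp_moment_aux 1).1
  have i2 := (exp_moment_aux 2).1
  have i3 := (exp_moment_aux 3).1
  have i4 := (exp_moment_aux 4).1
  haveI : IsProbabilityMeasure ν := isProbabilityMeasure_expMeasure zero_lt_one
  intro k hk1 hk4
  interval_cases k
  · rw [show (fun x : ℝ => (x - 1) ^ 1) = fun x => x ^ 1 - 1 from funext fun x => by ring]
    exact i1.sub (integrable_const 1)
  · rw [show (fun x : ℝ => (x - 1) ^ 2) = fun x => x ^ 2 - 2 * x ^ 1 + 1
      from funext fun x => by ring]
    have h : Integrable (fun x : ℝ => x ^ 2 - 2 * x ^ 1) ν := by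
      simpa [Pi.sub_def, Pi.add_def] using i2.sub (i1.const_mul 2)
    simpa using h.add (integrable_const 1)
  · rw [show (fun x : ℝ => (x - 1) ^ 3) = fun x => x ^ 3 - 3 * x ^ 2 + (3 * x ^ 1 - 1)
      from funext fun x => by ring]
    have h1 : Integrable (fun x : ℝ => x ^ 3 - 3 * x ^ 2) ν := by
      simpa [Pi.sub_def, Pi.add_def] using i3.sub (i2.const_mul 3)
    have h2 : Integrable (fun x : ℝ => 3 * x ^ 1 - 1) ν := by
      simpa [Pi.sub_def, Pi.add_def] using (i1.const_mul 3).sub (integrable_const 1)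
    simpa [Pi.sub_def, Pi.add_def] using h1.add h2
  · rw [show (fun x : ℝ => (x - 1) ^ 4)
      = fun x => x ^ 4 - 4 * x ^ 3 + (6 * x ^ 2 - 4 * x ^ 1 + 1) from funext fun x => by ring]
    have h1 : Integrable (fun x : ℝ => x ^ 4 - 4 * x ^ 3) ν := by
      simpa [Pi.sub_def, Pi.add_def] using i4.sub (i3.const_mul 4)
    have h2 : Integrable (fun x : ℝ => 6 * x ^ 2 - 4 * x ^ 1 + 1) ν := by
      have := ((i2.const_mul 6).sub (i1.const_mul 4))
      simpa [Pi.sub_def, Pi.add_def] using this.add (integrable_const 1)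
    simpa [Pi.sub_def, Pi.add_def] using h1.add h2

lemma exp_centered_moments :
    (∫ x, (x - 1) ^ 1 ∂ν) = 0 ∧ (∫ x, (x - 1) ^ 2 ∂ν) = 1 ∧ (∫ x, (x - 1) ^ 4 ∂ν) = 9 := by
  obtain ⟨i1, m1⟩ := exp_moment_aux 1
  obtain ⟨i2, m2⟩ := exp_moment_aux 2
  obtain ⟨i3, m3⟩ := exp_moment_aux 3
  obtain ⟨i4, m4⟩ := exp_moment_aux 4
  haveI : IsProbabilityMeasure ν := isProbabilityMeasure_expMeasure zero_lt_one
  have hconst : ∫ _x, (1:ℝ) ∂ν = 1 := by simp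
  refine ⟨?_, ?_, ?_⟩
  · rw [show (fun x : ℝ => (x - 1) ^ 1) = fun x => x ^ 1 - 1 from funext fun x => by ring,
      integral_sub i1 (integrable_const 1), m1, hconst]
    norm_num [Nat.factorial]
  · rw [show (fun x : ℝ => (x - 1) ^ 2) = fun x => x ^ 2 - 2 * x ^ 1 + 1
      from funext fun x => by ring]
    have h : Integrable (fun x : ℝ => x ^ 2 - 2 * x ^ 1) ν := by
      simpa [Pi.sub_def, Pi.add_def] using i2.sub (i1.const_mul 2)
    rw [integral_add h (integrable_const 1), integral_sub i2 (i1.const_mul 2),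
      integral_const_mul, m1, m2, hconst]
    norm_num [Nat.factorial]
  · rw [show (fun x : ℝ => (x - 1) ^ 4)
      = fun x => x ^ 4 - 4 * x ^ 3 + (6 * x ^ 2 - 4 * x ^ 1 + 1) from funext fun x => by ring]
    have h1 : Integrable (fun x : ℝ => x ^ 4 - 4 * x ^ 3) ν := by
      simpa [Pi.sub_def, Pi.add_def] using i4.sub (i3.const_mul 4)
    have h2a : Integrable (fun x : ℝ => 6 * x ^ 2 - 4 * x ^ 1) ν := by
      simpa [Pi.sub_def, Pi.add_def] using (i2.const_mul 6).sub (i1.const_mul 4)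
    have h2 : Integrable (fun x : ℝ => 6 * x ^ 2 - 4 * x ^ 1 + 1) ν := by
      simpa using h2a.add (integrable_const 1)
    rw [integral_add h1 h2, integral_sub i4 (i3.const_mul 4),
      integral_add h2a (integrable_const 1),
      integral_sub (i2.const_mul 6) (i1.const_mul 4),
      integral_const_mul, integral_const_mul, integral_const_mul, m1, m2, m3, m4, hconst]
    norm_num [Nat.factorial]




lemma fourth_moment_sum {Ω : Type*} [MeasurableSpace Ω] (μ : Measure Ω) [IsProbabilityMeasure μ]
    {n : ℕ} (f : Fin n → Ω → ℝ) (hmeas : ∀ i, Measurable (f i))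
    (hindep : iIndepFun f μ)
    (v : Fin n → ℝ)
    (hint : ∀ i, ∀ k, 1 ≤ k → k ≤ 4 → Integrable (fun ω => f i ω ^ k) μ)
    (h1 : ∀ i, ∫ ω, f i ω ∂μ = 0)
    (h2 : ∀ i, ∫ ω, f i ω ^ 2 ∂μ = v i)
    (h4 : ∀ i, ∫ ω, f i ω ^ 4 ∂μ ≤ 9 * v i ^ 2)
    (hv : ∀ i, 0 ≤ v i)
    (s : Finset (Fin n)) :
    (∀ k, 1 ≤ k → k ≤ 4 → Integrable (fun ω => (∑ i ∈ s, f i ω) ^ k) μ) ∧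
    (∫ ω, (∑ i ∈ s, f i ω) ∂μ = 0) ∧
    (∫ ω, (∑ i ∈ s, f i ω) ^ 2 ∂μ = ∑ i ∈ s, v i) ∧
    (∫ ω, (∑ i ∈ s, f i ω) ^ 4 ∂μ ≤ 9 * (∑ i ∈ s, v i) ^ 2) := by
  classical
  induction s using Finset.induction_on with
  | empty =>
      refine ⟨fun k hk1 hk4 => ?_, by simp, by simp, by norm_num⟩
      simp only [Finset.sum_empty, zero_pow (Nat.one_le_iff_ne_zero.mp hk1)]
      exact integrable_const 0
  | @insert j s hj ih =>
      obtain ⟨ihint, ihE1, ihE2, ihE4⟩ := ih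
      set S : Ω → ℝ := fun ω => ∑ i ∈ s, f i ω with hSdef
      have hsum : ∀ ω, (∑ i ∈ insert j s, f i ω) = f j ω + S ω := by
        intro ω; rw [Finset.sum_insert hj]
      have hSmeas : Measurable S := by
        apply Finset.measurable_sum
        exact fun i _ => hmeas i
      have hSg : IndepFun S (f j) μ := by
        have h := hindep.indepFun_finset_sum_of_notMem hmeas hj
        have : (∑ i ∈ s, f i) = S := by funext ω; simp [hSdef]
        rwa [this] at h
      have hpq : ∀ p q : ℕ, IndepFun (fun ω => S ω ^ p) (fun ω => f j ω ^ q) μ := by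
        intro p q
        exact hSg.comp (measurable_id.pow_const p) (measurable_id.pow_const q)
      have hintS : ∀ k, 1 ≤ k → k ≤ 4 → Integrable (fun ω => S ω ^ k) μ := ihint
      have hcrossInt : ∀ p q : ℕ, 1 ≤ p → p ≤ 4 → 1 ≤ q → q ≤ 4 →
          Integrable (fun ω => S ω ^ p * f j ω ^ q) μ := by
        intro p q hp1 hp4 hq1 hq4
        exact (hpq p q).integrable_mul (hintS p hp1 hp4) (hint j q hq1 hq4)
      have hcrossE : ∀ p q : ℕ, 1 ≤ p → p ≤ 4 → 1 ≤ q → q ≤ 4 →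
          ∫ ω, S ω ^ p * f j ω ^ q ∂μ = (∫ ω, S ω ^ p ∂μ) * ∫ ω, f j ω ^ q ∂μ := by
        intro p q hp1 hp4 hq1 hq4
        exact (hpq p q).integral_mul_eq_mul_integral (hintS p hp1 hp4).aestronglyMeasurable (hint j q hq1 hq4).aestronglyMeasurable
      have hgE1 : ∫ ω, f j ω ^ 1 ∂μ = 0 := by simpa using h1 j
      have hSE1 : ∫ ω, S ω ^ 1 ∂μ = 0 := by simpa using ihE1
      -- integrability of all powers of the new sum
      have hI1 : Integrable (fun ω => f j ω + S ω) μ := by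
        have := (hint j 1 le_rfl (by norm_num)).add (hintS 1 le_rfl (by norm_num))
        simpa [Pi.sub_def, Pi.add_def] using this
      have e2 : (fun ω => (f j ω + S ω) ^ 2)
          = fun ω => S ω ^ 2 + 2 * (S ω ^ 1 * f j ω ^ 1) + f j ω ^ 2 :=
        funext fun ω => by ring
      have hI2 : Integrable (fun ω => (f j ω + S ω) ^ 2) μ := by
        rw [e2]
        exact ((hintS 2 (by norm_num) (by norm_num)).add
          ((hcrossInt 1 1 le_rfl (by norm_num) le_rfl (by norm_num)).const_mul 2)).add
          (hint j 2 (by norm_num) (by norm_num))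
      have e3 : (fun ω => (f j ω + S ω) ^ 3)
          = fun ω => S ω ^ 3 + 3 * (S ω ^ 2 * f j ω ^ 1) + (3 * (S ω ^ 1 * f j ω ^ 2) + f j ω ^ 3) :=
        funext fun ω => by ring
      have hI3 : Integrable (fun ω => (f j ω + S ω) ^ 3) μ := by
        rw [e3]
        exact ((hintS 3 (by norm_num) (by norm_num)).add
          ((hcrossInt 2 1 (by norm_num) (by norm_num) le_rfl (by norm_num)).const_mul 3)).add
          (((hcrossInt 1 2 le_rfl (by norm_num) (by norm_num) (by norm_num)).const_mul 3).add
            (hint j 3 (by norm_num) (by norm_num)))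
      have e4 : (fun ω => (f j ω + S ω) ^ 4)
          = fun ω => S ω ^ 4 + 4 * (S ω ^ 3 * f j ω ^ 1) +
              (6 * (S ω ^ 2 * f j ω ^ 2) + (4 * (S ω ^ 1 * f j ω ^ 3) + f j ω ^ 4)) :=
        funext fun ω => by ring
      have hI4 : Integrable (fun ω => (f j ω + S ω) ^ 4) μ := by
        rw [e4]
        exact ((hintS 4 (by norm_num) (by norm_num)).add
          ((hcrossInt 3 1 (by norm_num) (by norm_num) le_rfl (by norm_num)).const_mul 4)).add
          (((hcrossInt 2 2 (by norm_num) (by norm_num) (by norm_num) (by norm_num)).const_mul 6).add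
            (((hcrossInt 1 3 le_rfl (by norm_num) (by norm_num) (by norm_num)).const_mul 4).add
              (hint j 4 (by norm_num) (by norm_num))))
      -- expectations
      have hfj1 : Integrable (f j) μ := by simpa using hint j 1 le_rfl (by norm_num)
      have hS1 : Integrable S μ := by simpa using hintS 1 le_rfl (by norm_num)
      have hMnn : 0 ≤ ∑ i ∈ s, v i := Finset.sum_nonneg fun i _ => hv i
      have E1 : ∫ ω, (f j ω + S ω) ∂μ = 0 := by
        rw [integral_add hfj1 hS1, h1 j]
        simpa using ihE1
      have E2 : ∫ ω, (f j ω + S ω) ^ 2 ∂μ = v j + ∑ i ∈ s, v i := by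
        have hA := hintS 2 (by norm_num) (by norm_num)
        have hB := (hcrossInt 1 1 le_rfl (by norm_num) le_rfl (by norm_num)).const_mul 2
        have hAB : Integrable (fun ω => S ω ^ 2 + 2 * (S ω ^ 1 * f j ω ^ 1)) μ := by
          simpa [Pi.sub_def, Pi.add_def] using hA.add hB
        rw [e2, integral_add hAB (hint j 2 (by norm_num) (by norm_num)),
          integral_add hA hB,
          integral_const_mul, hcrossE 1 1 le_rfl (by norm_num) le_rfl (by norm_num),
          hSE1, hgE1]
        have : ∫ ω, S ω ^ 2 ∂μ = ∑ i ∈ s, v i := ihE2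
        rw [this, h2 j]
        ring
      have E4 : ∫ ω, (f j ω + S ω) ^ 4 ∂μ ≤ 9 * (v j + ∑ i ∈ s, v i) ^ 2 := by
        have hA := hintS 4 (by norm_num) (by norm_num)
        have hB := (hcrossInt 3 1 (by norm_num) (by norm_num) le_rfl (by norm_num)).const_mul 4
        have hC := (hcrossInt 2 2 (by norm_num) (by norm_num) (by norm_num) (by norm_num)).const_mul 6
        have hD := (hcrossInt 1 3 le_rfl (by norm_num) (by norm_num) (by norm_num)).const_mul 4
        have hE := hint j 4 (by norm_num) (by norm_num)
        have hAB : Integrable (fun ω => S ω ^ 4 + 4 * (S ω ^ 3 * f j ω ^ 1)) μ := by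
          simpa [Pi.sub_def, Pi.add_def] using hA.add hB
        have hDE : Integrable (fun ω => 4 * (S ω ^ 1 * f j ω ^ 3) + f j ω ^ 4) μ := by
          simpa [Pi.sub_def, Pi.add_def] using hD.add hE
        have hCDE : Integrable (fun ω => 6 * (S ω ^ 2 * f j ω ^ 2) +
            (4 * (S ω ^ 1 * f j ω ^ 3) + f j ω ^ 4)) μ := by
          simpa [Pi.sub_def, Pi.add_def] using hC.add hDE
        rw [e4, integral_add hAB hCDE, integral_add hA hB, integral_add hC hDE,
          integral_add hD hE,
          integral_const_mul, integral_const_mul, integral_const_mul,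
          hcrossE 3 1 (by norm_num) (by norm_num) le_rfl (by norm_num),
          hcrossE 2 2 (by norm_num) (by norm_num) (by norm_num) (by norm_num),
          hcrossE 1 3 le_rfl (by norm_num) (by norm_num) (by norm_num),
          hSE1, hgE1]
        have h2S : ∫ ω, S ω ^ 2 ∂μ = ∑ i ∈ s, v i := ihE2
        have h4S : ∫ ω, S ω ^ 4 ∂μ ≤ 9 * (∑ i ∈ s, v i) ^ 2 := ihE4
        rw [h2S, h2 j]
        nlinarith [h4 j, hv j, hMnn, mul_nonneg (hv j) hMnn]
      refine ⟨?_, ?_, ?_, ?_⟩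
      · intro k hk1 hk4
        have hfun : (fun ω => (∑ i ∈ insert j s, f i ω) ^ k) = fun ω => (f j ω + S ω) ^ k :=
          funext fun ω => by rw [hsum]
        rw [hfun]
        interval_cases k
        exacts [by simpa using hI1, hI2, hI3, hI4]
      · simp_rw [hsum]; exact E1
      · simp_rw [hsum, E2, Finset.sum_insert hj]
      · simp_rw [hsum]
        calc ∫ ω, (f j ω + S ω) ^ 4 ∂μ ≤ 9 * (v j + ∑ i ∈ s, v i) ^ 2 := E4
        _ = 9 * (∑ i ∈ insert j s, v i) ^ 2 := by rw [Finset.sum_insert hj]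


lemma prob_nonneg_of_moments {Ω : Type*} [MeasurableSpace Ω] (μ : Measure Ω)
    [IsProbabilityMeasure μ] (S : Ω → ℝ) (hSmeas : Measurable S)
    (hI1 : Integrable S μ) (hI4 : Integrable (fun ω => S ω ^ 4) μ)
    (hE1 : ∫ ω, S ω ∂μ = 0)
    {m2 m4 : ℝ} (hE2 : ∫ ω, S ω ^ 2 ∂μ = m2) (hE4 : ∫ ω, S ω ^ 4 ∂μ = m4)
    (hm2 : 0 < m2) (hm4 : m4 ≤ 9 * m2 ^ 2) :
    ENNReal.ofReal (1 / (9 * 16 ^ ((1 : ℝ) / 3))) ≤ μ {ω | 0 ≤ S ω} := by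
  have hSae : AEStronglyMeasurable S μ := hSmeas.aestronglyMeasurable
  -- |x|^(even real power) facts
  have habs4 : ∀ x : ℝ, |x| ^ (4:ℝ) = x ^ (4:ℕ) := by
    intro x
    rw [show (4:ℝ) = ((4:ℕ):ℝ) by norm_num, Real.rpow_natCast, ← abs_pow,
      abs_of_nonneg (by positivity)]
  have habs2 : ∀ x : ℝ, |x| ^ (2:ℝ) = x ^ (2:ℕ) := by
    intro x
    rw [show (2:ℝ) = ((2:ℕ):ℝ) by norm_num, Real.rpow_natCast, sq_abs]
  -- MemLp facts
  have hL4 : MemLp S 4 μ := by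
    rw [← memLp_norm_rpow_iff (q := 4) hSae (by norm_num) (by norm_num)]
    rw [ENNReal.div_self (by norm_num) (by norm_num), memLp_one_iff_integrable]
    have : (fun x : Ω => ‖S x‖ ^ (4:ℝ≥0∞).toReal) = fun ω => S ω ^ 4 := by
      funext ω
      rw [show ((4:ℝ≥0∞).toReal) = (4:ℝ) by norm_num, Real.norm_eq_abs, habs4]
    rw [this]; exact hI4
  have hL1 : MemLp S 1 μ := hL4.mono_exponent (by norm_num)
  set A : Set Ω := {ω | 0 ≤ S ω} with hAdef
  have hA : MeasurableSet A := measurableSet_le measurable_const hSmeas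
  set p : ℝ := (μ A).toReal with hpdef
  have hp0 : 0 ≤ p := ENNReal.toReal_nonneg
  have hm40 : 0 ≤ m4 := by rw [← hE4]; exact integral_nonneg fun ω => by positivity
  -- pos part
  set Ip : ℝ := ∫ ω, max (S ω) 0 ∂μ with hIpdef
  have hIp0 : 0 ≤ Ip := integral_nonneg fun ω => le_max_right _ _
  have hintpos : Integrable (fun ω => max (S ω) 0) μ := hI1.pos_part
  have hintneg : Integrable (fun ω => max (-S ω) 0) μ := hI1.neg.pos_part
  have habsint : Integrable (fun ω => |S ω|) μ := hI1.abs
  have habs_eq : ∫ ω, |S ω| ∂μ = 2 * Ip := by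
    have e1 : ∫ ω, (max (S ω) 0 - max (-S ω) 0) ∂μ = 0 := by
      have : (fun ω => max (S ω) 0 - max (-S ω) 0) = S := by
        funext ω; exact max_zero_sub_max_neg_zero_eq_self (S ω)
      rw [this, hE1]
    have e2 : ∫ ω, (max (S ω) 0 + max (-S ω) 0) ∂μ = ∫ ω, |S ω| ∂μ := by
      congr 1; funext ω; exact max_zero_add_max_neg_zero_eq_abs_self (S ω)
    rw [integral_sub hintpos hintneg] at e1
    rw [integral_add hintpos hintneg] at e2
    rw [← e2]; unfold Ip; linarith
  -- Hölder 2 : Ip ≤ m4^(1/4) * p^(3/4)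
  have holder2 : Ip ≤ m4 ^ ((1:ℝ)/4) * p ^ ((3:ℝ)/4) := by
    have hconj : (4:ℝ).HolderConjugate (4/3) := Real.holderConjugate_iff.mpr ⟨by norm_num, by norm_num⟩
    have hfLp : MemLp (fun ω => |S ω|) (ENNReal.ofReal 4) μ := by
      rw [show ENNReal.ofReal (4:ℝ) = 4 by norm_num]
      exact hL4.abs
    have hgLp : MemLp (A.indicator fun _ => (1:ℝ)) (ENNReal.ofReal (4/3)) μ :=
      memLp_indicator_const _ hA 1 (Or.inr (measure_ne_top μ A))
    have H := integral_mul_le_Lp_mul_Lq_of_nonneg hconj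
      (Filter.Eventually.of_forall fun ω => abs_nonneg _)
      (Filter.Eventually.of_forall fun ω => Set.indicator_nonneg (fun _ _ => zero_le_one) ω)
      hfLp hgLp
    have e1 : ∫ ω, |S ω| * A.indicator (fun _ => (1:ℝ)) ω ∂μ = Ip := by
      unfold Ip; congr 1; funext ω
      by_cases hω : ω ∈ A
      · rw [Set.indicator_of_mem hω, mul_one, abs_of_nonneg hω, max_eq_left hω]
      · rw [Set.indicator_of_notMem hω, mul_zero]
        have : S ω < 0 := not_le.mp hω
        rw [max_eq_right this.le]
    have e2 : ∫ ω, |S ω| ^ (4:ℝ) ∂μ = m4 := by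
      simp_rw [habs4]; exact hE4
    have e3 : ∫ ω, (A.indicator (fun _ => (1:ℝ)) ω) ^ ((4:ℝ)/3) ∂μ = p := by
      have : (fun ω => (A.indicator (fun _ => (1:ℝ)) ω) ^ ((4:ℝ)/3))
          = A.indicator (fun _ => (1:ℝ)) := by
        funext ω
        by_cases hω : ω ∈ A
        · rw [Set.indicator_of_mem hω]; exact Real.one_rpow _
        · rw [Set.indicator_of_notMem hω]; exact Real.zero_rpow (by norm_num)
      rw [this, integral_indicator_const _ hA, smul_eq_mul, mul_one]; rfl
    rw [e1, e2, e3] at H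
    convert H using 2 <;> norm_num
  -- Hölder 1 : m2 ≤ (2 Ip)^(2/3) * m4^(1/3)
  have holder1 : m2 ≤ (2 * Ip) ^ ((2:ℝ)/3) * m4 ^ ((1:ℝ)/3) := by
    have hconj : ((3:ℝ)/2).HolderConjugate 3 := Real.holderConjugate_iff.mpr ⟨by norm_num, by norm_num⟩
    have hfLp : MemLp (fun ω => |S ω| ^ ((2:ℝ)/3)) (ENNReal.ofReal (3/2)) μ := by
      have h := (memLp_norm_rpow_iff (p := 1) (q := ENNReal.ofReal (2/3)) hSae
        (by simp) (by simp)).mpr hL1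
      have hq : (ENNReal.ofReal ((2:ℝ)/3)).toReal = (2:ℝ)/3 :=
        ENNReal.toReal_ofReal (by norm_num)
      have hdiv : (1:ℝ≥0∞) / ENNReal.ofReal ((2:ℝ)/3) = ENNReal.ofReal ((3:ℝ)/2) := by
        rw [one_div, ← ENNReal.ofReal_inv_of_pos (by norm_num)]
        norm_num
      rw [hq, hdiv] at h
      simpa [Real.norm_eq_abs] using h
    have hgLp : MemLp (fun ω => |S ω| ^ ((4:ℝ)/3)) (ENNReal.ofReal 3) μ := by
      have h := (memLp_norm_rpow_iff (p := 4) (q := ENNReal.ofReal (4/3)) hSae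
        (by simp) (by simp)).mpr hL4
      have hq : (ENNReal.ofReal ((4:ℝ)/3)).toReal = (4:ℝ)/3 :=
        ENNReal.toReal_ofReal (by norm_num)
      have hdiv : (4:ℝ≥0∞) / ENNReal.ofReal ((4:ℝ)/3) = ENNReal.ofReal (3:ℝ) := by
        rw [show (4:ℝ≥0∞) = ENNReal.ofReal (4:ℝ) by norm_num,
          ← ENNReal.ofReal_div_of_pos (by norm_num)]
        norm_num
      rw [hq, hdiv] at h
      simpa [Real.norm_eq_abs] using h
    have H := integral_mul_le_Lp_mul_Lq_of_nonneg hconj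
      (Filter.Eventually.of_forall fun ω => Real.rpow_nonneg (abs_nonneg _) _)
      (Filter.Eventually.of_forall fun ω => Real.rpow_nonneg (abs_nonneg _) _)
      hfLp hgLp
    have e1 : ∫ ω, |S ω| ^ ((2:ℝ)/3) * |S ω| ^ ((4:ℝ)/3) ∂μ = m2 := by
      rw [← hE2]; congr 1; funext ω
      rw [← Real.rpow_add' (abs_nonneg _) (by norm_num)]
      rw [show (2:ℝ)/3 + 4/3 = 2 by norm_num, habs2]
    have e2 : ∫ ω, (|S ω| ^ ((2:ℝ)/3)) ^ ((3:ℝ)/2) ∂μ = 2 * Ip := by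
      rw [← habs_eq]; congr 1; funext ω
      rw [← Real.rpow_mul (abs_nonneg _)]
      norm_num
    have e3 : ∫ ω, (|S ω| ^ ((4:ℝ)/3)) ^ (3:ℝ) ∂μ = m4 := by
      rw [← hE4]; congr 1; funext ω
      rw [← Real.rpow_mul (abs_nonneg _)]
      rw [show (4:ℝ)/3 * 3 = 4 by norm_num, habs4]
    rw [e1, e2, e3] at H
    convert H using 2 <;> norm_num
  -- chain
  have hchain : m2 ≤ 2 ^ ((2:ℝ)/3) * m4 ^ ((1:ℝ)/2) * p ^ ((1:ℝ)/2) := by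
    have step1 : (2 * Ip) ^ ((2:ℝ)/3) ≤ (2 * (m4 ^ ((1:ℝ)/4) * p ^ ((3:ℝ)/4))) ^ ((2:ℝ)/3) := by
      apply Real.rpow_le_rpow (by linarith) (by linarith) (by norm_num)
    have step2 : (2 * (m4 ^ ((1:ℝ)/4) * p ^ ((3:ℝ)/4))) ^ ((2:ℝ)/3)
        = 2 ^ ((2:ℝ)/3) * m4 ^ ((1:ℝ)/6) * p ^ ((1:ℝ)/2) := by
      rw [Real.mul_rpow (by norm_num) (by positivity),
        Real.mul_rpow (by positivity) (by positivity),
        ← Real.rpow_mul hm40, ← Real.rpow_mul hp0]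
      norm_num
      ring
    have step3 : m4 ^ ((1:ℝ)/6) * m4 ^ ((1:ℝ)/3) = m4 ^ ((1:ℝ)/2) := by
      rw [← Real.rpow_add' hm40 (by norm_num)]
      norm_num
    calc m2 ≤ (2 * Ip) ^ ((2:ℝ)/3) * m4 ^ ((1:ℝ)/3) := holder1
      _ ≤ (2 * (m4 ^ ((1:ℝ)/4) * p ^ ((3:ℝ)/4))) ^ ((2:ℝ)/3) * m4 ^ ((1:ℝ)/3) := by
          apply mul_le_mul_of_nonneg_right step1 (Real.rpow_nonneg hm40 _)
      _ = 2 ^ ((2:ℝ)/3) * m4 ^ ((1:ℝ)/2) * p ^ ((1:ℝ)/2) := by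
          rw [step2, ← step3]; ring
  -- square it
  have hsq : m2 ^ 2 ≤ 2 ^ ((4:ℝ)/3) * m4 * p := by
    have h1 : m2 ^ 2 ≤ (2 ^ ((2:ℝ)/3) * m4 ^ ((1:ℝ)/2) * p ^ ((1:ℝ)/2)) ^ 2 :=
      pow_le_pow_left₀ hm2.le hchain 2
    have hsqr : ∀ x : ℝ, 0 ≤ x → (x ^ ((1:ℝ)/2)) ^ (2:ℕ) = x := by
      intro x hx
      rw [← Real.rpow_natCast (x ^ ((1:ℝ)/2)) 2, ← Real.rpow_mul hx]
      norm_num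
    have h2 : (2 ^ ((2:ℝ)/3) * m4 ^ ((1:ℝ)/2) * p ^ ((1:ℝ)/2)) ^ (2:ℕ)
        = 2 ^ ((4:ℝ)/3) * m4 * p := by
      rw [mul_pow, mul_pow, hsqr m4 hm40, hsqr p hp0,
        ← Real.rpow_natCast ((2:ℝ) ^ ((2:ℝ)/3)) 2, ← Real.rpow_mul (by norm_num)]
      norm_num
    rw [h2] at h1
    exact h1
  -- conclude
  have h16 : (16:ℝ) ^ ((1:ℝ)/3) = 2 ^ ((4:ℝ)/3) := by
    rw [show (16:ℝ) = 2 ^ (4:ℕ) by norm_num, ← Real.rpow_natCast 2 4,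
      ← Real.rpow_mul (by norm_num)]
    norm_num
  have hc : (0:ℝ) < 2 ^ ((4:ℝ)/3) := Real.rpow_pos_of_pos (by norm_num) _
  have hfinal : 1 / (9 * 16 ^ ((1:ℝ)/3)) ≤ p := by
    rw [h16, div_le_iff₀ (by positivity)]
    nlinarith [hsq, mul_le_mul_of_nonneg_right
      (mul_le_mul_of_nonneg_left hm4 hc.le) hp0, mul_pos hm2 hm2]
  calc ENNReal.ofReal (1 / (9 * 16 ^ ((1:ℝ)/3))) ≤ ENNReal.ofReal p :=
        ENNReal.ofReal_le_ofReal hfinal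
    _ = μ A := ENNReal.ofReal_toReal (measure_ne_top μ A)

end Centered

end Aux

/-- Equation (2.3): if `Y₁, ..., Yₙ` are independent mean-1 exponential random variables and
`a₁, ..., aₙ` are positive reals, then `P(∑ aᵢ² Yᵢ ≥ ∑ aᵢ²) ≥ 1/(9 · 16^{1/3})`. -/
theorem exp_weighted_sum_ge_mean
    {Ω : Type*} [MeasurableSpace Ω] (μ : Measure Ω) [IsProbabilityMeasure μ]
    (n : ℕ) (Y : Fin n → Ω → ℝ)
    (hYmeas : ∀ i, Measurable (Y i))
    (hindep : iIndepFun Y μ)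
    (hlaw : ∀ i, μ.map (Y i) = expMeasure 1)
    (a : Fin n → ℝ) (ha : ∀ i, 0 < a i) :
    ENNReal.ofReal (1 / (9 * 16 ^ ((1 : ℝ) / 3))) ≤
      μ {ω | ∑ i, a i ^ 2 ≤ ∑ i, a i ^ 2 * Y i ω} := by
  rcases Nat.eq_zero_or_pos n with hn | hn
  · subst hn
    have hset : {ω : Ω | ∑ i : Fin 0, a i ^ 2 ≤ ∑ i : Fin 0, a i ^ 2 * Y i ω} = Set.univ := by
      ext ω; simp
    rw [hset, measure_univ]
    rw [ENNReal.ofReal_le_one]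
    have h16 : (1:ℝ) ≤ 16 ^ ((1:ℝ)/3) := by
      rw [show (1:ℝ) = (16:ℝ) ^ (0:ℝ) by simp]
      exact Real.rpow_le_rpow_of_exponent_le (by norm_num) (by norm_num)
    rw [div_le_one (by positivity)]
    nlinarith
  · set f : Fin n → Ω → ℝ := fun i ω => a i ^ 2 * (Y i ω - 1) with hfdef
    have hfmeas : ∀ i, Measurable (f i) :=
      fun i => measurable_const.mul ((hYmeas i).sub measurable_const)
    have hfindep : iIndepFun f μ :=
      hindep.comp (fun i x => a i ^ 2 * (x - 1))
        (fun i => measurable_const.mul (measurable_id.sub measurable_const))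
    have hYae : ∀ i, AEMeasurable (Y i) μ := fun i => (hYmeas i).aemeasurable
    have hgmeas : ∀ k : ℕ, Measurable (fun x : ℝ => (x - 1) ^ k) :=
      fun k => (measurable_id.sub measurable_const).pow_const k
    have hint' : ∀ i k, 1 ≤ k → k ≤ 4 → Integrable (fun ω => (Y i ω - 1) ^ k) μ := by
      intro i k hk1 hk4
      have h := exp_centered_int k hk1 hk4
      rw [← hlaw i] at h
      have := (integrable_map_measure (hgmeas k).aestronglyMeasurable (hYae i)).mp h
      simpa [Function.comp_def] using this
    have hE' : ∀ i k, ∫ ω, (Y i ω - 1) ^ k ∂μ = ∫ x, (x - 1) ^ k ∂(expMeasure 1) := by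
      intro i k
      rw [← hlaw i, integral_map (hYae i) (hgmeas k).aestronglyMeasurable]
    obtain ⟨hm1, hm2, hm4⟩ := exp_centered_moments
    set v : Fin n → ℝ := fun i => a i ^ 4 with hvdef
    have hfpow : ∀ i (k : ℕ), (fun ω => f i ω ^ k) = fun ω => (a i ^ 2) ^ k * (Y i ω - 1) ^ k :=
      fun i k => funext fun ω => by simp only [hfdef]; exact mul_pow _ _ _
    have hfint : ∀ i k, 1 ≤ k → k ≤ 4 → Integrable (fun ω => f i ω ^ k) μ := by
      intro i k hk1 hk4
      rw [hfpow i k]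
      exact (hint' i k hk1 hk4).const_mul _
    have hf1 : ∀ i, ∫ ω, f i ω ∂μ = 0 := by
      intro i
      have : (fun ω => f i ω) = fun ω => a i ^ 2 * (Y i ω - 1) ^ 1 :=
        funext fun ω => by rw [hfdef]; ring
      rw [this, integral_const_mul, hE' i 1, hm1, mul_zero]
    have hf2 : ∀ i, ∫ ω, f i ω ^ 2 ∂μ = v i := by
      intro i
      rw [hfpow i 2, integral_const_mul, hE' i 2, hm2, hvdef]
      ring
    have hf4 : ∀ i, ∫ ω, f i ω ^ 4 ∂μ ≤ 9 * v i ^ 2 := by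
      intro i
      rw [hfpow i 4, integral_const_mul, hE' i 4, hm4, hvdef]
      have : ((a i ^ 2) ^ 4 : ℝ) * 9 = 9 * (a i ^ 4) ^ 2 := by ring
      rw [this]
    have hv : ∀ i, 0 ≤ v i := fun i => by simp only [hvdef]; positivity
    obtain ⟨hIk, hE1, hE2, hE4⟩ := fourth_moment_sum μ f hfmeas hfindep v hfint hf1 hf2 hf4 hv
      Finset.univ
    set S : Ω → ℝ := fun ω => ∑ i, f i ω with hSdef
    have hSmeas : Measurable S := Finset.measurable_sum _ fun i _ => hfmeas i
    have hm2pos : 0 < ∑ i, v i := by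
      haveI : Nonempty (Fin n) := ⟨⟨0, hn⟩⟩
      exact Finset.sum_pos (fun i _ => by simp only [hvdef]; exact pow_pos (ha i) 4)
        Finset.univ_nonempty
    have hI1 : Integrable S μ := by simpa using hIk 1 le_rfl (by norm_num)
    have hI4 : Integrable (fun ω => S ω ^ 4) μ := hIk 4 (by norm_num) le_rfl
    have hset : {ω | ∑ i, a i ^ 2 ≤ ∑ i, a i ^ 2 * Y i ω} = {ω | 0 ≤ S ω} := by
      ext ω
      simp only [Set.mem_setOf_eq, hSdef, hfdef]
      rw [show (∑ i, a i ^ 2 * (Y i ω - 1)) = (∑ i, a i ^ 2 * Y i ω) - ∑ i, a i ^ 2 by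
        rw [← Finset.sum_sub_distrib]; exact Finset.sum_congr rfl fun i _ => by ring]
      rw [sub_nonneg]
    rw [hset]
    exact prob_nonneg_of_moments μ S hSmeas hI1 hI4 hE1 hE2 rfl hm2pos hE4
end

section
/- Let X_1, ..., X_n be i.i.d. nonnegative random variables with mean μ = E X_1 > 0, let S = Σ_{i=1}^n a_i X_i with positive weights a_1, ..., a_n, and set α = (Σ_{i=1}^n a_i)/max_{i≤n} a_i. Let I(s) = sup_{θ>0} (sθ - log E e^{θ X_1}) be the Legendre transform of the log-moment generating function. Then for every t > 1, P(S > t·E S) ≤ exp(-α · I(μ t)). -/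
open MeasureTheory ProbabilityTheory

open scoped ENNReal

lemma aux_rpow_sum {ι : Type*} (s : Finset ι) (x : ℝ≥0∞) (f : ι → ℝ)
    (hf : ∀ i ∈ s, 0 ≤ f i) :
    x ^ (∑ i ∈ s, f i) = ∏ i ∈ s, x ^ f i := by
  classical
  induction s using Finset.cons_induction with
  | empty => simp
  | cons i s hi ih =>
    rw [Finset.sum_cons, Finset.prod_cons,
      ENNReal.rpow_add_of_nonneg _ _ (hf i (Finset.mem_cons_self i s))
        (Finset.sum_nonneg fun j hj => hf j (Finset.mem_cons_of_mem hj)),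
      ih fun j hj => hf j (Finset.mem_cons_of_mem hj)]

lemma aux_neg_iSup {ι : Sort*} (f : ι → EReal) : -(⨆ i, f i) = ⨅ i, -f i := by
  apply le_antisymm
  · exact le_iInf fun i => EReal.neg_le_neg_iff.mpr (le_iSup f i)
  · rw [← neg_neg (⨅ i, -f i), EReal.neg_le_neg_iff]
    refine iSup_le fun i => ?_
    rw [← neg_neg (f i), EReal.neg_le_neg_iff]
    exact iInf_le _ i

lemma aux_mul_iSup {ι : Sort*} {c : ℝ} (hc : 0 < c) (f : ι → EReal) :
    (c : EReal) * ⨆ i, f i = ⨆ i, (c : EReal) * f i := by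
  have hc0 : (0 : EReal) < (c : EReal) := by exact_mod_cast hc
  have hct : (c : EReal) ≠ ⊤ := EReal.coe_ne_top c
  refine le_antisymm ?_ ?_
  · rw [EReal.mul_comm, ← EReal.le_div_iff_mul_le hc0 hct]
    refine iSup_le fun i => (EReal.le_div_iff_mul_le hc0 hct).mpr ?_
    rw [EReal.mul_comm]
    exact le_iSup (fun i => (c : EReal) * f i) i
  · refine iSup_le fun i => ?_
    rw [EReal.mul_comm, ← EReal.le_div_iff_mul_le hc0 hct, ← EReal.mul_div,
      EReal.mul_div_cancel (EReal.coe_ne_bot c) hct (by exact_mod_cast hc.ne')]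
    exact le_iSup f i

lemma aux_neg_mul_iSup {ι : Sort*} {c : ℝ} (hc : 0 < c) (f : ι → EReal) :
    -(c : EReal) * ⨆ i, f i = ⨅ i, -(c : EReal) * f i := by
  simp_rw [EReal.neg_mul]
  rw [aux_mul_iSup hc, aux_neg_iSup]

lemma aux_lintegral_prod {Ω ι : Type*} [MeasurableSpace Ω] {μ : Measure Ω}
    [IsProbabilityMeasure μ] {Y : ι → Ω → ℝ≥0∞} (hmeas : ∀ i, Measurable (Y i))
    (hind : iIndepFun Y μ) (s : Finset ι) :
    ∫⁻ ω, ∏ i ∈ s, Y i ω ∂μ = ∏ i ∈ s, ∫⁻ ω, Y i ω ∂μ := by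
  classical
  induction s using Finset.induction_on with
  | empty => simp [measure_univ]
  | @insert i s hi ih =>
    have hmprod : Measurable (∏ j ∈ s, Y j) := by
      have : (∏ j ∈ s, Y j) = fun ω => ∏ j ∈ s, Y j ω := by
        funext ω; simp [Finset.prod_apply]
      rw [this]; exact Finset.measurable_prod s fun j _ => hmeas j
    have h1 : IndepFun (Y i) (∏ j ∈ s, Y j) μ :=
      (hind.indepFun_finsetProd_of_notMem hmeas hi).symm
    have h2 := lintegral_mul_eq_lintegral_mul_lintegral_of_indepFun (hmeas i) hmprod h1
    calc ∫⁻ ω, ∏ j ∈ insert i s, Y j ω ∂μ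
        = ∫⁻ ω, (Y i * ∏ j ∈ s, Y j) ω ∂μ := by
          refine lintegral_congr fun ω => ?_
          simp [Finset.prod_insert hi, Finset.prod_apply]
      _ = (∫⁻ ω, Y i ω ∂μ) * ∫⁻ ω, (∏ j ∈ s, Y j) ω ∂μ := h2
      _ = (∫⁻ ω, Y i ω ∂μ) * ∏ j ∈ s, ∫⁻ ω, Y j ω ∂μ := by
          rw [← ih]
          congr 1
          exact lintegral_congr fun ω => by simp [Finset.prod_apply]
      _ = ∏ j ∈ insert i s, ∫⁻ ω, Y j ω ∂μ := by rw [Finset.prod_insert hi]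

lemma aux_lintegral_rpow_le {Ω : Type*} [MeasurableSpace Ω] {μ : Measure Ω}
    [IsProbabilityMeasure μ] {h : Ω → ℝ≥0∞} (hmeas : Measurable h)
    {lam : ℝ} (hlam : 0 < lam) (hlam1 : lam ≤ 1) :
    ∫⁻ ω, h ω ^ lam ∂μ ≤ (∫⁻ ω, h ω ∂μ) ^ lam := by
  rcases eq_or_lt_of_le hlam1 with heq | hlt
  · simp [heq]
  · set p := 1 / lam with hp
    set q := 1 / (1 - lam) with hq
    have hpq : p.HolderConjugate q := by
      rw [hp, hq]; exact Real.holderConjugate_one_div hlam (by linarith) (by ring)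
    have hH := ENNReal.lintegral_mul_le_Lp_mul_Lq μ hpq
      (f := fun ω => h ω ^ lam) (g := fun _ => 1)
      (hmeas.pow_const lam).aemeasurable aemeasurable_const
    simp only [Pi.mul_apply, mul_one] at hH
    have h2 : ∀ ω : Ω, (h ω ^ lam) ^ p = h ω := by
      intro ω
      rw [← ENNReal.rpow_mul, hp, mul_one_div_cancel hlam.ne', ENNReal.rpow_one]
    simp_rw [h2] at hH
    have h3 : ((1:ℝ≥0∞) ^ q) = 1 := ENNReal.one_rpow q
    simp_rw [h3] at hH
    rw [lintegral_one, measure_univ, ENNReal.one_rpow, mul_one, hp, one_div_one_div] at hH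
    exact hH

lemma aux_exp_eq {a x : ℝ} (ha : 0 < a) {L : ℝ≥0∞} (hL : 1 ≤ L) :
    EReal.exp (-(a : EReal) * ((x : EReal) - ENNReal.log L)) =
      ENNReal.ofReal (Real.exp (-(a * x))) * L ^ a := by
  have hna : -(a : EReal) = ((-a : ℝ) : EReal) := by rw [EReal.coe_neg]
  rcases eq_or_ne L ⊤ with h | h
  · rw [h, ENNReal.log_top]
    have h1 : ((x : EReal) - ⊤) = ⊥ := by
      rw [sub_eq_add_neg]; simp
    rw [h1, hna, EReal.coe_mul_bot_of_neg (neg_neg_of_pos ha), EReal.exp_top,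
      ENNReal.top_rpow_of_pos ha, ENNReal.mul_top
        (ENNReal.ofReal_pos.mpr (Real.exp_pos _)).ne']
  · have hL0 : L ≠ 0 := by
      intro h0; rw [h0] at hL; simp at hL
    have hpos : 0 < L.toReal := ENNReal.toReal_pos hL0 h
    have hlog : ENNReal.log L = ((Real.log L.toReal : ℝ) : EReal) := by
      conv_lhs => rw [← ENNReal.ofReal_toReal h]
      rw [ENNReal.log_ofReal_of_pos hpos]
    have hLr : L ^ a = ENNReal.ofReal (L.toReal ^ a) := by
      rw [← ENNReal.ofReal_rpow_of_pos hpos, ENNReal.ofReal_toReal h]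
    rw [hlog, ← EReal.coe_sub, hna, ← EReal.coe_mul, EReal.exp_coe, hLr,
      ← ENNReal.ofReal_mul (Real.exp_nonneg _)]
    congr 1
    rw [Real.rpow_def_of_pos hpos, ← Real.exp_add]
    congr 1
    ring

/-- Upper bound in Theorem 3.1: for i.i.d. nonnegative `Xᵢ` with mean `m > 0`, positive
weights `aᵢ`, `α = (∑ aᵢ)/max aᵢ` and `I(s) = sup_{θ>0} (sθ - log E e^{θ X₁})`
(the log-moment generating function being valued in `(-∞, ∞]`),
for every `t > 1` one has `P(S > t E S) ≤ exp(-α I(m t))`. -/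
theorem iid_nonneg_sum_tail_upper
    {Ω : Type*} [MeasurableSpace Ω] (μ : Measure Ω) [IsProbabilityMeasure μ]
    (n : ℕ) [NeZero n] (X : Fin n → Ω → ℝ)
    (hXmeas : ∀ i, Measurable (X i))
    (hindep : iIndepFun X μ)
    (hid : ∀ i, μ.map (X i) = μ.map (X 0))
    (hnonneg : ∀ i ω, 0 ≤ X i ω)
    (hint : ∀ i, Integrable (X i) μ)
    (m : ℝ) (hm : m = ∫ ω, X 0 ω ∂μ) (hm_pos : 0 < m)
    (a : Fin n → ℝ) (ha : ∀ i, 0 < a i)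
    (α : ℝ) (hα : α = (∑ i, a i) / Finset.univ.sup' Finset.univ_nonempty a)
    (I : ℝ → EReal)
    (hI : ∀ s, I s = ⨆ θ : Set.Ioi (0 : ℝ),
      ((s * (θ : ℝ) : ℝ) : EReal)
        - ENNReal.log (∫⁻ ω, ENNReal.ofReal (Real.exp ((θ : ℝ) * X 0 ω)) ∂μ))
    (t : ℝ) (ht : 1 < t) :
    μ {ω | t * (m * ∑ i, a i) < ∑ i, a i * X i ω} ≤ EReal.exp (-(α : EReal) * I (m * t)) := by
  classical
  have hamax_pos : 0 < Finset.univ.sup' Finset.univ_nonempty a :=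
    (ha 0).trans_le (Finset.le_sup' a (Finset.mem_univ 0))
  set amax := Finset.univ.sup' Finset.univ_nonempty a with hamaxdef
  have hα_pos : 0 < α := by
    rw [hα]
    exact div_pos (Finset.sum_pos (fun i _ => ha i) Finset.univ_nonempty) hamax_pos
  have hSmeas : Measurable fun ω => ∑ i, a i * X i ω :=
    Finset.measurable_sum Finset.univ fun i _ => (hXmeas i).const_mul (a i)
  have key : ∀ θ : ℝ, 0 < θ →
      μ {ω | t * (m * ∑ i, a i) < ∑ i, a i * X i ω} ≤
        EReal.exp (-(α : EReal) * ((((m * t) * θ : ℝ) : EReal)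
          - ENNReal.log (∫⁻ ω, ENNReal.ofReal (Real.exp (θ * X 0 ω)) ∂μ))) := by
    intro θ hθ
    set Λ := ∫⁻ ω, ENNReal.ofReal (Real.exp (θ * X 0 ω)) ∂μ with hΛdef
    have hΛ1 : 1 ≤ Λ := by
      rw [hΛdef]
      calc (1:ℝ≥0∞) = ∫⁻ _, 1 ∂μ := by simp
        _ ≤ _ := lintegral_mono fun ω => by
            rw [← ENNReal.ofReal_one]
            exact ENNReal.ofReal_le_ofReal
              (Real.one_le_exp (mul_nonneg hθ.le (hnonneg 0 ω)))
    set θ' := θ / amax with hθ'def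
    have hθ'pos : 0 < θ' := div_pos hθ hamax_pos
    -- Step 1 : Chernoff--Markov
    have step1 : μ {ω | t * (m * ∑ i, a i) < ∑ i, a i * X i ω} ≤
        ∫⁻ ω, ENNReal.ofReal
          (Real.exp (θ' * ((∑ i, a i * X i ω) - t * (m * ∑ i, a i)))) ∂μ := by
      have hfm : Measurable fun ω => ENNReal.ofReal
          (Real.exp (θ' * ((∑ i, a i * X i ω) - t * (m * ∑ i, a i)))) :=
        (Real.measurable_exp.comp ((hSmeas.sub_const _).const_mul θ')).ennreal_ofReal
      calc μ {ω | t * (m * ∑ i, a i) < ∑ i, a i * X i ω}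
          ≤ μ {ω | 1 ≤ ENNReal.ofReal
              (Real.exp (θ' * ((∑ i, a i * X i ω) - t * (m * ∑ i, a i))))} := by
            refine measure_mono fun ω hω => ?_
            simp only [Set.mem_setOf_eq] at hω ⊢
            rw [← ENNReal.ofReal_one]
            exact ENNReal.ofReal_le_ofReal
              (Real.one_le_exp (mul_nonneg hθ'pos.le (sub_nonneg.mpr hω.le)))
        _ ≤ _ := by simpa using mul_meas_ge_le_lintegral₀ hfm.aemeasurable 1
    -- Step 2 : pull out the constant
    have step2 : ∫⁻ ω, ENNReal.ofReal
          (Real.exp (θ' * ((∑ i, a i * X i ω) - t * (m * ∑ i, a i)))) ∂μ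
        = ENNReal.ofReal (Real.exp (-(θ' * (t * (m * ∑ i, a i))))) *
            ∫⁻ ω, ENNReal.ofReal (Real.exp (θ' * ∑ i, a i * X i ω)) ∂μ := by
      have hpt : ∀ ω, ENNReal.ofReal
            (Real.exp (θ' * ((∑ i, a i * X i ω) - t * (m * ∑ i, a i))))
          = ENNReal.ofReal (Real.exp (-(θ' * (t * (m * ∑ i, a i))))) *
              ENNReal.ofReal (Real.exp (θ' * ∑ i, a i * X i ω)) := by
        intro ω
        rw [← ENNReal.ofReal_mul (Real.exp_nonneg _), ← Real.exp_add]
        congr 2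
        ring
      simp_rw [hpt]
      exact lintegral_const_mul _
        ((Real.measurable_exp.comp (hSmeas.const_mul θ')).ennreal_ofReal)
    -- Step 3 : independence factorization
    have step3 : ∫⁻ ω, ENNReal.ofReal (Real.exp (θ' * ∑ i, a i * X i ω)) ∂μ
        = ∏ i, ∫⁻ ω, ENNReal.ofReal (Real.exp (θ' * (a i * X i ω))) ∂μ := by
      have hpt : ∀ ω, ENNReal.ofReal (Real.exp (θ' * ∑ i, a i * X i ω))
          = ∏ i, ENNReal.ofReal (Real.exp (θ' * (a i * X i ω))) := by
        intro ω
        rw [Finset.mul_sum, Real.exp_sum,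
          ENNReal.ofReal_prod_of_nonneg fun i _ => Real.exp_nonneg _]
      simp_rw [hpt]
      have hgmeas : ∀ i : Fin n,
          Measurable fun x : ℝ => ENNReal.ofReal (Real.exp (θ' * (a i * x))) := fun i =>
        (Real.measurable_exp.comp ((measurable_id.const_mul (a i)).const_mul θ')).ennreal_ofReal
      have hYind : iIndepFun
          (fun i => (fun x : ℝ => ENNReal.ofReal (Real.exp (θ' * (a i * x)))) ∘ X i) μ :=
        hindep.comp _ hgmeas
      have hYmeas : ∀ i : Fin n, Measurable
          ((fun x : ℝ => ENNReal.ofReal (Real.exp (θ' * (a i * x)))) ∘ X i) := fun i =>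
        (hgmeas i).comp (hXmeas i)
      exact aux_lintegral_prod hYmeas hYind Finset.univ
    -- Step 4 : identical distribution + Hölder
    have step4 : ∀ i : Fin n,
        ∫⁻ ω, ENNReal.ofReal (Real.exp (θ' * (a i * X i ω))) ∂μ ≤ Λ ^ (a i / amax) := by
      intro i
      have hlam_pos : 0 < a i / amax := div_pos (ha i) hamax_pos
      have hlam_le : a i / amax ≤ 1 :=
        (div_le_one hamax_pos).mpr (Finset.le_sup' a (Finset.mem_univ i))
      have harg : ∀ x : ℝ, θ' * (a i * x) = (a i / amax) * (θ * x) := by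
        intro x
        rw [hθ'def]
        field_simp
      simp_rw [harg]
      have hg : Measurable fun x : ℝ =>
          ENNReal.ofReal (Real.exp ((a i / amax) * (θ * x))) :=
        (Real.measurable_exp.comp
          ((measurable_id.const_mul θ).const_mul (a i / amax))).ennreal_ofReal
      have hmap : ∫⁻ ω, ENNReal.ofReal (Real.exp ((a i / amax) * (θ * X i ω))) ∂μ
          = ∫⁻ ω, ENNReal.ofReal (Real.exp ((a i / amax) * (θ * X 0 ω))) ∂μ := by
        rw [← lintegral_map hg (hXmeas i), hid i, lintegral_map hg (hXmeas 0)]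
      rw [hmap]
      have hpow : ∀ ω, ENNReal.ofReal (Real.exp ((a i / amax) * (θ * X 0 ω)))
          = (ENNReal.ofReal (Real.exp (θ * X 0 ω))) ^ (a i / amax) := by
        intro ω
        rw [mul_comm (a i / amax) (θ * X 0 ω), Real.exp_mul,
          ENNReal.ofReal_rpow_of_pos (Real.exp_pos _)]
      simp_rw [hpow]
      exact aux_lintegral_rpow_le
        ((Real.measurable_exp.comp ((hXmeas 0).const_mul θ)).ennreal_ofReal)
        hlam_pos hlam_le
    -- Step 5 : product of rpow's
    have step5 : ∏ i, Λ ^ (a i / amax) = Λ ^ α := by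
      rw [← aux_rpow_sum Finset.univ Λ _ fun i _ => (div_pos (ha i) hamax_pos).le]
      congr 1
      rw [hα, Finset.sum_div]
    -- Step 6 : exponent identity
    have step6 : -(θ' * (t * (m * ∑ i, a i))) = -(α * ((m * t) * θ)) := by
      rw [hα, hθ'def]
      ring
    calc μ {ω | t * (m * ∑ i, a i) < ∑ i, a i * X i ω}
        ≤ ∫⁻ ω, ENNReal.ofReal
            (Real.exp (θ' * ((∑ i, a i * X i ω) - t * (m * ∑ i, a i)))) ∂μ := step1
      _ = ENNReal.ofReal (Real.exp (-(θ' * (t * (m * ∑ i, a i))))) *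
            ∫⁻ ω, ENNReal.ofReal (Real.exp (θ' * ∑ i, a i * X i ω)) ∂μ := step2
      _ = ENNReal.ofReal (Real.exp (-(θ' * (t * (m * ∑ i, a i))))) *
            ∏ i, ∫⁻ ω, ENNReal.ofReal (Real.exp (θ' * (a i * X i ω))) ∂μ := by rw [step3]
      _ ≤ ENNReal.ofReal (Real.exp (-(θ' * (t * (m * ∑ i, a i))))) *
            ∏ i, Λ ^ (a i / amax) :=
          mul_le_mul_right (Finset.prod_le_prod' fun i _ => step4 i) _
      _ = ENNReal.ofReal (Real.exp (-(α * ((m * t) * θ)))) * Λ ^ α := by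
          rw [step5, step6]
      _ = _ := (aux_exp_eq hα_pos hΛ1).symm
  have hmapinf : ∀ g : Set.Ioi (0:ℝ) → EReal,
      EReal.exp (⨅ θ, g θ) = ⨅ θ, EReal.exp (g θ) := by
    intro g
    have h := EReal.expOrderIso.map_iInf g
    simp only [EReal.expOrderIso_apply] at h
    exact h
  rw [hI, aux_neg_mul_iSup hα_pos, hmapinf]
  exact le_iInf fun θ => key θ θ.2
end

section
/- Suppose X and Y are independent random variables, and r : (0,∞) → ℝ is a function such that P(Y ≥ u+v) ≥ r(v)·P(Y ≥ u) for all u ∈ ℝ and all v > 0. Then P(X + Y ≥ u+v) ≥ r(v)·P(X + Y ≥ u) for all u ∈ ℝ and all v > 0. -/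
open MeasureTheory ProbabilityTheory

/-- Lemma 3.2: if `X` and `Y` are independent random variables and
`P(Y ≥ u+v) ≥ r(v) P(Y ≥ u)` for all `u ∈ ℝ` and `v > 0`, then the same tail-decay
estimate holds for `X + Y`. -/
theorem tail_decay_of_indep_add
    {Ω : Type*} [MeasurableSpace Ω] (μ : Measure Ω) [IsProbabilityMeasure μ]
    (X Y : Ω → ℝ) (hX : Measurable X) (hY : Measurable Y)
    (hindep : IndepFun X Y μ)
    (r : ℝ → ℝ)
    (htail : ∀ (u v : ℝ), 0 < v →
      ENNReal.ofReal (r v) * μ {ω | u ≤ Y ω} ≤ μ {ω | u + v ≤ Y ω}) :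
    ∀ (u v : ℝ), 0 < v →
      ENNReal.ofReal (r v) * μ {ω | u ≤ X ω + Y ω} ≤ μ {ω | u + v ≤ X ω + Y ω} := by
  intro u v hv
  have hmap : μ.map (fun ω => (X ω, Y ω)) = (μ.map X).prod (μ.map Y) :=
    (indepFun_iff_map_prod_eq_prod_map_map hX.aemeasurable hY.aemeasurable).mp hindep
  have hYm : ∀ a : ℝ, μ {ω | a ≤ Y ω} = (μ.map Y) (Set.Ici a) := by
    intro a
    rw [Measure.map_apply hY measurableSet_Ici]; rfl
  have hs : MeasurableSet {p : ℝ × ℝ | u + v ≤ p.1 + p.2} :=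
    measurableSet_le measurable_const (measurable_fst.add measurable_snd)
  have hs' : MeasurableSet {p : ℝ × ℝ | u ≤ p.1 + p.2} :=
    measurableSet_le measurable_const (measurable_fst.add measurable_snd)
  have key : ∀ (a : ℝ) (ha : MeasurableSet {p : ℝ × ℝ | a ≤ p.1 + p.2}),
      μ {ω | a ≤ X ω + Y ω} = ∫⁻ x, (μ.map Y) (Set.Ici (a - x)) ∂(μ.map X) := by
    intro a ha
    have h1 : {ω | a ≤ X ω + Y ω}
        = (fun ω => (X ω, Y ω)) ⁻¹' {p : ℝ × ℝ | a ≤ p.1 + p.2} := rfl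
    rw [h1, ← Measure.map_apply (hX.prodMk hY) ha, hmap, Measure.prod_apply ha]
    congr 1
    ext x
    congr 1
    ext y
    simp only [Set.mem_preimage, Set.mem_setOf_eq, Set.mem_Ici]
    constructor <;> intro h <;> linarith
  rw [key u hs', key (u + v) hs]
  have hmeas : Measurable fun x : ℝ => (μ.map Y) (Set.Ici (u - x)) := by
    have hmono : Monotone fun x : ℝ => (μ.map Y) (Set.Ici (u - x)) := by
      intro x y hxy
      exact measure_mono (Set.Ici_subset_Ici.mpr (by linarith))
    exact hmono.measurable
  rw [← lintegral_const_mul _ hmeas]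
  refine lintegral_mono fun x => ?_
  have h := htail (u - x) v hv
  rw [hYm, hYm] at h
  have h2 : u + v - x = u - x + v := by ring
  rw [h2]
  exact h
end

section
/- For the gamma distribution with shape parameter γ ≥ 1 and rate 1 (density Γ(γ)^{-1} x^{γ-1} e^{-x} on (0,∞)), the tail ratio function satisfies r_γ(v) := inf_{u>0} P(X > u+v)/P(X > u) = e^{-v} for all v > 0. -/
open MeasureTheory ProbabilityTheory Real Set Filter Topology
open scoped ENNReal NNReal

namespace GammaTailAux

noncomputable def T (γ u : ℝ) : ℝ := ∫ x in Set.Ioi u, x ^ (γ - 1) * Real.exp (-x)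

lemma integrableOn_f {γ u : ℝ} (hγ : 0 < γ) (hu : 0 ≤ u) :
    IntegrableOn (fun x : ℝ => x ^ (γ - 1) * Real.exp (-x)) (Set.Ioi u) := by
  have h := (Real.GammaIntegral_convergent hγ).mono_set (Set.Ioi_subset_Ioi hu)
  exact h.congr_fun (fun x _ => mul_comm _ _) measurableSet_Ioi

lemma integrableOn_g {γ u v : ℝ} (hγ : 1 ≤ γ) (hu : 0 < u) (hv : 0 ≤ v) :
    IntegrableOn (fun x : ℝ => (x + v) ^ (γ - 1) * Real.exp (-x)) (Set.Ioi u) := by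
  have hγ0 : 0 < γ := lt_of_lt_of_le one_pos hγ
  have hc : (0:ℝ) < 1 + v / u := by positivity
  refine Integrable.mono ((integrableOn_f hγ0 hu.le).const_mul ((1 + v / u) ^ (γ - 1))) ?_ ?_
  · refine AEStronglyMeasurable.mul ?_ ?_
    · exact ((Real.continuous_rpow_const (by linarith : (0:ℝ) ≤ γ - 1)).comp (continuous_id.add continuous_const)).aestronglyMeasurable
    · exact (Real.measurable_exp.comp measurable_neg).aestronglyMeasurable
  · filter_upwards [ae_restrict_mem measurableSet_Ioi] with x hx
    have hx0 : 0 < x := lt_trans hu hx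
    have h1 : x + v ≤ (1 + v / u) * x := by
      have : v ≤ (v / u) * x := by
        rw [div_mul_eq_mul_div, le_div_iff₀ hu]
        nlinarith [le_of_lt (show u < x from hx)]
      nlinarith
    have h2 : (x + v) ^ (γ - 1) ≤ ((1 + v / u) * x) ^ (γ - 1) :=
      Real.rpow_le_rpow (by linarith) h1 (by linarith)
    rw [Real.mul_rpow hc.le hx0.le] at h2
    have he : 0 < Real.exp (-x) := Real.exp_pos _
    rw [Real.norm_eq_abs, Real.norm_eq_abs, abs_of_nonneg (by positivity),
      abs_of_nonneg (by positivity)]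
    nlinarith

lemma T_pos {γ u : ℝ} (hγ : 0 < γ) (hu : 0 ≤ u) : 0 < T γ u := by
  rw [T]
  have hne : 0 ≤ᵐ[volume.restrict (Set.Ioi u)] fun x : ℝ => x ^ (γ - 1) * Real.exp (-x) := by
    filter_upwards [ae_restrict_mem measurableSet_Ioi] with x hx
    have hx0 : 0 < x := lt_of_le_of_lt hu hx
    positivity
  rw [setIntegral_pos_iff_support_of_nonneg_ae hne (integrableOn_f hγ hu)]
  have hsub : Set.Ioi u ⊆ Function.support (fun x : ℝ => x ^ (γ - 1) * Real.exp (-x)) ∩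
      Set.Ioi u := by
    intro x hx
    have hx0 : 0 < x := lt_of_le_of_lt hu hx
    refine ⟨?_, hx⟩
    simp only [Function.mem_support]
    positivity
  calc (0 : ℝ≥0∞) < volume (Set.Ioi u) := by simp
    _ ≤ _ := measure_mono hsub

/-- tail of the gamma measure (rate 1) in terms of `T`. -/
lemma tail_eq {γ : ℝ} (hγ : 0 < γ) {u : ℝ} (hu : 0 ≤ u) :
    (gammaMeasure γ 1 (Set.Ioi u)).toReal = (Real.Gamma γ)⁻¹ * T γ u := by
  rw [gammaMeasure, withDensity_apply _ measurableSet_Ioi]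
  have h1 : ∫ x in Set.Ioi u, gammaPDFReal γ 1 x =
      ((∫⁻ x in Set.Ioi u, gammaPDF γ 1 x)).toReal := by
    rw [integral_eq_lintegral_of_nonneg_ae]
    · rfl
    · exact ae_of_all _ (fun x => gammaPDFReal_nonneg hγ one_pos x)
    · exact (measurable_gammaPDFReal γ 1).aestronglyMeasurable.restrict
  rw [← h1]
  have h2 : ∫ x in Set.Ioi u, gammaPDFReal γ 1 x =
      ∫ x in Set.Ioi u, (Real.Gamma γ)⁻¹ * (x ^ (γ - 1) * Real.exp (-x)) := by
    refine setIntegral_congr_fun measurableSet_Ioi (fun x hx => ?_)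
    have hx0 : (0 : ℝ) ≤ x := le_of_lt (lt_of_le_of_lt hu hx)
    simp [gammaPDFReal, if_pos hx0, Real.one_rpow, one_mul, mul_assoc, one_div]
  rw [h2, integral_const_mul, T]

/-- translation identity. -/
lemma T_shift (γ u v : ℝ) :
    T γ (u + v) = Real.exp (-v) * ∫ x in Set.Ioi u, (x + v) ^ (γ - 1) * Real.exp (-x) := by
  set g : ℝ → ℝ := fun y => y ^ (γ - 1) * Real.exp (-y) with hg
  have hind : ∀ x : ℝ, (Set.Ioi (u + v)).indicator g (x + v)
      = (Set.Ioi u).indicator (fun y => g (y + v)) x := by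
    intro x
    simp only [Set.indicator_apply, Set.mem_Ioi, add_lt_add_iff_right]
  calc T γ (u + v) = ∫ x, (Set.Ioi (u + v)).indicator g x := by
        rw [T, integral_indicator measurableSet_Ioi]
    _ = ∫ x, (Set.Ioi (u + v)).indicator g (x + v) := by
        rw [integral_add_right_eq_self (fun x => (Set.Ioi (u + v)).indicator g x) v]
    _ = ∫ x, (Set.Ioi u).indicator (fun y => g (y + v)) x := by
        exact integral_congr_ae (ae_of_all _ hind)
    _ = ∫ x in Set.Ioi u, g (x + v) := integral_indicator measurableSet_Ioi
    _ = ∫ x in Set.Ioi u, Real.exp (-v) * ((x + v) ^ (γ - 1) * Real.exp (-x)) := by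
        refine integral_congr_ae (ae_of_all _ fun x => ?_)
        simp only [hg, neg_add, Real.exp_add]
        ring
    _ = Real.exp (-v) * ∫ x in Set.Ioi u, (x + v) ^ (γ - 1) * Real.exp (-x) :=
        integral_const_mul _ _

end GammaTailAux

open GammaTailAux

/-- For the gamma distribution with shape `γ ≥ 1` and rate 1, the tail ratio function satisfies
`r_γ(v) = inf_{u>0} P(X > u+v)/P(X > u) = e^{-v}` for every `v > 0`. -/
theorem gamma_tail_ratio_eq_exp_neg
    (γ : ℝ) (hγ : 1 ≤ γ) (v : ℝ) (hv : 0 < v) :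
    (⨅ u : Set.Ioi (0 : ℝ),
        (gammaMeasure γ 1 (Set.Ioi ((u : ℝ) + v))).toReal /
          (gammaMeasure γ 1 (Set.Ioi (u : ℝ))).toReal)
      = Real.exp (-v) := by
  have hγ0 : 0 < γ := lt_of_lt_of_le one_pos hγ
  have hΓ : 0 < Real.Gamma γ := Real.Gamma_pos_of_pos hγ0
  have hratio : ∀ u : Set.Ioi (0 : ℝ),
      (gammaMeasure γ 1 (Set.Ioi ((u : ℝ) + v))).toReal /
        (gammaMeasure γ 1 (Set.Ioi (u : ℝ))).toReal = T γ ((u : ℝ) + v) / T γ (u : ℝ) := by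
    intro u
    have hu : (0 : ℝ) < u := u.2
    rw [tail_eq hγ0 (by linarith : (0:ℝ) ≤ (u : ℝ) + v), tail_eq hγ0 hu.le,
      mul_div_mul_left _ _ (inv_ne_zero hΓ.ne')]
  -- lower bound : each ratio ≥ exp(-v)
  have hlow : ∀ u : Set.Ioi (0 : ℝ), Real.exp (-v) ≤ T γ ((u : ℝ) + v) / T γ (u : ℝ) := by
    intro u
    have hu : (0 : ℝ) < u := u.2
    rw [T_shift, le_div_iff₀ (T_pos hγ0 hu.le), mul_comm (Real.exp (-v)) _]
    rw [mul_comm (T γ (u : ℝ)) _, mul_le_mul_iff_right₀ (Real.exp_pos _), T]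
    refine setIntegral_mono_on (integrableOn_f hγ0 hu.le)
      (integrableOn_g hγ hu hv.le) measurableSet_Ioi (fun x hx => ?_)
    have hx0 : 0 < x := lt_trans hu hx
    have h1 : x ^ (γ - 1) ≤ (x + v) ^ (γ - 1) :=
      Real.rpow_le_rpow hx0.le (by linarith) (by linarith)
    have he : 0 < Real.exp (-x) := Real.exp_pos _
    nlinarith
  -- upper bound per u
  have hup : ∀ u : Set.Ioi (0 : ℝ), T γ ((u : ℝ) + v) / T γ (u : ℝ)
      ≤ Real.exp (-v) * (1 + v / (u : ℝ)) ^ (γ - 1) := by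
    intro u
    have hu : (0 : ℝ) < u := u.2
    have hc : (0:ℝ) < 1 + v / (u : ℝ) := by positivity
    rw [T_shift, div_le_iff₀ (T_pos hγ0 hu.le), mul_assoc, mul_le_mul_iff_right₀ (Real.exp_pos _)]
    rw [T, ← integral_const_mul]
    refine setIntegral_mono_on (integrableOn_g hγ hu hv.le)
      ((integrableOn_f hγ0 hu.le).const_mul _) measurableSet_Ioi (fun x hx => ?_)
    have hx0 : 0 < x := lt_trans hu hx
    have h1 : x + v ≤ (1 + v / (u : ℝ)) * x := by
      have : v ≤ (v / (u : ℝ)) * x := by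
        rw [div_mul_eq_mul_div, le_div_iff₀ hu]
        nlinarith [le_of_lt (show (u : ℝ) < x from hx)]
      nlinarith
    have h2 : (x + v) ^ (γ - 1) ≤ ((1 + v / (u : ℝ)) * x) ^ (γ - 1) :=
      Real.rpow_le_rpow (by linarith) h1 (by linarith)
    rw [Real.mul_rpow hc.le hx0.le] at h2
    have he : 0 < Real.exp (-x) := Real.exp_pos _
    calc (x + v) ^ (γ - 1) * Real.exp (-x)
        ≤ ((1 + v / (u : ℝ)) ^ (γ - 1) * x ^ (γ - 1)) * Real.exp (-x) := by nlinarith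
      _ = (1 + v / (u : ℝ)) ^ (γ - 1) * (x ^ (γ - 1) * Real.exp (-x)) := by ring
  simp_rw [hratio]
  refine le_antisymm ?_ (le_ciInf hlow)
  have hbdd : BddBelow (Set.range fun u : Set.Ioi (0:ℝ) => T γ ((u : ℝ) + v) / T γ (u : ℝ)) := by
    refine ⟨Real.exp (-v), ?_⟩
    rintro x ⟨u, rfl⟩
    exact hlow u
  have htend : Tendsto (fun u : ℝ => Real.exp (-v) * (1 + v / u) ^ (γ - 1)) atTop
      (𝓝 (Real.exp (-v))) := by
    have h0 : Tendsto (fun u : ℝ => 1 + v / u) atTop (𝓝 1) := by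
      have hd : Tendsto (fun u : ℝ => v / u) atTop (𝓝 0) :=
        (tendsto_const_nhds (x := v)).div_atTop tendsto_id
      have := (tendsto_const_nhds (x := (1:ℝ))).add hd
      simpa using this
    have h1 : Tendsto (fun u : ℝ => (1 + v / u) ^ (γ - 1)) atTop (𝓝 (1 : ℝ)) := by
      have := h0.rpow (tendsto_const_nhds (x := γ - 1)) (Or.inl one_ne_zero)
      simpa using this
    have := (tendsto_const_nhds (x := Real.exp (-v))).mul h1
    simpa using this
  refine ge_of_tendsto htend ?_
  filter_upwards [eventually_gt_atTop (0 : ℝ)] with u hu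
  exact le_trans (ciInf_le hbdd ⟨u, hu⟩) (hup ⟨u, hu⟩)
end

section
/- Let X_1, ..., X_n be i.i.d. gamma random variables with shape parameter γ > 0 and rate 1, S = Σ_{i=1}^n a_i X_i with positive weights a_i, and α = (Σ_{i=1}^n a_i)/max_{i≤n} a_i. Then for every t > 1, P(S > t·E S) ≤ exp(-α γ (t - 1 - log t)). -/
open MeasureTheory ProbabilityTheory
open Real Set

lemma gamma_exp_lintegral {γ s : ℝ} (hγ : 0 < γ) (hs : s < 1) :
    ∫⁻ x, ENNReal.ofReal (exp (s * x)) ∂(gammaMeasure γ 1)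
      = ENNReal.ofReal ((1 - s) ^ (-γ)) := by
  have hb : 0 < 1 - s := by linarith
  set f : ℝ → ℝ := fun x =>
    if 0 ≤ x then (1 / Gamma γ) * (x ^ (γ - 1) * exp (-(1 - s) * x)) else 0 with hfdef
  have hgmeas : Measurable fun x : ℝ => ENNReal.ofReal (exp (s * x)) :=
    ((measurable_id'.const_mul s).exp).ennreal_ofReal
  have hpdfmeas : Measurable (gammaPDF γ 1) := (measurable_gammaPDFReal γ 1).ennreal_ofReal
  rw [gammaMeasure, lintegral_withDensity_eq_lintegral_mul _ hpdfmeas hgmeas]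
  have hpt : ∀ x : ℝ, gammaPDF γ 1 x * ENNReal.ofReal (exp (s * x)) = ENNReal.ofReal (f x) := by
    intro x
    by_cases hx : 0 ≤ x
    · rw [gammaPDF_of_nonneg hx, ← ENNReal.ofReal_mul (by positivity), hfdef]
      simp only [hx, if_true]
      congr 1
      rw [Real.one_rpow]
      rw [mul_assoc, mul_assoc, ← Real.exp_add]
      ring_nf
    · rw [gammaPDF_of_neg (lt_of_not_ge hx), hfdef]
      simp [hx]
  simp_rw [Pi.mul_apply, hpt]
  have hint0 : IntegrableOn (fun x => x ^ (γ - 1) * exp (-(1 - s) * x)) (Ioi 0) volume := by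
    have := integrableOn_rpow_mul_exp_neg_mul_rpow (p := 1) (s := γ - 1) (b := 1 - s)
      (by linarith) (by norm_num) hb
    simpa [Real.rpow_one] using this
  have hfeq : f = (Ici (0:ℝ)).indicator
      (fun x => (1 / Gamma γ) * (x ^ (γ - 1) * exp (-(1 - s) * x))) := by
    ext x; simp [hfdef, Set.indicator_apply]
  have hfint : Integrable f volume := by
    rw [hfeq, integrable_indicator_iff measurableSet_Ici]
    rw [integrableOn_Ici_iff_integrableOn_Ioi]
    exact hint0.const_mul _
  have hfnn : 0 ≤ᵐ[volume] f := by
    refine Filter.Eventually.of_forall fun x => ?_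
    rw [hfdef]; dsimp only; split_ifs with h
    · positivity
    · exact le_rfl
  rw [← ofReal_integral_eq_lintegral_ofReal hfint hfnn]
  congr 1
  rw [hfeq, integral_indicator measurableSet_Ici, integral_Ici_eq_integral_Ioi,
    integral_const_mul]
  simp_rw [neg_mul]
  rw [integral_rpow_mul_exp_neg_mul_Ioi hγ hb]
  rw [one_div (Gamma γ), one_div (1 - s), Real.inv_rpow hb.le, ← Real.rpow_neg hb.le]
  field_simp

lemma gamma_mgf_int {Ω : Type*} [MeasurableSpace Ω] {μ : Measure Ω} {X : Ω → ℝ}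
    (hX : Measurable X) {γ : ℝ} (hγ : 0 < γ) (hlaw : μ.map X = gammaMeasure γ 1)
    {s : ℝ} (hs : s < 1) :
    Integrable (fun ω => exp (s * X ω)) μ ∧ mgf X μ s = (1 - s) ^ (-γ) := by
  have hb : 0 < 1 - s := by linarith
  have hgmeas : Measurable fun x : ℝ => exp (s * x) := (measurable_id'.const_mul s).exp
  have hmapint : Integrable (fun x => exp (s * x)) (μ.map X) := by
    refine ⟨hgmeas.aestronglyMeasurable, ?_⟩
    rw [hasFiniteIntegral_iff_ofReal (Filter.Eventually.of_forall fun x => (exp_pos _).le)]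
    rw [hlaw, gamma_exp_lintegral hγ hs]
    exact ENNReal.ofReal_lt_top
  have hint : Integrable (fun ω => exp (s * X ω)) μ := by
    have := (integrable_map_measure hgmeas.aestronglyMeasurable hX.aemeasurable).mp hmapint
    simpa [Function.comp_def] using this
  refine ⟨hint, ?_⟩
  have : mgf X μ s = ∫ x, exp (s * x) ∂(μ.map X) := by
    rw [mgf, integral_map hX.aemeasurable hgmeas.aestronglyMeasurable]
  rw [this, hlaw, integral_eq_lintegral_of_nonneg_ae
    (Filter.Eventually.of_forall fun x => (exp_pos _).le) hgmeas.aestronglyMeasurable,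
    gamma_exp_lintegral hγ hs, ENNReal.toReal_ofReal (Real.rpow_nonneg hb.le _)]


/-- Upper bound in (3.4): for i.i.d. gamma(γ, 1) random variables `Xᵢ` (shape `γ > 0`, rate 1),
positive weights `aᵢ`, `α = (∑ aᵢ)/max aᵢ` and `E S = γ ∑ aᵢ`, for every `t > 1`,
`P(S > t E S) ≤ exp(-α γ (t - 1 - log t))`. -/
theorem gamma_sum_tail_upper
    {Ω : Type*} [MeasurableSpace Ω] (μ : Measure Ω) [IsProbabilityMeasure μ]
    (n : ℕ) [NeZero n] (X : Fin n → Ω → ℝ)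
    (hXmeas : ∀ i, Measurable (X i))
    (hindep : iIndepFun X μ)
    (γ : ℝ) (hγ : 0 < γ)
    (hlaw : ∀ i, μ.map (X i) = gammaMeasure γ 1)
    (a : Fin n → ℝ) (ha : ∀ i, 0 < a i)
    (α : ℝ) (hα : α = (∑ i, a i) / Finset.univ.sup' Finset.univ_nonempty a)
    (t : ℝ) (ht : 1 < t) :
    μ {ω | t * (γ * ∑ i, a i) < ∑ i, a i * X i ω} ≤
      ENNReal.ofReal (Real.exp (-α * γ * (t - 1 - Real.log t))) := by
  classical
  set M : ℝ := Finset.univ.sup' Finset.univ_nonempty a with hM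
  obtain ⟨i₀, -⟩ := (Finset.univ_nonempty (α := Fin n)).exists_mem
  have ha_le : ∀ i, a i ≤ M := fun i => Finset.le_sup' a (Finset.mem_univ i)
  have hMpos : 0 < M := (ha i₀).trans_le (ha_le i₀)
  have ht0 : 0 < t := by linarith
  have hθ : 0 < 1 - 1 / t := by
    have : 1 / t < 1 := by rw [div_lt_one ht0]; exact ht
    linarith
  set lam : ℝ := (1 - 1 / t) / M with hlam
  have hlampos : 0 < lam := div_pos hθ hMpos
  have hxle : ∀ i, lam * a i ≤ 1 - 1 / t := by
    intro i
    rw [hlam, div_mul_eq_mul_div, div_le_iff₀ hMpos]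
    have := ha_le i
    nlinarith
  have hxlt1 : ∀ i, lam * a i < 1 := fun i => (hxle i).trans_lt (by linarith [one_div_pos.mpr ht0])
  have hxpos : ∀ i, 0 < lam * a i := fun i => mul_pos hlampos (ha i)
  set Y : Fin n → Ω → ℝ := fun i ω => a i * X i ω with hY
  have hYmeas : ∀ i, Measurable (Y i) := fun i => (hXmeas i).const_mul (a i)
  have hYindep : iIndepFun Y μ :=
    hindep.comp (fun i x => a i * x) (fun i => measurable_const_mul (a i))
  have hYint : ∀ i, Integrable (fun ω => exp (lam * Y i ω)) μ := by
    intro i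
    have := (gamma_mgf_int (hXmeas i) hγ (hlaw i) (hxlt1 i)).1
    simp_rw [hY, ← mul_assoc]
    exact this
  have hYmgf : ∀ i, mgf (Y i) μ lam = (1 - lam * a i) ^ (-γ) := by
    intro i
    have h2 := (gamma_mgf_int (hXmeas i) hγ (hlaw i) (hxlt1 i)).2
    rw [← h2, mgf, mgf]
    simp_rw [hY, ← mul_assoc]
  set ε : ℝ := t * (γ * ∑ i, a i) with hε
  set S : Ω → ℝ := ∑ i, Y i with hS
  have hSint : Integrable (fun ω => exp (lam * S ω)) μ :=
    hYindep.integrable_exp_mul_sum hYmeas (fun i _ => hYint i)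
  have hchern := measure_ge_le_exp_mul_mgf (μ := μ) (X := S) ε hlampos.le hSint
  have hmgfS : mgf S μ lam = ∏ i, (1 - lam * a i) ^ (-γ) := by
    rw [hS, hYindep.mgf_sum hYmeas]
    exact Finset.prod_congr rfl fun i _ => hYmgf i
  -- per-index log inequality from concavity of log
  have hlog : ∀ i, -Real.log (1 - lam * a i) ≤ (a i / M) * Real.log t := by
    intro i
    have hc : 0 ≤ a i / M := (div_pos (ha i) hMpos).le
    have hc1 : a i / M ≤ 1 := (div_le_one hMpos).mpr (ha_le i)
    have hconc := strictConcaveOn_log_Ioi.concaveOn.2 (Set.mem_Ioi.mpr (one_div_pos.mpr ht0))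
      (Set.mem_Ioi.mpr one_pos) hc (by linarith : (0:ℝ) ≤ 1 - a i / M) (by ring)
    have hcomb : (a i / M) • (1 / t) + (1 - a i / M) • (1:ℝ) = 1 - lam * a i := by
      simp only [smul_eq_mul, hlam]
      field_simp
      ring
    rw [hcomb] at hconc
    simp only [smul_eq_mul, Real.log_one, mul_zero, add_zero, Real.log_div one_ne_zero ht0.ne',
      Real.log_one] at hconc
    nlinarith [hconc]
  have hprod : ∏ i, (1 - lam * a i) ^ (-γ) = exp (∑ i, -γ * Real.log (1 - lam * a i)) := by
    rw [Real.exp_sum]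
    refine Finset.prod_congr rfl fun i _ => ?_
    rw [Real.rpow_def_of_pos (by linarith [hxlt1 i]), neg_mul, mul_comm, neg_mul]
  have hsum : ∑ i, -γ * Real.log (1 - lam * a i) ≤ α * γ * Real.log t := by
    have h1 : ∀ i, -γ * Real.log (1 - lam * a i) ≤ γ * ((a i / M) * Real.log t) := by
      intro i
      have := hlog i
      nlinarith [hγ.le]
    calc ∑ i, -γ * Real.log (1 - lam * a i) ≤ ∑ i, γ * ((a i / M) * Real.log t) :=
          Finset.sum_le_sum fun i _ => h1 i
      _ = α * γ * Real.log t := by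
          rw [← Finset.mul_sum, ← Finset.sum_mul, ← Finset.sum_div, hα]
          ring
  have hlamε : lam * ε = α * γ * (t - 1) := by
    rw [hlam, hε, hα]
    field_simp
  have hfinal : exp (-lam * ε) * mgf S μ lam ≤ exp (-α * γ * (t - 1 - Real.log t)) := by
    rw [hmgfS, hprod, ← Real.exp_add, Real.exp_le_exp]
    have : -lam * ε = -(α * γ * (t - 1)) := by rw [neg_mul, hlamε]
    rw [this]
    nlinarith [hsum]
  -- put everything together
  have hsub : μ {ω | ε < ∑ i, a i * X i ω} ≤ μ {ω | ε ≤ S ω} := by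
    refine measure_mono fun ω hω => ?_
    have : S ω = ∑ i, a i * X i ω := by simp [hS, hY, Finset.sum_apply]
    simp only [Set.mem_setOf_eq] at hω ⊢
    rw [this]
    exact hω.le
  refine hsub.trans ?_
  rw [← ENNReal.ofReal_toReal (measure_ne_top μ _)]
  exact ENNReal.ofReal_le_ofReal (hchern.trans hfinal)
end

section
/- Let X_1, ..., X_n be independent standard two-sided exponential (Laplace) random variables and S = Σ_{i=1}^n a_i X_i with positive weights a = (a_1, ..., a_n). Then for every p ≥ 2, (E|S|^p)^{1/p} ≤ 4√2 · (p·‖a‖_∞ + √p·‖a‖_2), where ‖a‖_∞ = max_i a_i and ‖a‖_2 = (Σ a_i^2)^{1/2}. -/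
open MeasureTheory ProbabilityTheory

section LaplaceHelpers
open Real Set

lemma lap_dens_meas : Measurable (fun x : ℝ => ENNReal.ofReal ((1 / 2) * Real.exp (-|x|))) :=
  ENNReal.measurable_ofReal.comp ((measurable_exp.comp measurable_abs.neg).const_mul _)

lemma exp_int_Ioi {b : ℝ} (hb : 0 < b) :
    ∫ x in Ioi (0:ℝ), Real.exp (-(b * x)) = 1 / b := by
  have := integral_comp_mul_left_Ioi (fun x => Real.exp (-x)) 0 hb
  simp only [mul_zero, integral_exp_neg_Ioi, neg_zero, Real.exp_zero, smul_eq_mul, mul_one] at this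
  rw [this, one_div]

lemma lap_f_int {t : ℝ} (ht1 : t < 1) (ht2 : -1 < t) :
    IntegrableOn (fun x => (1/2) * Real.exp (-|x|) * Real.exp (t * x)) (Ioi (0:ℝ)) ∧
    IntegrableOn (fun x => (1/2) * Real.exp (-|x|) * Real.exp (t * x)) (Iic (0:ℝ)) := by
  set f : ℝ → ℝ := fun x => (1/2) * Real.exp (-|x|) * Real.exp (t * x) with hf
  constructor
  · have h : IntegrableOn (fun x : ℝ => (1/2) * Real.exp (-(1 - t) * x)) (Ioi 0) :=
      (exp_neg_integrableOn_Ioi 0 (by linarith)).const_mul _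
    apply h.congr_fun ?_ measurableSet_Ioi
    intro x hx
    simp only [hf, abs_of_pos (mem_Ioi.mp hx)]
    simp only [mul_assoc, ← Real.exp_add]
    ring_nf

  · have A : MeasurableEmbedding (fun x : ℝ => -x) :=
      (Homeomorph.neg ℝ).isClosedEmbedding.measurableEmbedding
    have h0 : IntegrableOn (fun x : ℝ => f (-x)) (Ici (0:ℝ)) := by
      have h : IntegrableOn (fun x : ℝ => (1/2) * Real.exp (-(1 + t) * x)) (Ici 0) := by
        have := (exp_neg_integrableOn_Ioi 0 (show (0:ℝ) < 1 + t by linarith)).const_mul (1/2 : ℝ)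
        unfold IntegrableOn at this ⊢
        rwa [Measure.restrict_congr_set Ioi_ae_eq_Ici] at this
      apply h.congr_fun ?_ measurableSet_Ici
      intro x hx
      simp only [hf, abs_neg, abs_of_nonneg (mem_Ici.mp hx)]
      simp only [mul_assoc, ← Real.exp_add]
      ring_nf
    have := (A.integrableOn_map_iff (f := f) (s := Iic (0:ℝ)) (μ := volume)).symm
    rw [Measure.map_neg_eq_self (volume : Measure ℝ)] at this
    apply this.mp
    have hpre : (fun x : ℝ => -x) ⁻¹' (Iic (0:ℝ)) = Ici (0:ℝ) := by ext x; simp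
    rw [hpre]
    exact h0

lemma laplace_exp_int {t : ℝ} (ht1 : t < 1) (ht2 : -1 < t) :
    Integrable (fun x => Real.exp (t * x)) laplaceMeasure ∧
    (∫ x, Real.exp (t * x) ∂laplaceMeasure) = 1 / (1 - t ^ 2) := by
  obtain ⟨hIoi, hIic⟩ := lap_f_int ht1 ht2
  have hd : ∀ x : ℝ, (ENNReal.ofReal ((1 / 2) * Real.exp (-|x|))).toReal = (1/2) * Real.exp (-|x|) :=
    fun x => ENNReal.toReal_ofReal (by positivity)
  constructor
  · rw [laplaceMeasure, integrable_withDensity_iff lap_dens_meas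
      (ae_of_all _ fun x => ENNReal.ofReal_lt_top)]
    have : Integrable (fun x : ℝ => (1/2) * Real.exp (-|x|) * Real.exp (t * x)) := by
      have := hIic.union hIoi
      rwa [Iic_union_Ioi, integrableOn_univ] at this
    apply this.congr
    filter_upwards with x
    rw [hd x]; ring
  · have hnn : Measurable fun x : ℝ => ((1 / 2) * Real.exp (-|x|)).toNNReal :=
      measurable_real_toNNReal.comp ((measurable_exp.comp measurable_abs.neg).const_mul _)
    rw [laplaceMeasure]
    simp only [ENNReal.ofReal]
    rw [integral_withDensity_eq_integral_smul hnn]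
    simp_rw [NNReal.smul_def, Real.coe_toNNReal _ (by positivity : (0:ℝ) ≤ (1/2) * Real.exp (-|_|)), smul_eq_mul]
    rw [← intervalIntegral.integral_Iic_add_Ioi hIic hIoi]
    have e1 : (∫ x in Ioi (0:ℝ), (1/2) * Real.exp (-|x|) * Real.exp (t * x)) = (1/2) * (1/(1 - t)) := by
      rw [setIntegral_congr_fun measurableSet_Ioi
        (g := fun x => (1/2) * Real.exp (-((1 - t) * x))) ?_]
      · rw [integral_const_mul, exp_int_Ioi (by linarith)]
      · intro x hx
        simp only [abs_of_pos (mem_Ioi.mp hx), mul_assoc, ← Real.exp_add]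
        ring_nf
    have e2 : (∫ x in Iic (0:ℝ), (1/2) * Real.exp (-|x|) * Real.exp (t * x)) = (1/2) * (1/(1 + t)) := by
      have : (∫ x in Iic (0:ℝ), (1/2) * Real.exp (-|x|) * Real.exp (t * x))
          = ∫ x in Iic (0:ℝ), (1/2) * Real.exp (-|(-x)|) * Real.exp (t * -(-x)) := by
        congr 1 with x
        rw [abs_neg, neg_neg]
      rw [this, integral_comp_neg_Iic (f := fun x => (1/2) * Real.exp (-|x|) * Real.exp (t * -x)), neg_zero]
      rw [setIntegral_congr_fun measurableSet_Ioi
        (g := fun x => (1/2) * Real.exp (-((1 + t) * x))) ?_]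
      · rw [integral_const_mul, exp_int_Ioi (by linarith)]
      · intro x hx
        simp only [abs_of_pos (mem_Ioi.mp hx), mul_assoc, ← Real.exp_add]
        ring_nf
    rw [e1, e2]
    have h1 : (1:ℝ) - t ≠ 0 := by linarith
    have h2 : (1:ℝ) + t ≠ 0 := by linarith
    have h3 : (1:ℝ) - t ^ 2 ≠ 0 := by
      intro h; have : (1 - t) * (1 + t) = 0 := by nlinarith
      rcases mul_eq_zero.mp this with h' | h' <;> [exact h1 h'; exact h2 h']
    field_simp
    ring

lemma pull_exp {Ω : Type*} [MeasurableSpace Ω] (μ : Measure Ω) (Z : Ω → ℝ)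
    (hZ : Measurable Z) (hlaw : μ.map Z = laplaceMeasure) {t : ℝ} (h1 : |t| < 1) :
    Integrable (fun ω => Real.exp (t * Z ω)) μ ∧
    (∫ ω, Real.exp (t * Z ω) ∂μ) = 1 / (1 - t ^ 2) := by
  have ht1 : t < 1 := lt_of_le_of_lt (le_abs_self t) h1
  have ht2 : -1 < t := neg_lt_of_abs_lt h1
  obtain ⟨hint, hval⟩ := laplace_exp_int ht1 ht2
  have hg : AEStronglyMeasurable (fun x : ℝ => Real.exp (t * x)) (μ.map Z) :=
    (measurable_exp.comp (measurable_id.const_mul t)).aestronglyMeasurable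
  constructor
  · have := (integrable_map_measure hg hZ.aemeasurable).mp (by rwa [hlaw])
    exact this
  · rw [← integral_map hZ.aemeasurable hg, hlaw, hval]

lemma rpow_le_exp_aux {p t : ℝ} (hp : 0 < p) (ht : 0 ≤ t) :
    t ^ p ≤ (p / Real.exp 1) ^ p * Real.exp t := by
  rcases eq_or_lt_of_le ht with h | h
  · rw [← h, Real.zero_rpow hp.ne']
    positivity
  · have hpe : 0 < p / Real.exp 1 := by positivity
    rw [Real.rpow_def_of_pos h, Real.rpow_def_of_pos hpe, ← Real.exp_add]
    apply Real.exp_le_exp.mpr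
    have hlog : Real.log (t / p) ≤ t / p - 1 := Real.log_le_sub_one_of_pos (by positivity)
    rw [Real.log_div h.ne' hp.ne'] at hlog
    have h2 : p * (Real.log t - Real.log p) ≤ p * (t / p - 1) :=
      mul_le_mul_of_nonneg_left hlog hp.le
    have h3 : p * (t / p) = t := by field_simp
    rw [Real.log_div hp.ne' (Real.exp_ne_zero 1), Real.log_exp]
    nlinarith

lemma abs_rpow_le {p l s : ℝ} (hp : 0 < p) (hl : 0 < l) :
    |s| ^ p ≤ (p / (Real.exp 1 * l)) ^ p * (Real.exp (l * s) + Real.exp (-(l * s))) := by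
  have h2 : (l * |s|) ^ p ≤ (p / Real.exp 1) ^ p * Real.exp (l * |s|) :=
    rpow_le_exp_aux hp (by positivity)
  have h3 : Real.exp (l * |s|) ≤ Real.exp (l * s) + Real.exp (-(l * s)) := by
    rcases abs_cases s with ⟨h, _⟩ | ⟨h, _⟩
    · rw [h]
      exact le_add_of_nonneg_right (Real.exp_pos _).le
    · rw [h, mul_neg, ← neg_mul]
      exact le_add_of_nonneg_left (Real.exp_pos _).le
  calc |s| ^ p = (l * |s|) ^ p * (1 / l) ^ p := by
        rw [← Real.mul_rpow (by positivity) (by positivity)]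
        congr 1
        field_simp
    _ ≤ ((p / Real.exp 1) ^ p * Real.exp (l * |s|)) * (1 / l) ^ p :=
        mul_le_mul_of_nonneg_right h2 (by positivity)
    _ = ((p / Real.exp 1) ^ p * (1 / l) ^ p) * Real.exp (l * |s|) := by ring
    _ = (p / (Real.exp 1 * l)) ^ p * Real.exp (l * |s|) := by
        rw [← Real.mul_rpow (by positivity) (by positivity)]
        congr 2
        field_simp
    _ ≤ _ := mul_le_mul_of_nonneg_left h3 (by positivity)

lemma one_div_le_exp2 {x : ℝ} (h0 : 0 ≤ x) (hh : x ≤ 1/2) :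
    1 / (1 - x) ≤ Real.exp (2 * x) := by
  have h1 : 0 < 1 - x := by linarith
  rw [div_le_iff₀ h1]
  nlinarith [Real.add_one_le_exp (2 * x), Real.exp_pos (2 * x)]

end LaplaceHelpers

set_option maxHeartbeats 2000000 in
/-- Moment upper bound (Theorem 4.1, upper part): for independent standard Laplace variables
`Xᵢ` and positive weights `aᵢ`, for every `p ≥ 2`,
`(E|S|^p)^{1/p} ≤ 4√2 (p ‖a‖_∞ + √p ‖a‖₂)`. -/
theorem laplace_sum_moment_upper
    {Ω : Type*} [MeasurableSpace Ω] (μ : Measure Ω) [IsProbabilityMeasure μ]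
    (n : ℕ) [NeZero n] (X : Fin n → Ω → ℝ) (a : Fin n → ℝ)
    (hXmeas : ∀ i, Measurable (X i))
    (hindep : iIndepFun X μ)
    (hlaw : ∀ i, μ.map (X i) = laplaceMeasure)
    (ha : ∀ i, 0 < a i)
    (p : ℝ) (hp : 2 ≤ p) :
    (∫ ω, |∑ i, a i * X i ω| ^ p ∂μ) ^ (1 / p) ≤
      4 * Real.sqrt 2 *
        (p * Finset.univ.sup' Finset.univ_nonempty a
          + Real.sqrt p * Real.sqrt (∑ i, a i ^ 2)) := by
  classical
  have hppos : 0 < p := by linarith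
  set A := Finset.univ.sup' Finset.univ_nonempty a with hA
  have hApos : 0 < A := lt_of_lt_of_le (ha ⟨0, Nat.pos_of_ne_zero (NeZero.ne n)⟩)
      (Finset.le_sup' a (Finset.mem_univ _))
  have hsum_pos : 0 < ∑ i, a i ^ 2 :=
    Finset.sum_pos (fun i _ => by have := ha i; positivity) Finset.univ_nonempty
  set B := Real.sqrt (∑ i, a i ^ 2) with hB
  have hBpos : 0 < B := Real.sqrt_pos.mpr hsum_pos
  have hsp : 0 < Real.sqrt p := Real.sqrt_pos.mpr hppos
  set l := min (1 / (2 * A)) (Real.sqrt p / (2 * B)) with hl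
  have hlpos : 0 < l := lt_min (by positivity) (by positivity)
  have hla : ∀ i, l * a i ≤ 1 / 2 := by
    intro i
    have h1 : l ≤ 1 / (2 * A) := min_le_left _ _
    have h2 : a i ≤ A := Finset.le_sup' a (Finset.mem_univ i)
    calc l * a i ≤ (1 / (2 * A)) * A := mul_le_mul h1 h2 (ha i).le (by positivity)
      _ = 1 / 2 := by field_simp
  have hlB : 2 * l ^ 2 * (∑ i, a i ^ 2) ≤ p / 2 := by
    have h1 : l ≤ Real.sqrt p / (2 * B) := min_le_right _ _
    have hB2 : B ^ 2 = ∑ i, a i ^ 2 := Real.sq_sqrt hsum_pos.le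
    have hl2 : l ^ 2 ≤ p / (4 * B ^ 2) := by
      have hmm := mul_le_mul h1 h1 hlpos.le (by positivity : (0:ℝ) ≤ Real.sqrt p / (2 * B))
      calc l ^ 2 = l * l := sq l
        _ ≤ (Real.sqrt p / (2 * B)) * (Real.sqrt p / (2 * B)) := hmm
        _ = p / (4 * B ^ 2) := by
            rw [div_mul_div_comm, Real.mul_self_sqrt hppos.le]
            congr 1
            ring
    calc 2 * l ^ 2 * (∑ i, a i ^ 2) = 2 * l ^ 2 * B ^ 2 := by rw [hB2]
      _ ≤ 2 * (p / (4 * B ^ 2)) * B ^ 2 := by nlinarith [sq_nonneg B]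
      _ = p / 2 := by field_simp; ring
  -- scaled variables
  set Y : Fin n → Ω → ℝ := fun i ω => a i * X i ω with hY
  have hYmeas : ∀ i, Measurable (Y i) := fun i => (hXmeas i).const_mul _
  have hYindep : iIndepFun Y μ :=
    hindep.comp (fun i x => a i * x) (fun i => measurable_id.const_mul _)
  set T : Ω → ℝ := ∑ i, Y i with hT
  have hrw : ∀ ω, ∑ i, a i * X i ω = T ω := by
    intro ω
    rw [hT, Finset.sum_apply]
  have key : ∀ t : ℝ, (∀ i, |t * a i| < 1) →
      Integrable (fun ω => Real.exp (t * T ω)) μ ∧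
      (∫ ω, Real.exp (t * T ω) ∂μ) = ∏ i, (1 / (1 - (t * a i) ^ 2)) := by
    intro t hti
    have hYint : ∀ i, Integrable (fun ω => Real.exp (t * Y i ω)) μ := by
      intro i
      have h0 := (pull_exp μ (X i) (hXmeas i) (hlaw i) (hti i)).1
      apply h0.congr
      filter_upwards with ω
      rw [hY, mul_assoc]
    refine ⟨hYindep.integrable_exp_mul_sum hYmeas (fun i _ => hYint i), ?_⟩
    have hs := hYindep.mgf_sum hYmeas Finset.univ (t := t)
    have hlhs : (∫ ω, Real.exp (t * T ω) ∂μ) = mgf (∑ i, Y i) μ t := rfl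
    rw [hlhs, hs]
    apply Finset.prod_congr rfl
    intro i _
    have h2 := (pull_exp μ (X i) (hXmeas i) (hlaw i) (hti i)).2
    have : mgf (Y i) μ t = ∫ ω, Real.exp ((t * a i) * X i ω) ∂μ := by
      rw [mgf]
      congr 1 with ω
      rw [hY, mul_assoc]
    rw [this, h2]
  have hsmall : ∀ t : ℝ, (t = l ∨ t = -l) → ∀ i, |t * a i| < 1 := by
    intro t ht i
    have h1 : |t * a i| = l * a i := by
      rcases ht with h | h <;> rw [h] <;>
        simp [abs_mul, abs_of_pos hlpos, abs_of_pos (ha i)]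
    rw [h1]
    linarith [hla i]
  have prod_bound : ∀ t : ℝ, (t = l ∨ t = -l) →
      (∏ i, (1 / (1 - (t * a i) ^ 2))) ≤ Real.exp (p / 2) := by
    intro t ht
    have hsq : ∀ i, (t * a i) ^ 2 = l ^ 2 * a i ^ 2 := by
      intro i
      rcases ht with h | h <;> rw [h] <;> ring
    have hx : ∀ i, (t * a i) ^ 2 ≤ 1 / 2 := by
      intro i
      rw [hsq i]
      have h1 := hla i
      have h2 : (l * a i) ^ 2 ≤ (1/2 : ℝ) ^ 2 := by
        apply sq_le_sq' (by nlinarith [mul_pos hlpos (ha i)]) h1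
      nlinarith [mul_pos hlpos (ha i)]
    calc (∏ i, (1 / (1 - (t * a i) ^ 2)))
        ≤ ∏ i, Real.exp (2 * (t * a i) ^ 2) := by
          apply Finset.prod_le_prod
          · intro i _
            have h0 := hx i
            have h1 : (0:ℝ) < 1 - (t * a i) ^ 2 := by nlinarith
            positivity
          · intro i _
            exact one_div_le_exp2 (sq_nonneg _) (hx i)
      _ = Real.exp (∑ i, 2 * (t * a i) ^ 2) := (Real.exp_sum _ _).symm
      _ ≤ Real.exp (p / 2) := by
          apply Real.exp_le_exp.mpr
          have : (∑ i, 2 * (t * a i) ^ 2) = 2 * l ^ 2 * ∑ i, a i ^ 2 := by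
            simp_rw [hsq]
            rw [Finset.mul_sum]
            apply Finset.sum_congr rfl
            intro i _
            ring
          rw [this]
          exact hlB
  obtain ⟨int1, val1⟩ := key l (hsmall l (Or.inl rfl))
  obtain ⟨int2, val2⟩ := key (-l) (hsmall (-l) (Or.inr rfl))
  set c : ℝ := p / (Real.exp 1 * l) with hc
  have hcpos : 0 < c := by positivity
  have hmono : (∫ ω, |T ω| ^ p ∂μ) ≤ c ^ p * (2 * Real.exp (p / 2)) := by
    have hint_g : Integrable
        (fun ω => c ^ p * (Real.exp (l * T ω) + Real.exp (-(l * T ω)))) μ := by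
      apply Integrable.const_mul
      apply int1.add (int2.congr ?_)
      filter_upwards with ω
      rw [neg_mul]
    have step1 : (∫ ω, |T ω| ^ p ∂μ)
        ≤ ∫ ω, c ^ p * (Real.exp (l * T ω) + Real.exp (-(l * T ω))) ∂μ := by
      apply integral_mono_of_nonneg (ae_of_all _ fun ω => by positivity) hint_g
      filter_upwards with ω
      exact abs_rpow_le hppos hlpos
    refine step1.trans ?_
    rw [integral_const_mul]
    have hadd : (∫ ω, (Real.exp (l * T ω) + Real.exp (-(l * T ω))) ∂μ)
        = (∫ ω, Real.exp (l * T ω) ∂μ) + ∫ ω, Real.exp ((-l) * T ω) ∂μ := by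
      rw [← integral_add int1 (int2.congr ?_)]
      · congr 1 with ω
        rw [neg_mul]
      · filter_upwards with ω
        rw [neg_mul]
    rw [hadd, val1, val2]
    have hb1 := prod_bound l (Or.inl rfl)
    have hb2 := prod_bound (-l) (Or.inr rfl)
    nlinarith [Real.exp_pos (p/2), pow_pos hcpos 2, Real.rpow_pos_of_pos hcpos p]
  -- take p-th root
  simp_rw [hrw]
  have hR0 : 0 ≤ ∫ ω, |T ω| ^ p ∂μ := by
    apply integral_nonneg
    intro ω
    positivity
  have hroot : (∫ ω, |T ω| ^ p ∂μ) ^ (1/p) ≤ (c ^ p * (2 * Real.exp (p / 2))) ^ (1/p) :=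
    Real.rpow_le_rpow hR0 hmono (by positivity)
  refine hroot.trans ?_
  have hcal : (c ^ p * (2 * Real.exp (p / 2))) ^ (1/p)
      = c * ((2:ℝ) ^ (1/p) * Real.exp (1/2)) := by
    rw [Real.mul_rpow (by positivity) (by positivity),
      Real.mul_rpow (by positivity) (by positivity),
      ← Real.rpow_mul hcpos.le, mul_one_div_cancel hppos.ne', Real.rpow_one]
    congr 1
    congr 1
    rw [Real.rpow_def_of_pos (Real.exp_pos _), Real.log_exp]
    congr 1
    field_simp
  rw [hcal]
  -- numeric estimates
  set D : ℝ := 2 * p * A + 2 * Real.sqrt p * B with hD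
  have hDpos : 0 < D := by positivity
  have hpl : p / l ≤ D := by
    rcases min_cases (1 / (2 * A)) (Real.sqrt p / (2 * B)) with ⟨h, _⟩ | ⟨h, _⟩
    · rw [hl, h]
      have h2 : p / (1 / (2 * A)) = 2 * p * A := by field_simp
      rw [h2, hD]
      nlinarith [mul_pos hsp hBpos]
    · rw [hl, h]
      have h2 : p / (Real.sqrt p / (2 * B)) = 2 * Real.sqrt p * B := by
        rw [div_div_eq_mul_div]
        rw [div_eq_iff hsp.ne']
        nlinarith [Real.mul_self_sqrt hppos.le]
      rw [h2, hD]
      nlinarith [mul_pos hppos hApos]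
  have h2p : (2:ℝ) ^ (1/p) ≤ 2 := by
    calc (2:ℝ) ^ (1/p) ≤ (2:ℝ) ^ (1:ℝ) :=
          Real.rpow_le_rpow_of_exponent_le one_le_two (by rw [div_le_one hppos]; linarith)
      _ = 2 := Real.rpow_one 2
  have hexp : Real.exp (1/2 : ℝ) ≤ Real.exp 1 := Real.exp_le_exp.mpr (by norm_num)
  have hc_le : c ≤ D / Real.exp 1 := by
    rw [hc, div_le_div_iff₀ (by positivity) (Real.exp_pos 1)]
    calc p * Real.exp 1 = (p / l) * l * Real.exp 1 := by field_simp
      _ ≤ D * l * Real.exp 1 := by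
          apply mul_le_mul_of_nonneg_right (mul_le_mul_of_nonneg_right hpl hlpos.le)
            (Real.exp_pos 1).le
      _ = D * (Real.exp 1 * l) := by ring
  have step2 : c * ((2:ℝ) ^ (1/p) * Real.exp (1/2)) ≤ (D / Real.exp 1) * (2 * Real.exp 1) := by
    apply mul_le_mul hc_le ?_ (by positivity) (by positivity)
    apply mul_le_mul h2p hexp (Real.exp_pos _).le (by norm_num)
  refine step2.trans ?_
  have heq : (D / Real.exp 1) * (2 * Real.exp 1) = 2 * D := by
    field_simp
  rw [heq]
  have hs2 : (1:ℝ) ≤ Real.sqrt 2 := by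
    nlinarith [Real.sq_sqrt (by norm_num : (0:ℝ) ≤ 2), Real.sqrt_nonneg 2]
  have hnn : 0 ≤ p * A + Real.sqrt p * B := by positivity
  calc 2 * D = 4 * (p * A + Real.sqrt p * B) := by rw [hD]; ring
    _ ≤ 4 * Real.sqrt 2 * (p * A + Real.sqrt p * B) := by nlinarith
end

section
/- For every u > 0, sup_{θ ∈ (0,1)} (θu + log(1-θ²)) = sqrt(1+u²) - 1 - log((1 + sqrt(1+u²))/2). -/
/-- For every `u > 0`,
`sup_{θ ∈ (0,1)} (θ u + log(1-θ²)) = sqrt(1+u²) - 1 - log((1 + sqrt(1+u²))/2)`. -/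
theorem sup_theta_mul_add_log_eq
    (u : ℝ) (hu : 0 < u) :
    (⨆ θ : Set.Ioo (0 : ℝ) 1, ((θ : ℝ) * u + Real.log (1 - (θ : ℝ) ^ 2)))
      = Real.sqrt (1 + u ^ 2) - 1 - Real.log ((1 + Real.sqrt (1 + u ^ 2)) / 2) := by
  set s := Real.sqrt (1 + u ^ 2) with hs_def
  have hs2 : s ^ 2 = 1 + u ^ 2 := Real.sq_sqrt (by positivity)
  have hs0 : 0 ≤ s := Real.sqrt_nonneg _
  have hs1 : 1 < s := by nlinarith
  set t : ℝ := (s - 1) / u with ht_def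
  have ht0 : 0 < t := div_pos (by linarith) hu
  have ht1 : t < 1 := by
    rw [ht_def, div_lt_one hu]; nlinarith
  have htu : t * u = s - 1 := div_mul_cancel₀ _ hu.ne'
  have h1t : 1 - t ^ 2 = 2 / (s + 1) := by
    rw [ht_def]
    field_simp
    nlinarith
  have ht2 : 0 < 1 - t ^ 2 := by nlinarith
  have hu_eq : u = t * (s + 1) := by
    rw [ht_def, div_mul_eq_mul_div, eq_div_iff hu.ne']
    nlinarith
  have key : ∀ θ : ℝ, 0 < θ → θ < 1 →
      θ * u + Real.log (1 - θ ^ 2) ≤ t * u + Real.log (1 - t ^ 2) := by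
    intro θ h0 h1
    have hθ2 : 0 < 1 - θ ^ 2 := by nlinarith
    set D := (1 - θ ^ 2) / (1 - t ^ 2) with hD_def
    have hD : D * (1 - t ^ 2) = 1 - θ ^ 2 := div_mul_cancel₀ _ ht2.ne'
    have hlog : Real.log (1 - θ ^ 2) - Real.log (1 - t ^ 2) ≤ D - 1 := by
      rw [← Real.log_div hθ2.ne' ht2.ne']
      have := Real.log_le_sub_one_of_pos (div_pos hθ2 ht2)
      linarith
    have halg : θ * u + (D - 1) ≤ t * u := by
      have h2 : (1 - t ^ 2) * (s + 1) = 2 := by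
        rw [h1t]; field_simp
      nlinarith [sq_nonneg (θ - t), mul_nonneg (sq_nonneg (θ - t)) (by linarith : (0:ℝ) ≤ s + 1)]
    linarith
  have hval : t * u + Real.log (1 - t ^ 2) = s - 1 - Real.log ((1 + s) / 2) := by
    rw [htu, h1t, Real.log_div (by norm_num) (by linarith),
      Real.log_div (by linarith) (by norm_num)]
    ring_nf
  have hbdd : BddAbove (Set.range fun θ : Set.Ioo (0 : ℝ) 1 =>
      ((θ : ℝ) * u + Real.log (1 - (θ : ℝ) ^ 2))) := by
    refine ⟨t * u + Real.log (1 - t ^ 2), ?_⟩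
    rintro x ⟨⟨θ, h0, h1⟩, rfl⟩
    exact key θ h0 h1
  haveI : Nonempty (Set.Ioo (0 : ℝ) 1) := ⟨⟨t, ht0, ht1⟩⟩
  apply le_antisymm
  · refine ciSup_le ?_
    rintro ⟨θ, h0, h1⟩
    exact (key θ h0 h1).trans_eq hval
  · rw [← hval]
    exact le_ciSup hbdd ⟨t, ht0, ht1⟩
end

section
/- Let h(u) = sqrt(1+u²) - 1 - log((1 + sqrt(1+u²))/2) for u > 0. Then h(u) ≥ u²/5 for all u ∈ (0, √2) and h(u) ≥ u/4 for all u ∈ (√2, ∞). -/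
/-- For `x ≥ 1`, `2 log x ≤ x - x⁻¹`. -/
lemma two_log_le_sub_inv (x : ℝ) (hx : 1 ≤ x) : 2 * Real.log x ≤ x - x⁻¹ := by
  have hmono : MonotoneOn (fun y : ℝ => y - y⁻¹ - 2 * Real.log y) (Set.Ici 1) := by
    apply monotoneOn_of_deriv_nonneg (convex_Ici 1)
    · apply ContinuousOn.sub
      · exact continuousOn_id.sub (continuousOn_inv₀.mono (by
          intro y hy
          have hy' : (1:ℝ) ≤ y := hy
          simp only [Set.mem_compl_iff, Set.mem_singleton_iff]; intro hc; rw [hc] at hy'; linarith))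
      · exact continuousOn_const.mul (Real.continuousOn_log.mono (by
          intro y hy
          have hy' : (1:ℝ) ≤ y := hy
          simp only [Set.mem_compl_iff, Set.mem_singleton_iff]; intro hc; rw [hc] at hy'; linarith))
    · intro y hy
      rw [interior_Ici] at hy
      have hy0 : y ≠ 0 := by simp only [Set.mem_Ioi] at hy; intro hc; rw [hc] at hy; linarith
      exact ((differentiable_id.differentiableAt.sub
        ((differentiableAt_inv hy0))).sub
        ((Real.differentiableAt_log hy0).const_mul 2)).differentiableWithinAt
    · intro y hy
      rw [interior_Ici] at hy
      simp only [Set.mem_Ioi] at hy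
      have hy0 : y ≠ 0 := by intro hc; rw [hc] at hy; linarith
      have hd : HasDerivAt (fun y : ℝ => y - y⁻¹ - 2 * Real.log y)
          (1 - (-(y ^ 2)⁻¹) - 2 * y⁻¹) y := by
        exact ((hasDerivAt_id y).sub (hasDerivAt_inv hy0)).sub
          ((Real.hasDerivAt_log hy0).const_mul 2)
      rw [hd.deriv]
      have h1 : (y ^ 2)⁻¹ = (y⁻¹) ^ 2 := by rw [inv_pow]
      nlinarith [sq_nonneg (1 - y⁻¹)]
  have h01 : (1:ℝ) ∈ Set.Ici (1:ℝ) := Set.mem_Ici.2 le_rfl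
  have hx1 : x ∈ Set.Ici (1:ℝ) := Set.mem_Ici.2 hx
  have := hmono h01 hx1 hx
  simp only [Real.log_one] at this
  norm_num at this
  linarith

lemma log_bound (s : ℝ) (hs : 1 ≤ s) :
    Real.log ((1 + s) / 2) * (4 * (s + 1)) ≤ (s - 1) * (s + 3) := by
  have ht : (1:ℝ) ≤ (1 + s) / 2 := by linarith
  have hlog := two_log_le_sub_inv _ ht
  have hpos : (0:ℝ) < 2 * (s + 1) := by linarith
  have key := mul_le_mul_of_nonneg_right hlog hpos.le
  have hne : (1 + s) ≠ 0 := by linarith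
  have heq : ((1 + s) / 2 - ((1 + s) / 2)⁻¹) * (2 * (s + 1)) = (s - 1) * (s + 3) := by
    field_simp
    ring
  rw [heq] at key
  calc Real.log ((1 + s) / 2) * (4 * (s + 1))
      = 2 * Real.log ((1 + s) / 2) * (2 * (s + 1)) := by ring
    _ ≤ (s - 1) * (s + 3) := key

/-- Equation (4.2): with `h(u) = sqrt(1+u²) - 1 - log((1 + sqrt(1+u²))/2)` for `u > 0`,
one has `h(u) ≥ u²/5` on `(0, √2)` and `h(u) ≥ u/4` on `(√2, ∞)`. -/
theorem h_lower_bounds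
    (h : ℝ → ℝ)
    (hh : ∀ u, 0 < u →
      h u = Real.sqrt (1 + u ^ 2) - 1 - Real.log ((1 + Real.sqrt (1 + u ^ 2)) / 2)) :
    (∀ u ∈ Set.Ioo (0 : ℝ) (Real.sqrt 2), u ^ 2 / 5 ≤ h u) ∧
      (∀ u ∈ Set.Ioi (Real.sqrt 2), u / 4 ≤ h u) := by
  constructor
  · rintro u ⟨hu0, huu⟩
    rw [hh u hu0]
    set s := Real.sqrt (1 + u ^ 2) with hsdef
    have hs2 : s ^ 2 = 1 + u ^ 2 := Real.sq_sqrt (by positivity)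
    have hs0 : 0 ≤ s := Real.sqrt_nonneg _
    have hs1 : 1 ≤ s := by nlinarith [sq_nonneg u]
    have hu2' : u ^ 2 < 2 := by
      nlinarith [Real.sq_sqrt (show (0:ℝ) ≤ 2 by norm_num), Real.sqrt_nonneg 2]
    have hs3 : s ^ 2 < 3 := by linarith
    have hs74 : s ≤ 7 / 4 := by nlinarith
    have hlog := log_bound s hs1
    have h4 : (0:ℝ) < 4 * (s + 1) := by linarith
    have key : (s - 1) * (3 * s + 1) ≤ (s - 1 - Real.log ((1 + s) / 2)) * (4 * (s + 1)) := by
      nlinarith [hlog]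
    have hfac : 0 ≤ (s - 1) * (1 + 7 * s - 4 * s ^ 2) := by
      have h1 : 0 ≤ s - 1 := by linarith
      have h2 : 0 ≤ 1 + 7 * s - 4 * s ^ 2 := by nlinarith
      exact mul_nonneg h1 h2
    have hpoly : u ^ 2 / 5 * (4 * (s + 1)) ≤ (s - 1) * (3 * s + 1) := by nlinarith
    have hfin : u ^ 2 / 5 * (4 * (s + 1)) ≤
        (s - 1 - Real.log ((1 + s) / 2)) * (4 * (s + 1)) := le_trans hpoly key
    exact (mul_le_mul_iff_of_pos_right h4).mp hfin
  · rintro u hu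
    have hu' : Real.sqrt 2 < u := hu
    have hsqrt2 : (0:ℝ) < Real.sqrt 2 := Real.sqrt_pos.2 (by norm_num)
    have hu0 : 0 < u := lt_trans hsqrt2 hu'
    rw [hh u hu0]
    set s := Real.sqrt (1 + u ^ 2) with hsdef
    have hs2 : s ^ 2 = 1 + u ^ 2 := Real.sq_sqrt (by positivity)
    have hs0 : 0 ≤ s := Real.sqrt_nonneg _
    have hs1 : 1 ≤ s := by nlinarith [sq_nonneg u]
    have hu2' : 2 < u ^ 2 := by
      nlinarith [Real.sq_sqrt (show (0:ℝ) ≤ 2 by norm_num), Real.sqrt_nonneg 2]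
    have hs3 : 3 < s ^ 2 := by linarith
    have hs32 : 3 / 2 ≤ s := by nlinarith
    have hlog := log_bound s hs1
    have h4 : (0:ℝ) < 4 * (s + 1) := by linarith
    have key : (s - 1) * (3 * s + 1) ≤ (s - 1 - Real.log ((1 + s) / 2)) * (4 * (s + 1)) := by
      nlinarith [hlog]
    have hinner : 0 ≤ 8 * s ^ 3 - 6 * s ^ 2 - 8 * s - 2 := by
      nlinarith [mul_nonneg (by linarith : (0:ℝ) ≤ s ^ 2 - 3) (by linarith : (0:ℝ) ≤ 8 * s - 6)]
    have hA : (u * (s + 1)) ^ 2 = (s ^ 2 - 1) * (s + 1) ^ 2 := by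
      rw [mul_pow, show u ^ 2 = s ^ 2 - 1 by linarith]
    have hq : (u * (s + 1)) ^ 2 ≤ ((s - 1) * (3 * s + 1)) ^ 2 := by
      rw [hA]
      linarith [mul_nonneg (by linarith : (0:ℝ) ≤ s - 1) hinner,
        sq_nonneg (s - 1), sq_nonneg (s + 1)]
    have hApos : 0 < u * (s + 1) := mul_pos hu0 (by linarith)
    have hBpos : 0 ≤ (s - 1) * (3 * s + 1) := mul_nonneg (by linarith) (by linarith)
    have keyu : u * (s + 1) ≤ (s - 1) * (3 * s + 1) :=
      (pow_le_pow_iff_left₀ hApos.le hBpos two_ne_zero).mp hq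
    have hfin : u / 4 * (4 * (s + 1)) ≤
        (s - 1 - Real.log ((1 + s) / 2)) * (4 * (s + 1)) := by
      have : u / 4 * (4 * (s + 1)) = u * (s + 1) := by ring
      rw [this]; linarith [key, keyu]
    exact (mul_le_mul_iff_of_pos_right h4).mp hfin
end

section
/- Let X_1, ..., X_n be i.i.d. exponential random variables with mean 1 and S = Σ_{i=1}^n a_i X_i with positive weights a_i. Then 1/24 < P(S ≥ E S) < 23/24. -/
open MeasureTheory ProbabilityTheory

open MeasureTheory ProbabilityTheory Real Set
open scoped NNReal ENNReal

noncomputable def expDens (x : ℝ) : ℝ≥0 := Real.toNNReal (if 0 ≤ x then Real.exp (-x) else 0)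

lemma expDens_meas : Measurable expDens := by
  apply Measurable.real_toNNReal
  exact Measurable.ite measurableSet_Ici (by fun_prop) measurable_const

lemma expMeasure_one_eq : expMeasure 1 =
    volume.withDensity (fun x => ((expDens x : ℝ≥0) : ℝ≥0∞)) := by
  rw [expMeasure, gammaMeasure]
  congr 1
  funext x
  rw [show gammaPDF 1 1 x = exponentialPDF 1 x from rfl, exponentialPDF_eq]
  simp [expDens, ENNReal.ofReal]

lemma expDens_ae_eq (k : ℕ) :
    (fun x => (expDens x : ℝ) * x ^ k) =ᵐ[volume]
      (Ioi 0).indicator (fun x => Real.exp (-x) * x ^ k) := by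
  have h0 : ∀ᵐ (x : ℝ) ∂volume, x ≠ 0 := by
    rw [ae_iff]
    simp [Real.volume_singleton]
  filter_upwards [h0] with x hx
  rcases lt_trichotomy x 0 with h | h | h
  · simp [expDens, if_neg (not_le.mpr h), indicator_of_notMem (notMem_Ioi.mpr h.le)]
  · exact absurd h hx
  · simp [expDens, if_pos h.le, indicator_of_mem (mem_Ioi.mpr h), Real.toNNReal,
      max_eq_left (Real.exp_pos _).le]

lemma gammaEq (k : ℕ) : ∫ x in Ioi (0:ℝ), Real.exp (-x) * x ^ k = (k.factorial : ℝ) := by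
  rw [← Real.Gamma_nat_eq_factorial, Real.Gamma_eq_integral (by positivity : (0:ℝ) < k + 1)]
  apply setIntegral_congr_fun measurableSet_Ioi
  intro x hx
  simp [add_sub_cancel_right, Real.rpow_natCast]

lemma gammaInt (k : ℕ) : IntegrableOn (fun x : ℝ => Real.exp (-x) * x ^ k) (Ioi 0) volume := by
  have h := Real.GammaIntegral_convergent (s := (k : ℝ) + 1) (by positivity)
  apply h.congr_fun ?_ measurableSet_Ioi
  intro x hx
  simp [add_sub_cancel_right, Real.rpow_natCast]

lemma integrable_expDens_pow (k : ℕ) :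
    Integrable (fun x => (expDens x : ℝ) * x ^ k) volume := by
  rw [integrable_congr (expDens_ae_eq k)]
  rw [integrable_indicator_iff measurableSet_Ioi]
  exact gammaInt k

lemma integral_expDens_pow (k : ℕ) :
    ∫ x, (expDens x : ℝ) * x ^ k = (k.factorial : ℝ) := by
  rw [integral_congr_ae (expDens_ae_eq k), integral_indicator measurableSet_Ioi, gammaEq]

lemma integrable_pow_expMeasure (k : ℕ) :
    Integrable (fun x : ℝ => x ^ k) (expMeasure 1) := by
  rw [expMeasure_one_eq, integrable_withDensity_iff_integrable_smul expDens_meas]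
  simpa [NNReal.smul_def, smul_eq_mul] using integrable_expDens_pow k

lemma integral_pow_expMeasure (k : ℕ) :
    ∫ x, x ^ k ∂(expMeasure 1) = (k.factorial : ℝ) := by
  rw [expMeasure_one_eq, integral_withDensity_eq_integral_smul expDens_meas]
  simpa [NNReal.smul_def, smul_eq_mul] using integral_expDens_pow k
section CS

variable {Ω : Type*} [MeasurableSpace Ω] {μ : Measure Ω} [IsProbabilityMeasure μ]

lemma my_cs {f g : Ω → ℝ} (hf : 0 ≤ f) (hg : 0 ≤ g)
    (hfm : AEStronglyMeasurable f μ) (hgm : AEStronglyMeasurable g μ)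
    (hf2 : Integrable (fun ω => f ω ^ 2) μ) (hg2 : Integrable (fun ω => g ω ^ 2) μ) :
    (∫ ω, f ω * g ω ∂μ) ^ 2 ≤ (∫ ω, f ω ^ 2 ∂μ) * ∫ ω, g ω ^ 2 ∂μ := by
  have hpq : Real.HolderConjugate 2 2 := Real.HolderConjugate.two_two
  have hfL : MemLp f (ENNReal.ofReal 2) μ := by
    rw [show ENNReal.ofReal 2 = 2 by norm_num]
    exact (memLp_two_iff_integrable_sq hfm).mpr hf2
  have hgL : MemLp g (ENNReal.ofReal 2) μ := by
    rw [show ENNReal.ofReal 2 = 2 by norm_num]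
    exact (memLp_two_iff_integrable_sq hgm).mpr hg2
  have h := integral_mul_le_Lp_mul_Lq_of_nonneg hpq (ae_of_all μ hf) (ae_of_all μ hg) hfL hgL
  have hrw : ∀ h : Ω → ℝ, ∫ ω, h ω ^ (2:ℝ) ∂μ = ∫ ω, h ω ^ 2 ∂μ := by
    intro h; apply integral_congr_ae; filter_upwards with ω
    rw [show (2:ℝ) = ((2:ℕ):ℝ) by norm_num, Real.rpow_natCast]
  rw [hrw f, hrw g] at h
  have hA : 0 ≤ ∫ ω, f ω ^ 2 ∂μ := integral_nonneg fun ω => sq_nonneg _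
  have hB : 0 ≤ ∫ ω, g ω ^ 2 ∂μ := integral_nonneg fun ω => sq_nonneg _
  have hI : 0 ≤ ∫ ω, f ω * g ω ∂μ := integral_nonneg fun ω => mul_nonneg (hf ω) (hg ω)
  calc (∫ ω, f ω * g ω ∂μ)^2 ≤ ((∫ ω, f ω ^ 2 ∂μ) ^ (1/2:ℝ) * (∫ ω, g ω ^ 2 ∂μ) ^ (1/2:ℝ))^2 := by
        apply pow_le_pow_left₀ hI h
    _ = (∫ ω, f ω ^ 2 ∂μ) * ∫ ω, g ω ^ 2 ∂μ := by
        rw [mul_pow, ← Real.rpow_natCast (_ ^ (1/2:ℝ)) 2, ← Real.rpow_natCast (_ ^ (1/2:ℝ)) 2,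
          ← Real.rpow_mul hA, ← Real.rpow_mul hB]
        norm_num

lemma pos_part_bound {W : Ω → ℝ} {E : Set Ω} (hWm : Measurable W) (hW : 0 ≤ W)
    (hE : MeasurableSet E) (h0 : ∀ ω, ω ∉ E → W ω = 0)
    (h1 : Integrable W μ) (h2 : Integrable (fun ω => W ω ^ 2) μ)
    (h4 : Integrable (fun ω => W ω ^ 4) μ) :
    (∫ ω, W ω ∂μ) ^ 4 ≤ (∫ ω, W ω ^ 4 ∂μ) * (μ E).toReal ^ 3 := by
  set g : Ω → ℝ := E.indicator (fun _ => (1:ℝ)) with hg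
  have hgnn : 0 ≤ g := fun ω => by
    by_cases h : ω ∈ E <;> simp [hg, h]
  have hgm : Measurable g := measurable_const.indicator hE
  have hg2 : ∀ ω, g ω ^ 2 = g ω := fun ω => by
    by_cases h : ω ∈ E <;> simp [hg, h]
  have hgint : Integrable g μ := (integrable_const (1:ℝ)).indicator hE
  have hintg : ∫ ω, g ω ∂μ = (μ E).toReal := by
    rw [hg, integral_indicator hE]
    simp; rfl
  have hWg : ∀ ω, W ω * g ω = W ω := fun ω => by
    by_cases h : ω ∈ E
    · simp [hg, h]
    · simp [hg, h, h0 ω h]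
  have hW2g : ∀ ω, W ω ^ 2 * g ω = W ω ^ 2 := fun ω => by
    by_cases h : ω ∈ E
    · simp [hg, h]
    · simp [hg, h, h0 ω h]
  have hgint2 : Integrable (fun ω => g ω ^ 2) μ := by
    apply hgint.congr
    filter_upwards with ω using (hg2 ω).symm
  have cs1 : (∫ ω, W ω ∂μ)^2 ≤ (∫ ω, W ω ^2 ∂μ) * (μ E).toReal := by
    have := my_cs (μ := μ) hW hgnn hWm.aestronglyMeasurable hgm.aestronglyMeasurable h2 hgint2
    calc (∫ ω, W ω ∂μ)^2 = (∫ ω, W ω * g ω ∂μ)^2 := by simp_rw [hWg]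
      _ ≤ (∫ ω, W ω ^ 2 ∂μ) * ∫ ω, g ω ^ 2 ∂μ := this
      _ = (∫ ω, W ω ^2 ∂μ) * (μ E).toReal := by simp_rw [hg2, hintg]
  have cs2 : (∫ ω, W ω ^ 2 ∂μ)^2 ≤ (∫ ω, W ω ^ 4 ∂μ) * (μ E).toReal := by
    have := my_cs (μ := μ) (fun ω => sq_nonneg (W ω)) hgnn
      (hWm.pow_const 2).aestronglyMeasurable hgm.aestronglyMeasurable
      (by simpa [← pow_mul] using h4) hgint2
    calc (∫ ω, W ω ^2 ∂μ)^2 = (∫ ω, W ω ^2 * g ω ∂μ)^2 := by simp_rw [hW2g]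
      _ ≤ (∫ ω, (W ω ^ 2) ^ 2 ∂μ) * ∫ ω, g ω ^ 2 ∂μ := this
      _ = (∫ ω, W ω ^4 ∂μ) * (μ E).toReal := by simp_rw [hg2, hintg, ← pow_mul]
  have hp : 0 ≤ (μ E).toReal := ENNReal.toReal_nonneg
  have hW2 : 0 ≤ ∫ ω, W ω ^2 ∂μ := integral_nonneg fun ω => sq_nonneg _
  have hW1 : 0 ≤ ∫ ω, W ω ∂μ := integral_nonneg hW
  have hW4 : 0 ≤ ∫ ω, W ω ^4 ∂μ := integral_nonneg fun ω => by positivity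
  calc (∫ ω, W ω ∂μ)^4 = ((∫ ω, W ω ∂μ)^2)^2 := by ring
    _ ≤ ((∫ ω, W ω ^2 ∂μ) * (μ E).toReal)^2 := by
        apply pow_le_pow_left₀ (sq_nonneg _) cs1
    _ = (∫ ω, W ω ^2 ∂μ)^2 * (μ E).toReal^2 := by ring
    _ ≤ ((∫ ω, W ω ^ 4 ∂μ) * (μ E).toReal) * (μ E).toReal^2 := by
        apply mul_le_mul_of_nonneg_right cs2 (by positivity)
    _ = (∫ ω, W ω ^ 4 ∂μ) * (μ E).toReal ^3 := by ring

lemma key_bound {Z : Ω → ℝ} {v : ℝ} (hZm : Measurable Z)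
    (h1i : Integrable Z μ) (h2i : Integrable (fun ω => Z ω ^ 2) μ)
    (h3i : Integrable (fun ω => Z ω ^ 3) μ) (h4i : Integrable (fun ω => Z ω ^ 4) μ)
    (h1 : ∫ ω, Z ω ∂μ = 0) (h2 : ∫ ω, Z ω ^ 2 ∂μ = v) (hv : 0 < v)
    (h4 : ∫ ω, Z ω ^ 4 ∂μ ≤ 9 * v ^ 2) :
    1/24 < (μ {ω | 0 ≤ Z ω}).toReal ∧ 1/24 < (μ {ω | Z ω < 0}).toReal := by
  -- positive and negative parts
  set Zp : Ω → ℝ := fun ω => max (Z ω) 0 with hZp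
  set Zm : Ω → ℝ := fun ω => max (-Z ω) 0 with hZm'
  have hZpm : Measurable Zp := hZm.max measurable_const
  have hZmm : Measurable Zm := hZm.neg.max measurable_const
  have hZpnn : 0 ≤ Zp := fun ω => le_max_right _ _
  have hZmnn : 0 ≤ Zm := fun ω => le_max_right _ _
  have habs : ∀ ω, |Z ω| = Zp ω + Zm ω := fun ω => by
    rcases le_total 0 (Z ω) with h | h
    · rw [abs_of_nonneg h]; simp [hZp, hZm', max_eq_left h, max_eq_right (neg_nonpos.mpr h)]
    · rw [abs_of_nonpos h]; simp [hZp, hZm', max_eq_right h, max_eq_left (neg_nonneg.mpr h)]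
  have hsub : ∀ ω, Z ω = Zp ω - Zm ω := fun ω => by
    rcases le_total 0 (Z ω) with h | h
    · simp [hZp, hZm', max_eq_left h, max_eq_right (neg_nonpos.mpr h)]
    · simp [hZp, hZm', max_eq_right h, max_eq_left (neg_nonneg.mpr h)]
  have habsint : Integrable (fun ω => |Z ω|) μ := h1i.abs
  have hZpi : Integrable Zp μ := h1i.pos_part
  have hZmi : Integrable Zm μ := h1i.neg.pos_part
  -- equal halves
  set A1 : ℝ := ∫ ω, |Z ω| ∂μ with hA1
  have hsplit : (∫ ω, Zp ω ∂μ) - (∫ ω, Zm ω ∂μ) = 0 := by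
    rw [← integral_sub hZpi hZmi]; rw [← h1]; apply integral_congr_ae
    filter_upwards with ω using (hsub ω).symm
  have hsum : (∫ ω, Zp ω ∂μ) + (∫ ω, Zm ω ∂μ) = A1 := by
    rw [← integral_add hZpi hZmi, hA1]; apply integral_congr_ae
    filter_upwards with ω using (habs ω).symm
  have hZpint : ∫ ω, Zp ω ∂μ = A1 / 2 := by linarith
  have hZmint : ∫ ω, Zm ω ∂μ = A1 / 2 := by linarith
  -- integrability of abs powers
  have habs3i : Integrable (fun ω => |Z ω| ^ 3) μ := by
    apply h3i.abs.congr; filter_upwards with ω; rw [abs_pow]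
  -- CS1 : v^2 ≤ A1 * A3
  set A3 : ℝ := ∫ ω, |Z ω| ^ 3 ∂μ with hA3
  have cs1 : v ^ 2 ≤ A1 * A3 := by
    have hf : ∀ ω, (0:ℝ) ≤ Real.sqrt |Z ω| := fun ω => Real.sqrt_nonneg _
    have hg : ∀ ω, (0:ℝ) ≤ |Z ω| * Real.sqrt |Z ω| := fun ω =>
      mul_nonneg (abs_nonneg _) (Real.sqrt_nonneg _)
    have h := my_cs (μ := μ) hf hg
      (hZm.abs.sqrt).aestronglyMeasurable (hZm.abs.mul hZm.abs.sqrt).aestronglyMeasurable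
      ?_ ?_
    · have e1 : ∀ ω, Real.sqrt |Z ω| * (|Z ω| * Real.sqrt |Z ω|) = Z ω ^ 2 := fun ω => by
        rw [show Real.sqrt |Z ω| * (|Z ω| * Real.sqrt |Z ω|)
            = (Real.sqrt |Z ω| * Real.sqrt |Z ω|) * |Z ω| by ring,
          Real.mul_self_sqrt (abs_nonneg _), ← sq_abs]; ring
      have e2 : ∀ ω, Real.sqrt |Z ω| ^ 2 = |Z ω| := fun ω => Real.sq_sqrt (abs_nonneg _)
      have e3 : ∀ ω, (|Z ω| * Real.sqrt |Z ω|) ^ 2 = |Z ω| ^ 3 := fun ω => by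
        rw [mul_pow, Real.sq_sqrt (abs_nonneg _)]; ring
      simp_rw [e1, e2, e3] at h
      rw [hA1, hA3, ← h2]
      exact h
    · apply habsint.congr; filter_upwards with ω
      rw [Real.sq_sqrt (abs_nonneg _)]
    · apply habs3i.congr; filter_upwards with ω
      rw [mul_pow, Real.sq_sqrt (abs_nonneg _)]; ring
  -- CS2 : A3^2 ≤ v * (9 v^2)
  have cs2 : A3 ^ 2 ≤ v * ∫ ω, Z ω ^ 4 ∂μ := by
    have h := my_cs (μ := μ) (fun ω => abs_nonneg (Z ω)) (fun ω => sq_nonneg (Z ω))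
      hZm.abs.aestronglyMeasurable (hZm.pow_const 2).aestronglyMeasurable
      (h2i.congr (by filter_upwards with ω; rw [sq_abs])) (by simpa [← pow_mul] using h4i)
    have e1 : ∀ ω, |Z ω| * Z ω ^ 2 = |Z ω| ^ 3 := fun ω => by
      rw [← sq_abs]; ring
    simp_rw [e1, sq_abs, ← pow_mul] at h
    rw [← hA3] at h
    simpa [h2] using h
  have hA1nn : 0 ≤ A1 := integral_nonneg fun ω => abs_nonneg _
  have hA3nn : 0 ≤ A3 := integral_nonneg fun ω => by positivity
  have h4nn : 0 ≤ ∫ ω, Z ω ^ 4 ∂μ := integral_nonneg fun ω => by positivity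
  -- A1^2 * 9 ≥ v
  have hA1sq : v ≤ 9 * A1 ^ 2 := by
    have c2 : A3 ^ 2 ≤ 9 * v ^ 3 := by nlinarith
    nlinarith [sq_nonneg (A1*A3), sq_nonneg A3, pow_pos hv 3, sq_nonneg (v^2 - A1*A3)]
  -- positive side
  have hEp : MeasurableSet {ω | 0 ≤ Z ω} := measurableSet_le measurable_const hZm
  have hEm : MeasurableSet {ω | Z ω < 0} := measurableSet_lt hZm measurable_const
  have main : ∀ (W : Ω → ℝ) (E : Set Ω), Measurable W → 0 ≤ W → MeasurableSet E →
      (∀ ω, ω ∉ E → W ω = 0) → (∀ ω, |W ω| ≤ |Z ω|) → (∫ ω, W ω ∂μ = A1/2) →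
      1/24 < (μ E).toReal := by
    intro W E hWm hWnn hE h0 hWle hWint
    have h2W : Integrable (fun ω => W ω ^ 2) μ := by
      apply h2i.mono (hWm.pow_const 2).aestronglyMeasurable
      filter_upwards with ω
      rw [norm_pow, norm_pow, Real.norm_eq_abs, Real.norm_eq_abs]
      exact pow_le_pow_left₀ (abs_nonneg _) (hWle ω) 2
    have h4W : Integrable (fun ω => W ω ^ 4) μ := by
      apply h4i.mono (hWm.pow_const 4).aestronglyMeasurable
      filter_upwards with ω
      rw [norm_pow, norm_pow, Real.norm_eq_abs, Real.norm_eq_abs]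
      exact pow_le_pow_left₀ (abs_nonneg _) (hWle ω) 4
    have h1W : Integrable W μ := by
      apply h1i.abs.mono hWm.aestronglyMeasurable
      filter_upwards with ω
      rw [Real.norm_eq_abs, Real.norm_eq_abs, abs_abs]
      exact hWle ω
    have hb := pos_part_bound (μ := μ) hWm hWnn hE h0 h1W h2W h4W
    have h4le : ∫ ω, W ω ^ 4 ∂μ ≤ 9 * v ^2 := by
      refine le_trans (integral_mono h4W h4i ?_) h4
      intro ω
      calc W ω ^ 4 = |W ω| ^ 4 := by rw [← abs_pow, abs_of_nonneg (by positivity)]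
        _ ≤ |Z ω| ^ 4 := pow_le_pow_left₀ (abs_nonneg _) (hWle ω) 4
        _ = Z ω ^ 4 := by rw [← abs_pow, abs_of_nonneg (by positivity)]
    set p := (μ E).toReal with hp
    have hpnn : 0 ≤ p := ENNReal.toReal_nonneg
    rw [hWint] at hb
    have hpb : v ^ 2 / 1296 ≤ 9 * v^2 * p ^3 := by
      have : (A1/2)^4 ≤ 9*v^2 * p^3 := by
        refine le_trans hb ?_
        apply mul_le_mul_of_nonneg_right h4le (by positivity)
      nlinarith [sq_nonneg (A1^2 - v/9), sq_nonneg A1, hA1sq, hv.le]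
    by_contra hcon
    push_neg at hcon
    have : p ^ 3 ≤ (1/24)^3 := pow_le_pow_left₀ hpnn hcon 3
    nlinarith [pow_pos hv 2]
  constructor
  · apply main Zp {ω | 0 ≤ Z ω} hZpm hZpnn hEp
    · intro ω hω
      simp only [mem_setOf_eq, not_le] at hω
      simp [hZp, max_eq_right hω.le]
    · intro ω
      rw [abs_of_nonneg (hZpnn ω)]
      exact max_le (le_abs_self _) (abs_nonneg _)
    · exact hZpint
  · apply main Zm {ω | Z ω < 0} hZmm hZmnn hEm
    · intro ω hω
      simp only [mem_setOf_eq, not_lt] at hω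
      simp [hZm', max_eq_right (neg_nonpos.mpr hω)]
    · intro ω
      rw [abs_of_nonneg (hZmnn ω)]
      exact max_le (neg_le_abs _) (abs_nonneg _)
    · exact hZmint
end CS

section Moments
variable {Ω : Type*} [MeasurableSpace Ω] {μ : Measure Ω} [IsProbabilityMeasure μ]

-- integrability and moments of (x-1)^k under expMeasure 1
lemma exp_prob : IsProbabilityMeasure (expMeasure 1) := isProbabilityMeasure_expMeasure one_pos

lemma int_sub_one_pow : ∀ k ≤ 4, Integrable (fun x : ℝ => (x - 1) ^ k) (expMeasure 1) := by
  have := exp_prob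
  have I := integrable_pow_expMeasure
  intro k hk
  interval_cases k
  · simpa using integrable_const (1:ℝ)
  · have : (fun x : ℝ => (x-1)^1) = fun x => x^1 - 1 := by funext x; ring
    rw [this]
    exact (I 1).sub (integrable_const 1)
  · have : (fun x : ℝ => (x-1)^2) = fun x => x^2 - 2*x^1 + 1 := by funext x; ring
    rw [this]
    exact (((I 2).sub ((I 1).const_mul 2)).add (integrable_const 1))
  · have : (fun x : ℝ => (x-1)^3) = fun x => x^3 - 3*x^2 + 3*x^1 - 1 := by funext x; ring
    rw [this]
    exact ((((I 3).sub ((I 2).const_mul 3)).add ((I 1).const_mul 3)).sub (integrable_const 1))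
  · have : (fun x : ℝ => (x-1)^4) = fun x => x^4 - 4*x^3 + 6*x^2 - 4*x^1 + 1 := by
      funext x; ring
    rw [this]
    exact (((((I 4).sub ((I 3).const_mul 4)).add ((I 2).const_mul 6)).sub
      ((I 1).const_mul 4)).add (integrable_const 1))

lemma int_sub_one : ∫ x, (x - 1) ∂(expMeasure 1) = 0 := by
  have := exp_prob
  have e : (fun x : ℝ => x - 1) = fun x => x^1 - 1 := by funext x; ring
  rw [e, integral_sub (integrable_pow_expMeasure 1) (integrable_const 1),
    integral_pow_expMeasure, integral_const]
  simp

lemma int_sub_one_sq : ∫ x, (x - 1) ^ 2 ∂(expMeasure 1) = 1 := by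
  have := exp_prob
  have e : (fun x : ℝ => (x - 1)^2) = fun x => x^2 - 2*x^1 + 1 := by funext x; ring
  have i1 : Integrable (fun x : ℝ => x^2 - 2*x^1) (expMeasure 1) :=
    (integrable_pow_expMeasure 2).sub ((integrable_pow_expMeasure 1).const_mul 2)
  rw [e, integral_add i1 (integrable_const 1),
    integral_sub (integrable_pow_expMeasure 2) ((integrable_pow_expMeasure 1).const_mul 2),
    MeasureTheory.integral_const_mul]
  have I1 : ∫ x, x ∂(expMeasure 1) = 1 := by simpa using integral_pow_expMeasure 1
  have I1' : ∫ x : ℝ, 4 * x ∂(expMeasure 1) = 4 := by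
    rw [MeasureTheory.integral_const_mul, I1]; norm_num
  have I1'' : ∫ x : ℝ, 2 * x ∂(expMeasure 1) = 2 := by
    rw [MeasureTheory.integral_const_mul, I1]; norm_num
  simp only [MeasureTheory.integral_const_mul, integral_pow_expMeasure, I1, integral_const,
    pow_one, I1', I1'']
  norm_num [Nat.factorial]

lemma int_sub_one_four : ∫ x, (x - 1) ^ 4 ∂(expMeasure 1) = 9 := by
  have := exp_prob
  have e : (fun x : ℝ => (x - 1)^4) = fun x => x^4 - 4*x^3 + 6*x^2 - 4*x^1 + 1 := by
    funext x; ring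
  have i4 : Integrable (fun x : ℝ => x^4 - 4*x^3) (expMeasure 1) :=
    (integrable_pow_expMeasure 4).sub ((integrable_pow_expMeasure 3).const_mul 4)
  have i3 : Integrable (fun x : ℝ => x^4 - 4*x^3 + 6*x^2) (expMeasure 1) :=
    i4.add ((integrable_pow_expMeasure 2).const_mul 6)
  have i2 : Integrable (fun x : ℝ => x^4 - 4*x^3 + 6*x^2 - 4*x^1) (expMeasure 1) :=
    i3.sub ((integrable_pow_expMeasure 1).const_mul 4)
  rw [e, integral_add i2 (integrable_const 1),
    integral_sub i3 ((integrable_pow_expMeasure 1).const_mul 4),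
    integral_add i4 ((integrable_pow_expMeasure 2).const_mul 6),
    integral_sub (integrable_pow_expMeasure 4) ((integrable_pow_expMeasure 3).const_mul 4),
    MeasureTheory.integral_const_mul]
  have I1 : ∫ x, x ∂(expMeasure 1) = 1 := by simpa using integral_pow_expMeasure 1
  have I1' : ∫ x : ℝ, 4 * x ∂(expMeasure 1) = 4 := by
    rw [MeasureTheory.integral_const_mul, I1]; norm_num
  have I1'' : ∫ x : ℝ, 2 * x ∂(expMeasure 1) = 2 := by
    rw [MeasureTheory.integral_const_mul, I1]; norm_num
  simp only [MeasureTheory.integral_const_mul, integral_pow_expMeasure, I1, integral_const,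
    pow_one, I1', I1'']
  norm_num [Nat.factorial]

end Moments

section MainProof

variable {Ω : Type*} [MeasurableSpace Ω] {μ : Measure Ω} [IsProbabilityMeasure μ]
  {n : ℕ} {X : Fin n → Ω → ℝ} {a : Fin n → ℝ}

lemma Yk_int (hXmeas : ∀ i, Measurable (X i)) (hlaw : ∀ i, μ.map (X i) = expMeasure 1)
    (i : Fin n) (k : ℕ) (hk : k ≤ 4) :
    Integrable (fun ω => (a i * (X i ω - 1)) ^ k) μ ∧
      ∫ ω, (a i * (X i ω - 1)) ^ k ∂μ = a i ^ k * ∫ x, (x - 1) ^ k ∂(expMeasure 1) := by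
  have hfc : Continuous (fun x : ℝ => (a i * (x - 1)) ^ k) := by continuity
  have hint : Integrable (fun x : ℝ => (a i * (x - 1)) ^ k) (expMeasure 1) := by
    have e : (fun x : ℝ => (a i * (x - 1)) ^ k) = fun x => a i ^ k * (x-1)^k := by
      funext x; rw [mul_pow]
    rw [e]
    exact (int_sub_one_pow k hk).const_mul _
  have hmap : AEStronglyMeasurable (fun x : ℝ => (a i * (x - 1)) ^ k) (μ.map (X i)) :=
    hfc.aestronglyMeasurable
  constructor
  · have h := (integrable_map_measure hmap (hXmeas i).aemeasurable).mp
      (by rw [hlaw i]; exact hint)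
    exact h
  · have h := integral_map (hXmeas i).aemeasurable hmap
    rw [hlaw i] at h
    rw [← h]
    have e : (fun x : ℝ => (a i * (x - 1)) ^ k) = fun x => a i ^ k * (x-1)^k := by
      funext x; rw [mul_pow]
    rw [e, MeasureTheory.integral_const_mul]

end MainProof

section Induct

variable {Ω : Type*} [MeasurableSpace Ω] {μ : Measure Ω} [IsProbabilityMeasure μ]
  {n : ℕ} {X : Fin n → Ω → ℝ} {a : Fin n → ℝ}

lemma sum_moments_s19 (hXmeas : ∀ i, Measurable (X i))
    (hindep : iIndepFun X μ)
    (hlaw : ∀ i, μ.map (X i) = expMeasure 1) (s : Finset (Fin n)) :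
    (∀ k ≤ 4, Integrable (fun ω => (∑ i ∈ s, a i * (X i ω - 1)) ^ k) μ) ∧
    ∫ ω, (∑ i ∈ s, a i * (X i ω - 1)) ∂μ = 0 ∧
    ∫ ω, (∑ i ∈ s, a i * (X i ω - 1)) ^ 2 ∂μ = ∑ i ∈ s, (a i)^2 ∧
    ∫ ω, (∑ i ∈ s, a i * (X i ω - 1)) ^ 4 ∂μ ≤ 9 * (∑ i ∈ s, (a i)^2)^2 := by
  classical
  -- the individual variables
  set Y : Fin n → Ω → ℝ := fun i ω => a i * (X i ω - 1) with hY
  have hYmeas : ∀ i, Measurable (Y i) := fun i =>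
    (((hXmeas i).sub measurable_const).const_mul _)
  have hYindep : iIndepFun Y μ := by
    have := hindep.comp (fun i => fun x : ℝ => a i * (x - 1))
      (fun i => (measurable_id.sub measurable_const).const_mul _)
    exact this
  induction s using Finset.induction_on with
  | empty =>
      refine ⟨fun k hk => ?_, by simp, by simp, by simp⟩
      simp only [Finset.sum_empty]
      exact integrable_const _
  | insert j s hj ih =>
      obtain ⟨ihint, ih1, ih2, ih4⟩ := ih
      set W : Ω → ℝ := fun ω => ∑ i ∈ s, Y i ω with hW
      have hWmeas : Measurable W := by
        apply Finset.measurable_sum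
        intro i _
        exact hYmeas i
      have hWY : IndepFun W (Y j) μ := by
        have h := hYindep.indepFun_finset_sum_of_notMem hYmeas hj
        have e : (∑ i ∈ s, Y i) = W := by
          funext ω; rw [hW, Finset.sum_apply]
        rwa [e] at h
      have hYj : ∀ k ≤ 4, Integrable (fun ω => Y j ω ^ k) μ :=
        fun k hk => (Yk_int hXmeas hlaw j k hk).1
      have prodI : ∀ p q : ℕ, p ≤ 4 → q ≤ 4 →
          Integrable (fun ω => W ω ^ p * Y j ω ^ q) μ := by
        intro p q hp hq
        have hI : IndepFun (fun ω => W ω ^ p) (fun ω => Y j ω ^ q) μ :=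
          hWY.comp (measurable_id.pow_const p) (measurable_id.pow_const q)
        exact hI.integrable_mul (ihint p hp) (hYj q hq)
      have prodE : ∀ p q : ℕ, p ≤ 4 → q ≤ 4 →
          ∫ ω, W ω ^ p * Y j ω ^ q ∂μ = (∫ ω, W ω ^ p ∂μ) * ∫ ω, Y j ω ^ q ∂μ := by
        intro p q hp hq
        have hI : IndepFun (fun ω => W ω ^ p) (fun ω => Y j ω ^ q) μ :=
          hWY.comp (measurable_id.pow_const p) (measurable_id.pow_const q)
        exact hI.integral_fun_mul_eq_mul_integral (ihint p hp).1 (hYj q hq).1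
      -- basic Y j integrals
      have hYj1 : ∫ ω, Y j ω ∂μ = 0 := by
        have h := (Yk_int (a := a) hXmeas hlaw j 1 (by norm_num)).2
        simp only [pow_one] at h
        rw [h, int_sub_one, mul_zero]
      have hYj2 : ∫ ω, Y j ω ^ 2 ∂μ = a j ^ 2 := by
        rw [(Yk_int hXmeas hlaw j 2 (by norm_num)).2, int_sub_one_sq, mul_one]
      have hYj4 : ∫ ω, Y j ω ^ 4 ∂μ = 9 * a j ^ 4 := by
        rw [(Yk_int hXmeas hlaw j 4 (by norm_num)).2, int_sub_one_four]; ring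
      have hW1 : ∫ ω, W ω ∂μ = 0 := ih1
      -- sum over insert
      have hsum : ∀ ω, (∑ i ∈ insert j s, Y i ω) = Y j ω + W ω := fun ω => by
        rw [Finset.sum_insert hj]
      -- integrability for all k ≤ 4 via add_pow
      have hints : ∀ k ≤ 4, Integrable (fun ω => (∑ i ∈ insert j s, Y i ω) ^ k) μ := by
        intro k hk
        have e : (fun ω => (∑ i ∈ insert j s, Y i ω) ^ k)
            = fun ω => ∑ m ∈ Finset.range (k+1), W ω ^ m * Y j ω ^ (k - m) * (k.choose m) := by
          funext ω
          rw [hsum ω, add_comm (Y j ω) (W ω), add_pow]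
        rw [e]
        apply integrable_finset_sum
        intro m hm
        have hm' : m ≤ k := Nat.lt_succ_iff.mp (Finset.mem_range.mp hm)
        exact (prodI m (k - m) (le_trans hm' hk) (le_trans (Nat.sub_le _ _) hk)).mul_const _
      have hYint : Integrable (Y j) μ := by
        have h := hYj 1 (by norm_num)
        simp only [pow_one] at h
        exact h
      have hWint : Integrable W μ := by
        have h := ihint 1 (by norm_num)
        simp only [pow_one] at h
        exact h
      have hW1p : ∫ ω, W ω ^ 1 ∂μ = 0 := by simp only [pow_one]; exact ih1
      have hYj1p : ∫ ω, Y j ω ^ 1 ∂μ = 0 := by simp only [pow_one]; exact hYj1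
      have hW2v : ∫ ω, W ω ^ 2 ∂μ = ∑ i ∈ s, (a i)^2 := ih2
      have hW4v : ∫ ω, W ω ^ 4 ∂μ ≤ 9 * (∑ i ∈ s, (a i)^2)^2 := ih4
      have hsnn : (0:ℝ) ≤ ∑ i ∈ s, (a i)^2 :=
        Finset.sum_nonneg fun i _ => sq_nonneg _
      refine ⟨hints, ?_, ?_, ?_⟩
      · show ∫ ω, (∑ i ∈ insert j s, Y i ω) ∂μ = 0
        have e : (fun ω => ∑ i ∈ insert j s, Y i ω) = fun ω => Y j ω + W ω :=
          funext hsum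
        rw [e, integral_add hYint hWint, hYj1, ih1, add_zero]
      · show ∫ ω, (∑ i ∈ insert j s, Y i ω) ^ 2 ∂μ = ∑ i ∈ insert j s, (a i)^2
        have e : (fun ω => (∑ i ∈ insert j s, Y i ω) ^ 2)
            = fun ω => W ω ^ 2 + (2 * (W ω ^ 1 * Y j ω ^ 1) + Y j ω ^ 2) := by
          funext ω; rw [hsum ω]; ring
        have iW2 : Integrable (fun ω => W ω ^ 2) μ := ihint 2 (by norm_num)
        have ic : Integrable (fun ω => 2 * (W ω ^ 1 * Y j ω ^ 1)) μ :=
          (prodI 1 1 (by norm_num) (by norm_num)).const_mul 2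
        have iY2 : Integrable (fun ω => Y j ω ^ 2) μ := hYj 2 (by norm_num)
        have icY : Integrable (fun ω => 2 * (W ω ^ 1 * Y j ω ^ 1) + Y j ω ^ 2) μ := ic.add iY2
        rw [e, integral_add iW2 icY, integral_add ic iY2,
          MeasureTheory.integral_const_mul,
          prodE 1 1 (by norm_num) (by norm_num), hW1p, hYj1p, hW2v, hYj2,
          Finset.sum_insert hj]
        ring
      · show ∫ ω, (∑ i ∈ insert j s, Y i ω) ^ 4 ∂μ ≤ 9 * (∑ i ∈ insert j s, (a i)^2)^2
        have e : (fun ω => (∑ i ∈ insert j s, Y i ω) ^ 4)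
            = fun ω => W ω ^ 4 + (4 * (W ω ^ 3 * Y j ω ^ 1) + (6 * (W ω ^ 2 * Y j ω ^ 2)
              + (4 * (W ω ^ 1 * Y j ω ^ 3) + Y j ω ^ 4))) := by
          funext ω; rw [hsum ω]; ring
        have iW4 : Integrable (fun ω => W ω ^ 4) μ := ihint 4 (by norm_num)
        have iY4 : Integrable (fun ω => Y j ω ^ 4) μ := hYj 4 (by norm_num)
        have i31 : Integrable (fun ω => 4 * (W ω ^ 3 * Y j ω ^ 1)) μ :=
          (prodI 3 1 (by norm_num) (by norm_num)).const_mul 4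
        have i22 : Integrable (fun ω => 6 * (W ω ^ 2 * Y j ω ^ 2)) μ :=
          (prodI 2 2 (by norm_num) (by norm_num)).const_mul 6
        have i13 : Integrable (fun ω => 4 * (W ω ^ 1 * Y j ω ^ 3)) μ :=
          (prodI 1 3 (by norm_num) (by norm_num)).const_mul 4
        have t1 : Integrable (fun ω => 4 * (W ω ^ 1 * Y j ω ^ 3) + Y j ω ^ 4) μ := i13.add iY4
        have t2 : Integrable (fun ω => 6 * (W ω ^ 2 * Y j ω ^ 2)
            + (4 * (W ω ^ 1 * Y j ω ^ 3) + Y j ω ^ 4)) μ := i22.add t1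
        have t3 : Integrable (fun ω => 4 * (W ω ^ 3 * Y j ω ^ 1)
            + (6 * (W ω ^ 2 * Y j ω ^ 2) + (4 * (W ω ^ 1 * Y j ω ^ 3) + Y j ω ^ 4))) μ :=
          i31.add t2
        have hW3v := prodE 3 1 (by norm_num) (by norm_num)
        rw [e, integral_add iW4 t3, integral_add i31 t2, integral_add i22 t1,
          integral_add i13 iY4,
          MeasureTheory.integral_const_mul, MeasureTheory.integral_const_mul,
          MeasureTheory.integral_const_mul,
          prodE 3 1 (by norm_num) (by norm_num), prodE 2 2 (by norm_num) (by norm_num),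
          prodE 1 3 (by norm_num) (by norm_num),
          hW1p, hYj1p, hW2v, hYj2, hYj4, Finset.sum_insert hj]
        nlinarith [hW4v, hsnn, sq_nonneg (a j), sq_nonneg (a j ^ 2), sq_nonneg (∑ i ∈ s, (a i)^2)]

end Induct

/-- For i.i.d. mean-1 exponential random variables `Xᵢ` and positive weights `aᵢ`,
with `E S = ∑ aᵢ`, one has `1/24 < P(S ≥ E S) < 23/24`. -/
theorem exp_sum_ge_mean_prob_bounds
    {Ω : Type*} [MeasurableSpace Ω] (μ : Measure Ω) [IsProbabilityMeasure μ]
    (n : ℕ) [NeZero n] (X : Fin n → Ω → ℝ)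
    (hXmeas : ∀ i, Measurable (X i))
    (hindep : iIndepFun X μ)
    (hlaw : ∀ i, μ.map (X i) = expMeasure 1)
    (a : Fin n → ℝ) (ha : ∀ i, 0 < a i) :
    ENNReal.ofReal (1 / 24) < μ {ω | ∑ i, a i ≤ ∑ i, a i * X i ω} ∧
      μ {ω | ∑ i, a i ≤ ∑ i, a i * X i ω} < ENNReal.ofReal (23 / 24) := by
  
  classical
  set Z : Ω → ℝ := fun ω => ∑ i, a i * (X i ω - 1) with hZ
  set v : ℝ := ∑ i, (a i)^2 with hv
  have hZmeas : Measurable Z := by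
    apply Finset.measurable_sum
    intro i _
    exact ((hXmeas i).sub measurable_const).const_mul _
  have hmom := sum_moments_s19 (a := a) hXmeas hindep hlaw Finset.univ
  obtain ⟨hint, h1, h2, h4⟩ := hmom
  have hvpos : 0 < v := by
    rw [hv]
    apply Finset.sum_pos (fun i _ => pow_pos (ha i) 2)
    exact Finset.univ_nonempty
  have h1i : Integrable Z μ := by
    have h := hint 1 (by norm_num)
    simp only [pow_one] at h
    exact h
  have h2i : Integrable (fun ω => Z ω ^ 2) μ := hint 2 (by norm_num)
  have h3i : Integrable (fun ω => Z ω ^ 3) μ := hint 3 (by norm_num)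
  have h4i : Integrable (fun ω => Z ω ^ 4) μ := hint 4 (by norm_num)
  have h1' : ∫ ω, Z ω ∂μ = 0 := h1
  have h2' : ∫ ω, Z ω ^ 2 ∂μ = v := h2
  have h4' : ∫ ω, Z ω ^ 4 ∂μ ≤ 9 * v ^ 2 := h4
  have hkey := key_bound (μ := μ) hZmeas h1i h2i h3i h4i h1' h2' hvpos h4'
  obtain ⟨hlo, hhi⟩ := hkey
  -- identify the event
  have hEeq : {ω | ∑ i, a i ≤ ∑ i, a i * X i ω} = {ω | 0 ≤ Z ω} := by
    ext ω
    simp only [mem_setOf_eq, hZ, mul_sub, mul_one, Finset.sum_sub_distrib, sub_nonneg]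
  rw [hEeq]
  set E : Set Ω := {ω | 0 ≤ Z ω} with hEdef
  have hE : MeasurableSet E := measurableSet_le measurable_const hZmeas
  have hcompl : {ω | Z ω < 0} = Eᶜ := by
    ext ω
    simp [hEdef, not_le]
  rw [hcompl] at hhi
  have hEne : μ E ≠ ⊤ := measure_ne_top μ E
  have hEcne : μ Eᶜ ≠ ⊤ := measure_ne_top μ Eᶜ
  have hsum1 : (μ E).toReal + (μ Eᶜ).toReal = 1 := by
    rw [← ENNReal.toReal_add hEne hEcne, measure_add_measure_compl hE]
    simp
  constructor
  · rw [ENNReal.ofReal_lt_iff_lt_toReal (by norm_num) hEne]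
    exact hlo
  · rw [ENNReal.lt_ofReal_iff_toReal_lt hEne]
    linarith
end
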